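/- arXiv:1503.00571 — 10 statements merged into one kernel-verified Lean document; each statement's English description precedes it below -/
import Mathlib

section
/- Any nonempty finite set of consecutive positive integers (an interval) contains exactly one element m such that q(m) ≥ q(v) for all other elements v of the interval (i.e., the maximal vertex of a factor is unique). -/
/-- `q v` is the largest power of 2 dividing the positive integer `v`. -/
def q (v : ℕ) : ℕ := 2 ^ (padicValNat 2 v)

theorem stmt2 (a ℓ : ℕ) (ha : 0 < a) (hℓ : 0 < ℓ) :
    ∃! m, m ∈ Finset.Ico a (a + ℓ) ∧ ∀ v ∈ Finset.Ico a (a + ℓ), q v ≤ q m := by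
  have : Fact (Nat.Prime 2) := ⟨Nat.prime_two⟩
  have hne : (Finset.Ico a (a + ℓ)).Nonempty := by
    rw [Finset.nonempty_Ico]; omega
  obtain ⟨m, hm, hmax⟩ := Finset.exists_max_image (Finset.Ico a (a + ℓ)) q hne
  refine ⟨m, ⟨hm, hmax⟩, ?_⟩
  rintro m' ⟨hm', hmax'⟩
  by_contra hne'
  -- q m = q m', hence equal valuations k
  have hq : q m = q m' := le_antisymm (hmax' m hm) (hmax m' hm')
  have hk : padicValNat 2 m = padicValNat 2 m' := by
    have := hq
    unfold q at this
    exact Nat.pow_right_injective (le_refl 2) this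
  set k := padicValNat 2 m with hkdef
  -- WLOG via symmetry: take x = min, y = max
  rw [Finset.mem_Ico] at hm hm'
  have hx0 : m ≠ 0 := by omega
  have hy0 : m' ≠ 0 := by omega
  have hdx : 2 ^ k ∣ m := pow_padicValNat_dvd
  have hdy : 2 ^ k ∣ m' := hk ▸ pow_padicValNat_dvd
  -- consider x < y case generically
  have key : ∀ x y : ℕ, x < y → a ≤ x → y < a + ℓ → 2 ^ k ∣ x → 2 ^ k ∣ y →
      ¬ 2 ^ (k + 1) ∣ x → False := by
    intro x y hxy hax hya hdx hdy hnd
    -- w = x + 2^k is in the interval and divisible by 2^(k+1)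
    have hsub : 2 ^ k ∣ y - x := Nat.dvd_sub hdy hdx
    have hpk : 0 < 2 ^ k := Nat.pow_pos (by norm_num)
    have hge : 2 ^ k ≤ y - x := Nat.le_of_dvd (by omega) hsub
    set w := x + 2 ^ k with hw
    have hwmem : w ∈ Finset.Ico a (a + ℓ) := by
      rw [Finset.mem_Ico]; omega
    have hdw : 2 ^ (k + 1) ∣ w := by
      obtain ⟨c, hc⟩ := hdx
      have hco : ¬ 2 ∣ c := by
        intro ⟨d, hd⟩
        apply hnd
        exact ⟨d, by rw [hc, hd]; ring⟩
      obtain ⟨e, he⟩ : 2 ∣ c + 1 := by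
        rcases Nat.even_or_odd c with hev | hod
        · exact absurd hev.two_dvd hco
        · exact (Nat.even_add_one.mpr (by simpa [Nat.odd_iff, Nat.two_dvd_ne_zero] using hod)).two_dvd
      refine ⟨e, ?_⟩
      have : x + 2 ^ k = 2 ^ k * (c + 1) := by rw [hc]; ring
      rw [hw, this, he, pow_succ]; ring
    have hlew : k + 1 ≤ padicValNat 2 w :=
      (padicValNat_dvd_iff_le (by positivity)).mp hdw
    have : q w ≤ q m := hmax w hwmem
    unfold q at this
    have : 2 ^ (k + 1) ≤ 2 ^ k := le_trans (Nat.pow_le_pow_right (by norm_num) hlew) this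
    have := Nat.pow_lt_pow_succ (a := 2) (by norm_num) (n := k)
    omega
  rcases Nat.lt_or_ge m m' with h | h
  · exact key m m' h hm.1 hm'.2 hdx hdy
      (fun hd => pow_succ_padicValNat_not_dvd hx0 hd)
  · have h' : m' < m := by omega
    exact key m' m h' hm'.1 hm.2 hdy hdx
      (fun hd => pow_succ_padicValNat_not_dvd hy0 (hk ▸ hd))
end

section
/- Let F be an interval of consecutive positive integers of length at most c, let m be its unique element maximizing q, and let v ∈ F with v ≠ m. Then q(v) = q(|m − v|), and in particular q(v) < c. -/
private lemma padicValNat_eq_of (n k : ℕ) (hn : n ≠ 0) (h1 : 2 ^ k ∣ n)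
    (h2 : ¬ 2 ^ (k + 1) ∣ n) : padicValNat 2 n = k := by
  have hle : k ≤ padicValNat 2 n := (padicValNat_dvd_iff_le hn).mp h1
  have hlt : ¬ k + 1 ≤ padicValNat 2 n := fun h => h2 ((padicValNat_dvd_iff_le hn).mpr h)
  omega

theorem stmt3 (a ℓ c m v : ℕ) (ha : 0 < a) (hℓ : 0 < ℓ) (hℓc : ℓ ≤ c)
    (hm : m ∈ Finset.Ico a (a + ℓ))
    (hmax : ∀ w ∈ Finset.Ico a (a + ℓ), q w ≤ q m)
    (hv : v ∈ Finset.Ico a (a + ℓ)) (hvm : v ≠ m) :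
    q v = q (max m v - min m v) ∧ q v < c := by
  simp only [Finset.mem_Ico] at hm hv
  have hm0 : m ≠ 0 := by omega
  have hv0 : v ≠ 0 := by omega
  set kv := padicValNat 2 v with hkv
  set km := padicValNat 2 m with hkm
  have hle : kv ≤ km := by
    have := hmax v (by simp [Finset.mem_Ico]; omega)
    exact (Nat.pow_le_pow_iff_right (by norm_num)).mp this
  -- strict inequality
  have hlt : kv < km := by
    rcases lt_or_eq_of_le hle with h | h
    · exact h
    exfalso
    set s := min v m with hs
    set t := max v m with ht
    have hst : s < t := by rcases max_cases v m with ⟨h1, h2⟩ | ⟨h1, h2⟩ <;> omega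
    have hs0 : s ≠ 0 := by omega
    have hps : padicValNat 2 s = kv := by
      rcases min_cases v m with ⟨h1, _⟩ | ⟨h1, _⟩
      · rw [hs, h1]
      · rw [hs, h1, ← hkm, ← h]
    have hds : 2 ^ kv ∣ s := by
      rw [← hps]; exact pow_padicValNat_dvd
    have hnds : ¬ 2 ^ (kv + 1) ∣ s := by
      rw [← hps]; exact pow_succ_padicValNat_not_dvd hs0
    have hdt : 2 ^ kv ∣ t := by
      have hpt : padicValNat 2 t = kv := by
        rcases max_cases v m with ⟨h1, _⟩ | ⟨h1, _⟩
        · rw [ht, h1]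
        · rw [ht, h1, ← hkm, ← h]
      rw [← hpt]; exact pow_padicValNat_dvd
    obtain ⟨a', ha'⟩ := hds
    have hodd : ¬ 2 ∣ a' := by
      rintro ⟨u, rfl⟩
      exact hnds ⟨u, by rw [ha']; ring⟩
    obtain ⟨u, hu⟩ : ∃ u, a' = 2 * u + 1 := ⟨a' / 2, by omega⟩
    set w := s + 2 ^ kv with hw
    have hdw : 2 ^ (kv + 1) ∣ w := ⟨u + 1, by rw [hw, ha', hu]; ring⟩
    have hwt : w ≤ t := by
      obtain ⟨b', hb'⟩ := hdt
      have : a' < b' := by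
        by_contra hc
        have : t ≤ s := by
          rw [ha', hb']; exact Nat.mul_le_mul_left _ (by omega)
        omega
      rw [hw, ha', hb']
      calc 2 ^ kv * a' + 2 ^ kv = 2 ^ kv * (a' + 1) := by ring
        _ ≤ 2 ^ kv * b' := Nat.mul_le_mul_left _ (by omega)
    have hwmem : w ∈ Finset.Ico a (a + ℓ) := by
      simp only [Finset.mem_Ico]
      have h1 : a ≤ s := by rcases min_cases v m with ⟨h1, _⟩ | ⟨h1, _⟩ <;> omega
      have h2 : t < a + ℓ := by rcases max_cases v m with ⟨h1, _⟩ | ⟨h1, _⟩ <;> omega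
      constructor <;> omega
    have hw0 : w ≠ 0 := by positivity
    have hge : kv + 1 ≤ padicValNat 2 w := (padicValNat_dvd_iff_le hw0).mp hdw
    have hqle := hmax w hwmem
    have h2 : 2 ^ (kv + 1) ≤ q w := Nat.pow_le_pow_right (by norm_num) hge
    have h3 : q m = 2 ^ kv := by rw [q, ← hkm, ← h]
    have h4 : (2:ℕ) ^ kv < 2 ^ (kv + 1) := Nat.pow_lt_pow_right (by norm_num) (by omega)
    rw [h3] at hqle
    exact absurd (lt_of_lt_of_le h4 h2) (not_lt.mpr hqle)
  -- now the main claim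
  set d := max m v - min m v with hd
  have hd0 : d ≠ 0 := by
    rcases max_cases m v with ⟨h1, h2⟩ | ⟨h1, h2⟩ <;> rcases min_cases m v with ⟨h3, h4⟩ | ⟨h3, h4⟩ <;> omega
  have hdvm : 2 ^ kv ∣ m := dvd_trans (pow_dvd_pow 2 hle) pow_padicValNat_dvd
  have hdvm' : 2 ^ (kv + 1) ∣ m := dvd_trans (pow_dvd_pow 2 hlt) pow_padicValNat_dvd
  have hdvv : 2 ^ kv ∣ v := pow_padicValNat_dvd
  have hndvv : ¬ 2 ^ (kv + 1) ∣ v := pow_succ_padicValNat_not_dvd hv0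
  have hdd : 2 ^ kv ∣ d := by
    rcases max_cases m v with ⟨h1, h2⟩ | ⟨h1, h2⟩ <;>
      rcases min_cases m v with ⟨h3, h4⟩ | ⟨h3, h4⟩ <;>
      rw [hd, h1, h3] <;> exact Nat.dvd_sub (by assumption) (by assumption)
  have hndd : ¬ 2 ^ (kv + 1) ∣ d := by
    intro hdvd
    apply hndvv
    rcases le_total m v with h1 | h1
    · have : d = v - m := by rw [hd]; omega
      have : v = m + d := by omega
      rw [this]; exact Nat.dvd_add hdvm' hdvd
    · have : d = m - v := by rw [hd]; omega
      have : v = m - d := by omega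
      rw [this]; exact Nat.dvd_sub hdvm' hdvd
  have hpd : padicValNat 2 d = kv := padicValNat_eq_of d kv hd0 hdd hndd
  constructor
  · rw [q, q, hpd]
  · have h1 : 2 ^ kv ≤ d := Nat.le_of_dvd (Nat.pos_of_ne_zero hd0) hdd
    have h2 : d < ℓ := by
      rcases max_cases m v with ⟨hx, _⟩ | ⟨hx, _⟩ <;> rcases min_cases m v with ⟨hy, _⟩ | ⟨hy, _⟩ <;> omega
    simp only [q, ← hkv]
    omega
end

section
/- For any graph G on n vertices, μ(G) ≤ cwd(G), where μ(G) is the minimum over all vertex subsets U with n/3 ≤ |U| ≤ 2n/3 of the number of equivalence classes of the relation on U identifying vertices with equal neighborhoods outside U, and cwd(G) is the clique-width of G. -/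
/-- `μ_G(U)`: the number of classes of vertices of `U` having equal
neighbourhoods in the complement of `U`. -/
noncomputable def simClasses {V : Type*} (G : SimpleGraph V) (U : Set V) : ℕ :=
  ((fun x => {y | y ∉ U ∧ G.Adj x y}) '' U).ncard
/-- `μ(G)`: minimum of `μ_G(U)` over subsets `U` with `n/3 ≤ |U| ≤ 2n/3`. -/
noncomputable def mu {V : Type*} [Fintype V] (G : SimpleGraph V) : ℕ :=
  sInf {m | ∃ U : Set V, Fintype.card V ≤ 3 * U.ncard ∧
    3 * U.ncard ≤ 2 * Fintype.card V ∧ m = simClasses G U}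
/-- Clique-width expressions (labels are natural numbers). -/
inductive CWExpr : Type
  | single (l : ℕ) : CWExpr
  | union (e₁ e₂ : CWExpr) : CWExpr
  | join (i j : ℕ) (e : CWExpr) : CWExpr
  | relabel (i j : ℕ) (e : CWExpr) : CWExpr

/-- All labels used in the expression are `< k`. -/
def CWExpr.bounded (k : ℕ) : CWExpr → Prop
  | .single l => l < k
  | .union e₁ e₂ => e₁.bounded k ∧ e₂.bounded k
  | .join i j e => i < k ∧ j < k ∧ e.bounded k
  | .relabel i j e => i < k ∧ j < k ∧ e.bounded k

/-- Vertex set of the graph built by a clique-width expression. -/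
def CWExpr.evalV : CWExpr → Type
  | .single _ => PUnit
  | .union e₁ e₂ => e₁.evalV ⊕ e₂.evalV
  | .join _ _ e => e.evalV
  | .relabel _ _ e => e.evalV

/-- Labeling of the graph built by a clique-width expression. -/
def CWExpr.evalLab : (e : CWExpr) → e.evalV → ℕ
  | .single l => fun _ => l
  | .union e₁ e₂ => Sum.elim e₁.evalLab e₂.evalLab
  | .join _ _ e => e.evalLab
  | .relabel i j e => fun v => if e.evalLab v = i then j else e.evalLab v

/-- Adjacency relation of the graph built by a clique-width expression. -/
def CWExpr.evalRel : (e : CWExpr) → e.evalV → e.evalV → Prop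
  | .single _ => fun _ _ => False
  | .union e₁ e₂ => fun x y =>
      match x, y with
      | .inl a, .inl b => e₁.evalRel a b
      | .inr a, .inr b => e₂.evalRel a b
      | _, _ => False
  | .join i j e => fun x y => e.evalRel x y ∨ (e.evalLab x = i ∧ e.evalLab y = j)
  | .relabel _ _ e => e.evalRel

/-- The graph built by a clique-width expression. -/
def CWExpr.evalG (e : CWExpr) : SimpleGraph e.evalV := SimpleGraph.fromRel e.evalRel

/-- The clique-width of a graph: the least number of labels with which it can be built. -/
noncomputable def cwd {V : Type*} (G : SimpleGraph V) : ℕ :=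
  sInf {k | ∃ e : CWExpr, e.bounded k ∧ Nonempty (G ≃g e.evalG)}

namespace CWExpr

instance fintypeEvalV : ∀ e : CWExpr, Fintype e.evalV
  | .single _ => inferInstanceAs (Fintype PUnit)
  | .union e₁ e₂ =>
      letI := fintypeEvalV e₁; letI := fintypeEvalV e₂
      inferInstanceAs (Fintype (_ ⊕ _))
  | .join _ _ e => fintypeEvalV e
  | .relabel _ _ e => fintypeEvalV e

lemma evalLab_lt {k : ℕ} : ∀ e : CWExpr, e.bounded k → ∀ v, e.evalLab v < k
  | .single _, h, _ => h
  | .union e₁ e₂, h, v => by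
      cases v with
      | inl a => exact evalLab_lt e₁ h.1 a
      | inr a => exact evalLab_lt e₂ h.2 a
  | .join _ _ e, h, v => evalLab_lt e h.2.2 v
  | .relabel i j e, h, v => by
      show (if e.evalLab v = i then j else e.evalLab v) < k
      split
      · exact h.2.1
      · exact evalLab_lt e h.2.2 v

lemma adj_union_inl_inl {e₁ e₂ : CWExpr} (a b : e₁.evalV) :
    (union e₁ e₂).evalG.Adj (Sum.inl a) (Sum.inl b) ↔ e₁.evalG.Adj a b := by
  simp only [evalG, SimpleGraph.fromRel_adj, evalRel, ne_eq]
  have : ((Sum.inl a : (union e₁ e₂).evalV) = Sum.inl b) = (a = b) :=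
    propext ⟨fun h => Sum.inl.inj h, fun h => by rw [h]⟩
  exact ⟨fun ⟨h1, h2⟩ => ⟨fun h => h1 (h ▸ rfl), h2⟩, fun ⟨h1, h2⟩ => ⟨fun h => h1 (Sum.inl.inj h), h2⟩⟩

lemma adj_union_inl_inr {e₁ e₂ : CWExpr} (a : e₁.evalV) (b : e₂.evalV) :
    (union e₁ e₂).evalG.Adj (Sum.inl a) (Sum.inr b) ↔ False := by
  simp [evalG, SimpleGraph.fromRel_adj, evalRel]
  exact fun ⟨_, h⟩ => h.elim (fun h => h) (fun h => h)

lemma evalLab_union_inl {e₁ e₂ : CWExpr} (a : e₁.evalV) :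
    (union e₁ e₂).evalLab (Sum.inl a) = e₁.evalLab a := rfl

lemma evalLab_union_inr {e₁ e₂ : CWExpr} (a : e₂.evalV) :
    (union e₁ e₂).evalLab (Sum.inr a) = e₂.evalLab a := rfl

lemma adj_union_inr_inr {e₁ e₂ : CWExpr} (a b : e₂.evalV) :
    (union e₁ e₂).evalG.Adj (Sum.inr a) (Sum.inr b) ↔ e₂.evalG.Adj a b := by
  simp only [evalG, SimpleGraph.fromRel_adj, evalRel, ne_eq]
  have : ((Sum.inr a : (union e₁ e₂).evalV) = Sum.inr b) = (a = b) :=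
    propext ⟨fun h => Sum.inr.inj h, fun h => by rw [h]⟩
  exact ⟨fun ⟨h1, h2⟩ => ⟨fun h => h1 (h ▸ rfl), h2⟩, fun ⟨h1, h2⟩ => ⟨fun h => h1 (Sum.inr.inj h), h2⟩⟩

lemma adj_join {i j : ℕ} {e : CWExpr} (x y : e.evalV) :
    (join i j e).evalG.Adj x y ↔ e.evalG.Adj x y ∨
      (x ≠ y ∧ ((e.evalLab x = i ∧ e.evalLab y = j) ∨ (e.evalLab y = i ∧ e.evalLab x = j))) := by
  simp only [evalG, SimpleGraph.fromRel_adj, evalRel]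
  change (x ≠ y ∧ ((e.evalRel x y ∨ (e.evalLab x = i ∧ e.evalLab y = j)) ∨
    (e.evalRel y x ∨ (e.evalLab y = i ∧ e.evalLab x = j)))) ↔ _
  tauto

lemma evalG_relabel {i j : ℕ} {e : CWExpr} : (relabel i j e).evalG = e.evalG := rfl

end CWExpr

open CWExpr

lemma simClasses_range_le {V : Type} (G : SimpleGraph V) (k : ℕ) (e : CWExpr) (ι : e.evalV → V)
    (hb : e.bounded k)
    (hA : ∀ x y : e.evalV, e.evalLab x = e.evalLab y →
      ∀ w ∉ Set.range ι, (G.Adj (ι x) w ↔ G.Adj (ι y) w)) :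
    simClasses G (Set.range ι) ≤ k := by
  classical
  set U := Set.range ι with hU
  set f : V → Set V := fun x => {y | y ∉ U ∧ G.Adj x y} with hf
  have hfac : ∀ x y : e.evalV, e.evalLab x = e.evalLab y → f (ι x) = f (ι y) := by
    intro x y h
    ext w
    simp only [hf, Set.mem_setOf_eq]
    constructor
    · rintro ⟨hw, ha⟩; exact ⟨hw, (hA x y h w hw).mp ha⟩
    · rintro ⟨hw, ha⟩; exact ⟨hw, (hA x y h w hw).mpr ha⟩
  set g : ℕ → Set V := fun n => if h : ∃ x, e.evalLab x = n then f (ι h.choose) else ∅ with hg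
  have hcomp : f ∘ ι = g ∘ e.evalLab := by
    funext x
    have hx : ∃ y, e.evalLab y = e.evalLab x := ⟨x, rfl⟩
    simp only [Function.comp, hg, dif_pos hx]
    exact hfac x hx.choose hx.choose_spec.symm
  have h1 : simClasses G U = (Set.range (f ∘ ι)).ncard := by
    rw [simClasses, hU, Set.range_comp]
  rw [h1, hcomp, Set.range_comp]
  have hsub : g '' Set.range e.evalLab ⊆ g '' Set.Iio k := by
    apply Set.image_mono
    rintro n ⟨v, rfl⟩
    exact evalLab_lt e hb v
  calc (g '' Set.range e.evalLab).ncard ≤ (g '' Set.Iio k).ncard :=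
        Set.ncard_le_ncard hsub ((Set.finite_Iio k).image g)
    _ ≤ (Set.Iio k).ncard := Set.ncard_image_le (Set.finite_Iio k)
    _ = k := by rw [← Finset.coe_Iio, Set.ncard_coe_finset]; simp

lemma ncard_range_eq {α V : Type} [Fintype α] (ι : α → V) (h : Function.Injective ι) :
    (Set.range ι).ncard = Fintype.card α := by
  rw [← Set.image_univ, Set.ncard_image_of_injective _ h, Set.ncard_univ,
    Nat.card_eq_fintype_card]

lemma main_lemma {V : Type} [Fintype V] (G : SimpleGraph V) (k N : ℕ) (hN : 2 ≤ N) :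
    ∀ (e : CWExpr) (ι : e.evalV → V), e.bounded k → Function.Injective ι →
    (∀ x y : e.evalV, e.evalLab x = e.evalLab y →
      ∀ w ∉ Set.range ι, (G.Adj (ι x) w ↔ G.Adj (ι y) w)) →
    (∃ R : ℕ → ℕ → Prop, ∀ x y : e.evalV, G.Adj (ι x) (ι y) ↔
      (e.evalG.Adj x y ∨ (x ≠ y ∧ (R (e.evalLab x) (e.evalLab y) ∨ R (e.evalLab y) (e.evalLab x))))) →
    N ≤ 3 * Fintype.card e.evalV →
    ∃ U : Set V, N ≤ 3 * U.ncard ∧ 3 * U.ncard ≤ 2 * N ∧ simClasses G U ≤ k := by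
  intro e
  induction e with
  | single l =>
    intro ι hb hinj hA _ hsize
    refine ⟨Set.range ι, ?_, ?_, simClasses_range_le G k _ ι hb hA⟩ <;>
      rw [ncard_range_eq ι hinj] <;>
      [skip; skip] <;>
      · have : Fintype.card (single l).evalV = 1 := by
          simp [Fintype.card_eq_one_iff]; exact ⟨PUnit.unit, fun x => rfl⟩
        omega
  | union e₁ e₂ ih₁ ih₂ =>
    intro ι hb hinj hA hB hsize
    by_cases hstop : 3 * Fintype.card (union e₁ e₂).evalV ≤ 2 * N
    · exact ⟨Set.range ι, by rwa [ncard_range_eq ι hinj],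
        by rwa [ncard_range_eq ι hinj], simClasses_range_le G k _ ι hb hA⟩
    · obtain ⟨R, hR⟩ := hB
      have hcard : Fintype.card (union e₁ e₂).evalV =
          Fintype.card e₁.evalV + Fintype.card e₂.evalV := by
        exact Fintype.card_congr (Equiv.refl _) |>.trans Fintype.card_sum
      have hsplit : N ≤ 3 * Fintype.card e₁.evalV ∨ N ≤ 3 * Fintype.card e₂.evalV := by
        omega
      rcases hsplit with h1 | h2
      · refine ih₁ (ι ∘ Sum.inl) hb.1 (hinj.comp Sum.inl_injective) ?_ ⟨R, ?_⟩ h1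
        · intro x y hlab w hw
          by_cases hwr : w ∈ Set.range ι
          · obtain ⟨z, rfl⟩ := hwr
            cases z with
            | inl b => exact absurd ⟨b, rfl⟩ hw
            | inr b =>
              show G.Adj (ι (Sum.inl x)) (ι (Sum.inr b)) ↔ G.Adj (ι (Sum.inl y)) (ι (Sum.inr b))
              rw [hR (Sum.inl x) (Sum.inr b), hR (Sum.inl y) (Sum.inr b)]
              simp [adj_union_inl_inr, evalLab_union_inl, evalLab_union_inr, hlab]
              exact fun _ => ⟨fun _ => Sum.inl_ne_inr, fun _ => Sum.inl_ne_inr⟩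
          · exact hA (Sum.inl x) (Sum.inl y) hlab w hwr
        · intro x y
          rw [show (ι ∘ Sum.inl) x = ι (Sum.inl x) from rfl,
            show (ι ∘ Sum.inl) y = ι (Sum.inl y) from rfl, hR (Sum.inl x) (Sum.inl y)]
          have : ∀ a b : e₁.evalV, ((Sum.inl a : (union e₁ e₂).evalV) = Sum.inl b) = (a = b) :=
            fun a b => propext ⟨fun h => Sum.inl.inj h, fun h => by rw [h]⟩
          simp [adj_union_inl_inl, evalLab_union_inl, this]
          exact or_congr Iff.rfl (and_congr ⟨fun h h' => h (h' ▸ rfl), fun h h' => h (Sum.inl.inj h')⟩ Iff.rfl)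
      · refine ih₂ (ι ∘ Sum.inr) hb.2 (hinj.comp Sum.inr_injective) ?_ ⟨R, ?_⟩ h2
        · intro x y hlab w hw
          by_cases hwr : w ∈ Set.range ι
          · obtain ⟨z, rfl⟩ := hwr
            cases z with
            | inr b => exact absurd ⟨b, rfl⟩ hw
            | inl b =>
              show G.Adj (ι (Sum.inr x)) (ι (Sum.inl b)) ↔ G.Adj (ι (Sum.inr y)) (ι (Sum.inl b))
              rw [hR (Sum.inr x) (Sum.inl b), hR (Sum.inr y) (Sum.inl b)]
              have h1 := adj_union_inl_inr (e₁ := e₁) (e₂ := e₂) b x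
              have h2 := adj_union_inl_inr (e₁ := e₁) (e₂ := e₂) b y
              have hx : ¬ (union e₁ e₂).evalG.Adj (Sum.inr x) (Sum.inl b) :=
                fun h => h1.mp h.symm
              have hy : ¬ (union e₁ e₂).evalG.Adj (Sum.inr y) (Sum.inl b) :=
                fun h => h2.mp h.symm
              simp [hx, hy, evalLab_union_inl, evalLab_union_inr, hlab]
              exact fun _ => ⟨fun _ => Sum.inr_ne_inl, fun _ => Sum.inr_ne_inl⟩
          · exact hA (Sum.inr x) (Sum.inr y) hlab w hwr
        · intro x y
          rw [show (ι ∘ Sum.inr) x = ι (Sum.inr x) from rfl,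
            show (ι ∘ Sum.inr) y = ι (Sum.inr y) from rfl, hR (Sum.inr x) (Sum.inr y)]
          have : ∀ a b : e₂.evalV, ((Sum.inr a : (union e₁ e₂).evalV) = Sum.inr b) = (a = b) :=
            fun a b => propext ⟨fun h => Sum.inr.inj h, fun h => by rw [h]⟩
          simp [adj_union_inr_inr, evalLab_union_inr, this]
          exact or_congr Iff.rfl (and_congr ⟨fun h h' => h (h' ▸ rfl), fun h h' => h (Sum.inr.inj h')⟩ Iff.rfl)
  | join i j e ih =>
    intro ι hb hinj hA hB hsize
    obtain ⟨R, hR⟩ := hB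
    refine ih ι hb.2.2 hinj hA ⟨fun a b => R a b ∨ (a = i ∧ b = j), ?_⟩ hsize
    intro x y
    rw [hR x y]
    have hj := adj_join (i := i) (j := j) (e := e) x y
    constructor
    · rintro (h | h)
      · rw [hj] at h; tauto
      · tauto
    · rintro (h | h)
      · left; rw [hj]; tauto
      · obtain ⟨hne, h⟩ := h
        rcases h with (h | h) | (h | h)
        · tauto
        · left; rw [hj]; tauto
        · tauto
        · left; rw [hj]; tauto
  | relabel i j e ih =>
    intro ι hb hinj hA hB hsize
    obtain ⟨R, hR⟩ := hB
    refine ih ι hb.2.2 hinj ?_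
      ⟨fun a b => R (if a = i then j else a) (if b = i then j else b), ?_⟩ hsize
    · intro x y h w hw
      refine hA x y ?_ w hw
      show (if e.evalLab x = i then j else e.evalLab x) =
        (if e.evalLab y = i then j else e.evalLab y)
      rw [h]
    · intro x y
      exact hR x y

namespace CWExpr

lemma bounded_mono {k k' : ℕ} (hk : k ≤ k') : ∀ e : CWExpr, e.bounded k → e.bounded k'
  | .single _, h => lt_of_lt_of_le h hk
  | .union e₁ e₂, h => ⟨bounded_mono hk e₁ h.1, bounded_mono hk e₂ h.2⟩
  | .join _ _ e, h => ⟨lt_of_lt_of_le h.1 hk, lt_of_lt_of_le h.2.1 hk, bounded_mono hk e h.2.2⟩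
  | .relabel _ _ e, h => ⟨lt_of_lt_of_le h.1 hk, lt_of_lt_of_le h.2.1 hk, bounded_mono hk e h.2.2⟩

/-- Add a join `i ~ t` for every `i < m` with `p i = true`. -/
def addJoins (t : ℕ) (p : ℕ → Bool) : ℕ → CWExpr → CWExpr
  | 0, e => e
  | m+1, e => if p m then .join m t (addJoins t p m e) else addJoins t p m e

lemma addJoins_spec (t : ℕ) (p : ℕ → Bool) (e : CWExpr) (k : ℕ) (hb : e.bounded k)
    (ht : t < k) : ∀ m, m ≤ k → ∃ σ : e.evalV ≃ (addJoins t p m e).evalV,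
    (addJoins t p m e).bounded k ∧
    (∀ v, (addJoins t p m e).evalLab (σ v) = e.evalLab v) ∧
    (∀ v w, (addJoins t p m e).evalG.Adj (σ v) (σ w) ↔
      (e.evalG.Adj v w ∨ (v ≠ w ∧ ∃ i, i < m ∧ p i = true ∧
        ((e.evalLab v = i ∧ e.evalLab w = t) ∨ (e.evalLab w = i ∧ e.evalLab v = t))))) := by
  intro m
  induction m with
  | zero =>
    intro _
    exact ⟨Equiv.refl _, hb, fun v => rfl, fun v w => by simp [addJoins]; rfl⟩
  | succ m ih =>
    intro hm
    obtain ⟨σ, hbd, hlab, hadj⟩ := ih (by omega)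
    by_cases hp : p m
    · rw [addJoins, if_pos hp]
      let σ' : e.evalV ≃ (join m t (addJoins t p m e)).evalV := σ
      have hcoe : ∀ v, σ' v = σ v := fun _ => rfl
      refine ⟨σ', ⟨by omega, ht, hbd⟩, fun v => ?_, fun v w => ?_⟩
      · show (addJoins t p m e).evalLab (σ' v) = e.evalLab v
        rw [hcoe]; exact hlab v
      · refine (adj_join (i := m) (j := t) (e := addJoins t p m e) (σ v) (σ w)).trans ?_
        simp only [hcoe, hadj, hlab, ne_eq, σ.apply_eq_iff_eq]
        constructor
        · rintro ((h | ⟨hne, i, him, hpi, hPi⟩) | ⟨hne, hP⟩)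
          · exact Or.inl h
          · exact Or.inr ⟨hne, i, by omega, hpi, hPi⟩
          · exact Or.inr ⟨hne, m, by omega, hp, hP⟩
        · rintro (h | ⟨hne, i, him, hpi, hPi⟩)
          · exact Or.inl (Or.inl h)
          · rcases Nat.lt_succ_iff_lt_or_eq.mp him with h' | rfl
            · exact Or.inl (Or.inr ⟨hne, i, h', hpi, hPi⟩)
            · exact Or.inr ⟨hne, hPi⟩
    · rw [addJoins, if_neg hp]
      refine ⟨σ, hbd, hlab, fun v w => ?_⟩
      rw [hadj v w]
      constructor
      · rintro (h | ⟨hne, i, him, hpi, hPi⟩)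
        · exact Or.inl h
        · exact Or.inr ⟨hne, i, by omega, hpi, hPi⟩
      · rintro (h | ⟨hne, i, him, hpi, hPi⟩)
        · exact Or.inl h
        · rcases Nat.lt_succ_iff_lt_or_eq.mp him with h' | rfl
          · exact Or.inr ⟨hne, i, h', hpi, hPi⟩
          · exact absurd hpi (by simp [hp])

end CWExpr

lemma exists_expr : ∀ (n : ℕ) (H : SimpleGraph (Fin (n+1))),
    ∃ (e : CWExpr) (ψ : Fin (n+1) ≃ e.evalV), e.bounded (n+1) ∧
      (∀ x, e.evalLab (ψ x) = (x : ℕ)) ∧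
      (∀ x y, e.evalG.Adj (ψ x) (ψ y) ↔ H.Adj x y) := by
  intro n
  induction n with
  | zero =>
    intro H
    refine ⟨single 0, Equiv.equivPUnit (Fin 1), Nat.zero_lt_one, fun x => ?_, fun x y => ?_⟩
    · have : (x : ℕ) = 0 := by omega
      rw [this]; rfl
    · have hxy : x = y := Fin.ext (by omega)
      subst hxy
      simp [evalG, SimpleGraph.fromRel_adj, evalRel]
  | succ n ih =>
    intro H
    classical
    obtain ⟨e', ψ', hb', hlab', hadj'⟩ := ih (H.comap Fin.castSucc)
    set p : ℕ → Bool :=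
      fun i => decide (∃ a : Fin (n+1), (a:ℕ) = i ∧ H.Adj a.castSucc (Fin.last (n+1))) with hp
    set E0 : CWExpr := union e' (single (n+1)) with hE0
    have hb0 : E0.bounded (n+2) :=
      ⟨bounded_mono (by omega) e' hb', show n + 1 < n + 2 from Nat.lt_succ_self _⟩
    obtain ⟨σ, hbE, hlabE, hadjE⟩ :=
      addJoins_spec (n+1) p E0 (n+2) hb0 (by omega) (n+1) (by omega)
    let e : CWExpr := addJoins (n+1) p (n+1) E0
    let ψ : Fin (n+2) ≃ e.evalV :=
      finSuccEquivLast.trans ((Equiv.optionEquivSumPUnit _).trans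
        ((ψ'.sumCongr (Equiv.refl PUnit)).trans σ))
    have hψc : ∀ a : Fin (n+1), ψ a.castSucc = σ (Sum.inl (ψ' a)) := by
      intro a
      show ((ψ'.sumCongr (Equiv.refl PUnit)).trans σ)
        ((Equiv.optionEquivSumPUnit _) (finSuccEquivLast a.castSucc)) = _
      rw [finSuccEquivLast_castSucc]
      rfl
    have hψl : ψ (Fin.last (n+1)) = σ (Sum.inr PUnit.unit) := by
      show ((ψ'.sumCongr (Equiv.refl PUnit)).trans σ)
        ((Equiv.optionEquivSumPUnit _) (finSuccEquivLast (Fin.last (n+1)))) = _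
      rw [finSuccEquivLast_last]
      rfl
    have hlab0l : ∀ a : Fin (n+1), E0.evalLab (Sum.inl (ψ' a)) = (a : ℕ) := fun a => hlab' a
    have hlab0r : E0.evalLab (Sum.inr PUnit.unit) = n + 1 := rfl
    have hlt : ∀ a : Fin (n+1), (a : ℕ) < n + 1 := fun a => a.isLt
    have key : ∀ a : Fin (n+1),
        (e.evalG.Adj (ψ a.castSucc) (ψ (Fin.last (n+1))) ↔ H.Adj a.castSucc (Fin.last (n+1))) := by
      intro a
      rw [hψc, hψl]; refine (hadjE _ _).trans ?_
      constructor
      · rintro (h | ⟨-, i, him, hpi, (⟨h1, h2⟩ | ⟨h1, h2⟩)⟩)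
        · exact absurd h (fun hh => (adj_union_inl_inr _ _).mp hh)
        · obtain ⟨a', ha', hadj⟩ := of_decide_eq_true hpi
          have : a' = a := by
            apply Fin.ext
            rw [ha']
            rw [hlab0l a] at h1
            omega
          rwa [this] at hadj
        · rw [hlab0r] at h1; omega
      · intro hadj
        refine Or.inr ⟨fun hh => Sum.inl_ne_inr hh, (a : ℕ), hlt a, ?_, Or.inl ⟨hlab0l a, hlab0r⟩⟩
        exact decide_eq_true ⟨a, rfl, hadj⟩
    refine ⟨e, ψ, bounded_mono (le_refl _) _ hbE, ?_, ?_⟩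
    · intro x
      refine Fin.lastCases ?_ ?_ x
      · rw [hψl]; exact (hlabE _).trans (hlab0r.trans (Fin.val_last _).symm)
      · intro a
        rw [hψc]; exact (hlabE _).trans ((hlab0l a).trans (Fin.coe_castSucc a).symm)
    · intro x y
      refine Fin.lastCases ?_ (fun a => ?_) x
      · refine Fin.lastCases ?_ (fun b => ?_) y
        · simp [SimpleGraph.irrefl]
        · rw [(e.evalG).adj_comm, H.adj_comm]
          exact key b
      · refine Fin.lastCases ?_ (fun b => ?_) y
        · exact key a
        · rw [hψc, hψc]; refine (hadjE _ _).trans ?_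
          constructor
          · rintro (h | ⟨-, i, him, hpi, (⟨h1, h2⟩ | ⟨h1, h2⟩)⟩)
            · have := (adj_union_inl_inl (e₂ := single (n+1)) (ψ' a) (ψ' b)).mp h
              exact (hadj' a b).mp this
            · rw [hlab0l b] at h2; omega
            · rw [hlab0l a] at h2; omega
          · intro hadj
            exact Or.inl ((adj_union_inl_inl _ _).mpr ((hadj' a b).mpr hadj))

theorem stmt9 {V : Type} [Fintype V] (G : SimpleGraph V) : mu G ≤ cwd G := by
  classical
  by_cases hsmall : Fintype.card V ≤ 1
  · rcases Nat.le_one_iff_eq_zero_or_eq_one.mp hsmall with h0 | h1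
    · have hmem : (0:ℕ) ∈ {m | ∃ U : Set V, Fintype.card V ≤ 3 * U.ncard ∧
          3 * U.ncard ≤ 2 * Fintype.card V ∧ m = simClasses G U} :=
        ⟨∅, by simp [h0], by simp [h0], by simp [simClasses]⟩
      have : mu G ≤ 0 := Nat.sInf_le hmem
      omega
    · have hempty : {m | ∃ U : Set V, Fintype.card V ≤ 3 * U.ncard ∧
          3 * U.ncard ≤ 2 * Fintype.card V ∧ m = simClasses G U} = ∅ := by
        ext m
        simp only [Set.mem_setOf_eq, Set.mem_empty_iff_false, iff_false]
        rintro ⟨U, hu1, hu2, -⟩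
        rw [h1] at hu1 hu2
        omega
      have : mu G = 0 := by
        rw [mu, hempty, Nat.sInf_empty]
      omega
  · push_neg at hsmall
    by_cases hne : {k | ∃ e : CWExpr, e.bounded k ∧ Nonempty (G ≃g e.evalG)}.Nonempty
    · obtain ⟨e, hb, ⟨iso⟩⟩ := Nat.sInf_mem hne
      set ι : e.evalV → V := fun x => iso.symm x with hι
      have hinj : Function.Injective ι := fun a b h => by
        simpa using iso.symm.toEquiv.injective h
      have hrange : Set.range ι = Set.univ :=
        Set.range_eq_univ.mpr (fun v => ⟨iso v, by simp [hι]⟩)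
      have hcard : Fintype.card V = Fintype.card e.evalV := Fintype.card_congr iso.toEquiv
      obtain ⟨U, h1, h2, h3⟩ := main_lemma G (sInf {k | ∃ e : CWExpr, e.bounded k ∧
          Nonempty (G ≃g e.evalG)}) (Fintype.card V) hsmall e ι hb hinj
        (fun x y _ w hw => absurd (by rw [hrange]; trivial) hw)
        ⟨fun _ _ => False, fun x y => by
          simp only [false_or, false_and, and_false, or_false]
          exact iso.symm.map_adj_iff⟩
        (by omega)
      have hmu : mu G ≤ simClasses G U := Nat.sInf_le ⟨U, h1, h2, rfl⟩
      exact le_trans hmu h3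
    · exfalso
      obtain ⟨n, hn⟩ : ∃ n, Fintype.card V = n + 1 := ⟨Fintype.card V - 1, by omega⟩
      have eqv : V ≃ Fin (n+1) := (Fintype.equivFin V).trans (finCongr hn)
      obtain ⟨e, ψ, hbe, -, hadj⟩ := exists_expr n (G.comap ⇑eqv.symm)
      refine hne ⟨n+1, e, hbe, ⟨⟨eqv.trans ψ, ?_⟩⟩⟩
      intro a b
      rw [Equiv.trans_apply, Equiv.trans_apply, hadj]
      simp
end

section
/- Let U ⊆ {1,…,n} and let P^U denote the subgraph of the path P on {1,…,n} induced by U. If P^U has c+1 connected components, then μ_{D_n}(U) ≥ c/2, where μ_{D_n}(U) is the number of classes of vertices in U with equal neighborhoods in the complement of U in the graph D_n. -/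
/-- Adjacency of the graph `D_n` on positive integers: consecutive, or equal power of 2. -/
def Dadj (i j : ℕ) : Prop := i ≠ j ∧ (i + 1 = j ∨ j + 1 = i ∨ q i = q j)

/-- Vertex set of `D_n`: the integers `1, …, n`. -/
abbrev Vtx (n : ℕ) : Type := {v : ℕ // 1 ≤ v ∧ v ≤ n}

/-- The graph `D_n`. -/
def D (n : ℕ) : SimpleGraph (Vtx n) where
  Adj i j := Dadj i.1 j.1
  symm := by
    constructor
    rintro a b ⟨h1, h2⟩
    refine ⟨h1.symm, ?_⟩
    rcases h2 with h | h | h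
    · exact Or.inr (Or.inl h)
    · exact Or.inl h
    · exact Or.inr (Or.inr h.symm)
  loopless := by constructor; rintro a ⟨h1, -⟩; exact h1 rfl
/-- The path `P` on `1, …, n` (the body of `D_n`). -/
def Pn (n : ℕ) : SimpleGraph (Vtx n) where
  Adj i j := i.1 + 1 = j.1 ∨ j.1 + 1 = i.1
  symm := by constructor; rintro a b (h | h); exacts [Or.inr h, Or.inl h]
  loopless := by constructor; rintro a (h | h) <;> omega
/-- Vertices with equal `q` have equal parity. -/
lemma q_parity {i j : ℕ} (hi : i ≠ 0) (hj : j ≠ 0) (h : q i = q j) : i % 2 = j % 2 := by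
  have hv : padicValNat 2 i = padicValNat 2 j :=
    Nat.pow_right_injective (le_refl 2) h
  rcases Nat.eq_zero_or_pos (padicValNat 2 i) with h0 | h1
  · have hi' : ¬ 2 ∣ i := fun hd => by
      have := one_le_padicValNat_of_dvd hi hd; omega
    have hj' : ¬ 2 ∣ j := fun hd => by
      have := one_le_padicValNat_of_dvd hj hd; omega
    omega
  · have di : 2 ∣ i := dvd_of_one_le_padicValNat h1
    have dj : 2 ∣ j := dvd_of_one_le_padicValNat (by omega)
    omega

/-- Counting lemma: if every fiber of `f` on `s` has at most two elements,
then `s` has at most twice as many elements as its image. -/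
lemma ncard_le_two_mul_image {α β : Type*} (s : Set α) (hs : s.Finite) (f : α → β)
    (h : ∀ x ∈ s, ∀ y ∈ s, ∀ z ∈ s, f x = f y → f x = f z →
      x = y ∨ x = z ∨ y = z) :
    s.ncard ≤ 2 * (f '' s).ncard := by
  classical
  have hsi : (f '' s).Finite := hs.image f
  rw [Set.ncard_eq_toFinset_card _ hs, Set.ncard_eq_toFinset_card _ hsi,
    Set.Finite.toFinset_image f hs hsi]
  refine Finset.card_le_mul_card_image _ 2 ?_
  intro a _
  by_contra hlt
  push_neg at hlt
  obtain ⟨x, y, z, hx, hy, hz, hxy, hxz, hyz⟩ := Finset.two_lt_card_iff.mp hlt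
  simp only [Finset.mem_filter, Set.Finite.mem_toFinset] at hx hy hz
  rcases h x hx.1 y hy.1 z hz.1 (hx.2.trans hy.2.symm) (hx.2.trans hz.2.symm) with
    h' | h' | h' <;> [exact hxy h'; exact hxz h'; exact hyz h']

theorem stmt10 (n c : ℕ) (U : Set (Vtx n))
    (hcomp : Nat.card ((Pn n).induce U).ConnectedComponent = c + 1) :
    c ≤ 2 * simClasses (D n) U := by
  classical
  haveI : Finite (Vtx n) :=
    Finite.of_injective (fun v => (⟨v.1, by omega⟩ : Fin (n + 1)))
      (by intro a b h; simp only [Fin.mk.injEq] at h; exact Subtype.ext h)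
  set f : Vtx n → Set (Vtx n) := fun x => {y | y ∉ U ∧ (D n).Adj x y} with hf
  set B : Set (Vtx n) := {u | u ∈ U ∧ ∀ w : Vtx n, w.1 = u.1 + 1 → w ∉ U} with hB
  -- Step A: every connected component contains an element of `B` (its maximum),
  -- hence `c + 1 ≤ B.ncard`.
  have hA : c + 1 ≤ B.ncard := by
    have hsurj : Function.Surjective
        (fun u : B => ((Pn n).induce U).connectedComponentMk ⟨u.1, u.2.1⟩) := by
      intro K
      obtain ⟨x, rfl⟩ := K.exists_rep
      obtain ⟨m, hm, hmax⟩ := Set.Finite.exists_maximalFor (fun y : ↥U => y.1.1)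
        {y : ↥U | ((Pn n).induce U).connectedComponentMk y
            = ((Pn n).induce U).connectedComponentMk x}
        (Set.toFinite _) ⟨x, rfl⟩
      have hmB : m.1 ∈ B := by
        refine ⟨m.2, ?_⟩
        intro w hw hwU
        have hadj : ((Pn n).induce U).Adj m ⟨w, hwU⟩ := by
          show (Pn n).Adj m.1 w
          exact Or.inl hw.symm
        have hmem : (⟨w, hwU⟩ : ↥U) ∈
            {y : ↥U | ((Pn n).induce U).connectedComponentMk y
              = ((Pn n).induce U).connectedComponentMk x} := by
          have := SimpleGraph.ConnectedComponent.sound hadj.symm.reachable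
          simp only [Set.mem_setOf_eq] at hm ⊢
          rw [this, hm]
        have hle : m.1.1 ≤ w.1 := by omega
        have := hmax hmem hle
        simp only at this
        omega
      exact ⟨⟨m.1, hmB⟩, hm⟩
    have h1 : Nat.card ((Pn n).induce U).ConnectedComponent ≤ Nat.card B :=
      Nat.card_le_card_of_surjective _ hsurj
    rw [hcomp, Nat.card_coe_set_eq] at h1
    exact h1
  -- Parity fact for two distinct boundary vertices below `n` in the same class.
  have hpair : ∀ a ∈ B, ∀ b ∈ B, a.1 < b.1 → b.1 < n → f a = f b →
      a.1 % 2 ≠ b.1 % 2 := by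
    intro a ha b hb hab hbn hfab
    have hb1 : 1 ≤ b.1 := b.2.1
    set w : Vtx n := ⟨b.1 + 1, by omega⟩ with hw
    have hwU : w ∉ U := hb.2 w rfl
    have hwb : w ∈ f b := ⟨hwU, ⟨by simp [hw], Or.inl rfl⟩⟩
    have hwa : w ∈ f a := by rw [hfab]; exact hwb
    obtain ⟨-, hadj⟩ := hwa
    obtain ⟨hne, h3⟩ := hadj
    have ha1 : 1 ≤ a.1 := a.2.1
    rcases h3 with h' | h' | h'
    · simp only [hw] at h'; omega
    · simp only [hw] at h'; omega
    · have := q_parity (i := a.1) (j := b.1 + 1) (by omega) (by omega) h'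
      omega
  have hpair' : ∀ a ∈ B, ∀ b ∈ B, a.1 < n → b.1 < n → a ≠ b → f a = f b →
      a.1 % 2 ≠ b.1 % 2 := by
    intro a ha b hb han hbn hne hfab
    have hvne : a.1 ≠ b.1 := fun h => hne (Subtype.ext h)
    rcases lt_or_gt_of_ne hvne with h | h
    · exact hpair a ha b hb h hbn hfab
    · exact fun hp => hpair b hb a ha h han hfab.symm hp.symm
  -- Step B: bound the part of `B` below `n`.
  set B0 : Set (Vtx n) := {u ∈ B | u.1 < n} with hB0
  have hB0card : B0.ncard ≤ 2 * (f '' B0).ncard := by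
    refine ncard_le_two_mul_image B0 (Set.toFinite _) f ?_
    intro x hx y hy z hz hxy hxz
    by_contra hcon
    push_neg at hcon
    obtain ⟨h1, h2, h3⟩ := hcon
    have p1 := hpair' x hx.1 y hy.1 hx.2 hy.2 h1 hxy
    have p2 := hpair' x hx.1 z hz.1 hx.2 hz.2 h2 hxz
    have p3 := hpair' y hy.1 z hz.1 hy.2 hz.2 h3 (hxy.symm.trans hxz)
    omega
  -- `B` has at most one element not in `B0` (the vertex `n`).
  set T : Set (Vtx n) := {u ∈ B | u.1 = n} with hT
  have hTcard : T.ncard ≤ 1 := by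
    rcases T.eq_empty_or_nonempty with h | ⟨x, hx⟩
    · simp [h]
    · have hsub : T ⊆ {x} := by
        intro y hy
        have h1 : y.1 = n := hy.2
        have h2 : x.1 = n := hx.2
        simp only [Set.mem_singleton_iff]
        exact Subtype.ext (by omega)
      calc T.ncard ≤ ({x} : Set (Vtx n)).ncard :=
            Set.ncard_le_ncard hsub (Set.finite_singleton x)
        _ = 1 := Set.ncard_singleton x
  have hBsplit : B ⊆ B0 ∪ T := by
    intro u hu
    rcases lt_or_eq_of_le u.2.2 with h | h
    · exact Or.inl ⟨hu, h⟩
    · exact Or.inr ⟨hu, h⟩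
  have hBcard : B.ncard ≤ B0.ncard + 1 :=
    le_trans (Set.ncard_le_ncard hBsplit (Set.toFinite _))
      (le_trans (Set.ncard_union_le B0 T) (by omega))
  -- Assemble.
  have hIm : (f '' B0).ncard ≤ (f '' U).ncard :=
    Set.ncard_le_ncard (Set.image_mono (fun u hu => hu.1.1)) (Set.toFinite _)
  have hμ : simClasses (D n) U = (f '' U).ncard := rfl
  rw [hμ]
  omega
end

section
/- If n ≥ 3((2c+1)(2^{c+1} − 1) + 1), then the clique-width of D_n is at least c. Consequently, the hereditary class D (all induced subgraphs of the graphs D_n) has unbounded clique-width. -/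
/-! ### Basic lemmas about `q` -/

lemma q_eq_of_mul_odd (b t : ℕ) : q (2 ^ b * (2 * t + 1)) = 2 ^ b := by
  haveI : Fact (Nat.Prime 2) := ⟨Nat.prime_two⟩
  unfold q
  congr 1
  rw [padicValNat.mul (by positivity) (by omega), padicValNat.prime_pow,
    padicValNat.eq_zero_of_not_dvd (by omega)]
  omega

lemma q_odd {v : ℕ} (h : v % 2 = 1) : q v = 1 := by
  unfold q
  rw [padicValNat.eq_zero_of_not_dvd (by omega)]
  rfl

lemma q_even {v : ℕ} (h : v % 2 = 0) (hv : v ≠ 0) : 2 ∣ q v := by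
  haveI : Fact (Nat.Prime 2) := ⟨Nat.prime_two⟩
  have h1 : 1 ≤ padicValNat 2 v :=
    one_le_padicValNat_of_dvd hv (by omega)
  unfold q
  exact dvd_pow_self 2 (by omega)

lemma q_ne_parity {x y : ℕ} (hp : x % 2 ≠ y % 2) (hx : x ≠ 0) (hy : y ≠ 0) : q x ≠ q y := by
  rcases Nat.mod_two_eq_zero_or_one x with h | h
  · have h2 : y % 2 = 1 := by omega
    intro he
    have := q_even h hx
    rw [he, q_odd h2] at this
    omega
  · have h2 : y % 2 = 0 := by omega
    intro he
    have := q_even h2 hy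
    rw [← he, q_odd h] at this
    omega

/-- In any block of `2^(b+1)` consecutive integers starting at `a`, there is one
with `q` value exactly `2^b`. -/
lemma exists_q_pow (a b : ℕ) : ∃ x, a ≤ x ∧ x < a + 2 ^ (b + 1) ∧ q x = 2 ^ b := by
  set P := 2 ^ (b + 1) with hP
  set r := 2 ^ b with hr
  have hPr : P = 2 * r := by rw [hP, hr, pow_succ]; ring
  have hr1 : 1 ≤ r := Nat.one_le_two_pow
  set t := (a + P - 1 - r) / P with ht
  have hkey : P * t + (a + P - 1 - r) % P = a + P - 1 - r := Nat.div_add_mod _ _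
  have hm : (a + P - 1 - r) % P < P := Nat.mod_lt _ (by omega)
  refine ⟨P * t + r, by omega, by omega, ?_⟩
  have : P * t + r = 2 ^ b * (2 * t + 1) := by rw [hPr, hr]; ring
  rw [this, q_eq_of_mul_odd]

/-! ### Finiteness of eval vertex types -/

instance CWExpr.finiteEvalV : ∀ e : CWExpr, Finite e.evalV
  | .single _ => inferInstanceAs (Finite PUnit.{1})
  | .union e₁ e₂ =>
      have := finiteEvalV e₁
      have := finiteEvalV e₂
      inferInstanceAs (Finite (_ ⊕ _))
  | .join _ _ e => finiteEvalV e
  | .relabel _ _ e => finiteEvalV e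

lemma lab_lt {k : ℕ} : ∀ {e : CWExpr}, e.bounded k → ∀ v, e.evalLab v < k
  | .single _, h, _ => h
  | .union e₁ e₂, h, v => by
      cases v with
      | inl a => exact lab_lt h.1 a
      | inr a => exact lab_lt h.2 a
  | .join _ _ e, h, v => lab_lt h.2.2 v
  | .relabel i j e, h, v => by
      have := lab_lt h.2.2 v
      show (if e.evalLab v = i then j else e.evalLab v) < k
      split
      · exact h.2.1
      · exact this

/-! ### Adjacency unfolding lemmas -/

lemma adj_union_inl {e₁ e₂ : CWExpr} {a b : e₁.evalV} :
    (CWExpr.union e₁ e₂).evalG.Adj (Sum.inl a) (Sum.inl b) ↔ e₁.evalG.Adj a b := by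
  show (Sum.inl a ≠ Sum.inl b ∧ _) ↔ (a ≠ b ∧ _)
  simp only [ne_eq, Sum.inl.injEq]
  rfl

lemma adj_union_cross {e₁ e₂ : CWExpr} {a : e₁.evalV} {b : e₂.evalV} :
    ¬ (CWExpr.union e₁ e₂).evalG.Adj (Sum.inl a) (Sum.inr b) := by
  rintro ⟨-, h | h⟩ <;> exact h

lemma adj_join {i j : ℕ} {e : CWExpr} {x y : e.evalV} :
    (CWExpr.join i j e).evalG.Adj x y ↔
      e.evalG.Adj x y ∨ (x ≠ y ∧
        ((e.evalLab x = i ∧ e.evalLab y = j) ∨ (e.evalLab y = i ∧ e.evalLab x = j))) := by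
  show (x ≠ y ∧ ((e.evalRel x y ∨ _) ∨ (e.evalRel y x ∨ _))) ↔
    ((x ≠ y ∧ (e.evalRel x y ∨ e.evalRel y x)) ∨ _)
  tauto
/-! ### The balanced-cut lemma for clique-width expressions -/

lemma lemA {k m : ℕ} (hm : 1 ≤ m) :
    ∀ e : CWExpr, e.bounded k → m + 1 ≤ Nat.card e.evalV →
    ∃ (X : Set e.evalV) (g : e.evalV → ℕ),
      m + 1 ≤ X.ncard ∧ X.ncard ≤ 2 * m ∧
      (∀ v ∈ X, g v < k) ∧
      (∀ u ∈ X, ∀ v ∈ X, g u = g v → e.evalLab u = e.evalLab v) ∧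
      (∀ u ∈ X, ∀ v ∈ X, ∀ w, w ∉ X → g u = g v →
        (e.evalG.Adj u w ↔ e.evalG.Adj v w)) := by
  intro e
  induction e with
  | single l =>
    intro _ hcard
    have : Nat.card PUnit.{1} = 1 := Nat.card_unique
    rw [show Nat.card (CWExpr.single l).evalV = Nat.card PUnit.{1} from rfl] at hcard
    omega
  | union e₁ e₂ ih₁ ih₂ =>
    intro hb hcard
    have hcs : Nat.card (CWExpr.union e₁ e₂).evalV = Nat.card e₁.evalV + Nat.card e₂.evalV :=
      Nat.card_sum
    by_cases h₁ : m + 1 ≤ Nat.card e₁.evalV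
    · obtain ⟨X, g, p1, p2, p3, p4, p5⟩ := ih₁ hb.1 h₁
      refine ⟨Sum.inl '' X, Sum.elim g (fun _ => 0), ?_, ?_, ?_, ?_, ?_⟩
      · exact p1.trans (Set.ncard_image_of_injective X Sum.inl_injective).symm.le
      · exact (Set.ncard_image_of_injective X Sum.inl_injective).le.trans p2
      · rintro v ⟨a, ha, rfl⟩; exact p3 a ha
      · rintro u ⟨a, ha, rfl⟩ v ⟨b, hb', rfl⟩ hg
        exact p4 a ha b hb' hg
      · rintro u ⟨a, ha, rfl⟩ v ⟨b, hb', rfl⟩ w hw hg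
        cases w with
        | inl c =>
          have hc : c ∉ X := fun h => hw ⟨c, h, rfl⟩
          rw [adj_union_inl, adj_union_inl]
          exact p5 a ha b hb' c hc hg
        | inr c =>
          constructor
          · intro h; exact absurd h adj_union_cross
          · intro h; exact absurd h adj_union_cross
    · by_cases h₂ : m + 1 ≤ Nat.card e₂.evalV
      · obtain ⟨X, g, p1, p2, p3, p4, p5⟩ := ih₂ hb.2 h₂
        refine ⟨Sum.inr '' X, Sum.elim (fun _ => 0) g, ?_, ?_, ?_, ?_, ?_⟩
        · exact p1.trans (Set.ncard_image_of_injective X Sum.inr_injective).symm.le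
        · exact (Set.ncard_image_of_injective X Sum.inr_injective).le.trans p2
        · rintro v ⟨a, ha, rfl⟩; exact p3 a ha
        · rintro u ⟨a, ha, rfl⟩ v ⟨b, hb', rfl⟩ hg
          exact p4 a ha b hb' hg
        · rintro u ⟨a, ha, rfl⟩ v ⟨b, hb', rfl⟩ w hw hg
          cases w with
          | inr c =>
            have hc : c ∉ X := fun h => hw ⟨c, h, rfl⟩
            have cross : ∀ (x y : e₂.evalV),
                ((CWExpr.union e₁ e₂).evalG.Adj (Sum.inr x) (Sum.inr y) ↔ e₂.evalG.Adj x y) := by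
              intro x y
              show (Sum.inr x ≠ Sum.inr y ∧ _) ↔ (x ≠ y ∧ _)
              simp only [ne_eq, Sum.inr.injEq]
              rfl
            rw [cross, cross]
            exact p5 a ha b hb' c hc hg
          | inl c =>
            have cross : ∀ (x : e₂.evalV) (y : e₁.evalV),
                ¬ (CWExpr.union e₁ e₂).evalG.Adj (Sum.inr x) (Sum.inl y) := by
              rintro x y ⟨-, h | h⟩ <;> exact h
            constructor
            · intro h; exact absurd h (cross _ _)
            · intro h; exact absurd h (cross _ _)
      · refine ⟨Set.univ, (CWExpr.union e₁ e₂).evalLab, ?_, ?_, ?_, ?_, ?_⟩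
        · rw [Set.ncard_univ]; omega
        · rw [Set.ncard_univ]; omega
        · intro v _; exact lab_lt hb v
        · intro u _ v _ hg; exact hg
        · intro u _ v _ w hw; exact absurd (Set.mem_univ w) hw
  | join i j e ih =>
    intro hb hcard
    obtain ⟨X, g, p1, p2, p3, p4, p5⟩ := ih hb.2.2 hcard
    refine ⟨X, g, p1, p2, p3, p4, ?_⟩
    intro u hu v hv w hw hg
    have hlab := p4 u hu v hv hg
    have h5 := p5 u hu v hv w hw hg
    have hune : u ≠ w := fun h => hw (h ▸ hu)
    have hvne : v ≠ w := fun h => hw (h ▸ hv)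
    refine (adj_join.trans ?_).trans adj_join.symm
    rw [hlab]
    constructor
    · rintro (h | ⟨-, h⟩)
      · exact Or.inl (h5.mp h)
      · exact Or.inr ⟨hvne, h⟩
    · rintro (h | ⟨-, h⟩)
      · exact Or.inl (h5.mpr h)
      · exact Or.inr ⟨hune, h⟩
  | relabel i j e ih =>
    intro hb hcard
    obtain ⟨X, g, p1, p2, p3, p4, p5⟩ := ih hb.2.2 hcard
    refine ⟨X, g, p1, p2, p3, ?_, p5⟩
    intro u hu v hv hg
    show (if e.evalLab u = i then j else e.evalLab u) = (if e.evalLab v = i then j else e.evalLab v)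
    rw [p4 u hu v hv hg]
/-! ### Counting right boundaries -/

lemma rb_count (S : Finset ℕ) (L : ℕ) (hL : 1 ≤ L)
    (hno : ∀ a ∈ S, ∃ i, a ≤ i ∧ i < a + L ∧ i ∉ S) :
    S.card ≤ L * (S.filter (fun x => x + 1 ∉ S)).card := by
  classical
  set RB := S.filter (fun x => x + 1 ∉ S) with hRB
  have key : ∀ x ∈ S, ∃ y ∈ RB, x ≤ y ∧ y < x + L := by
    intro x hx
    have hex : ∃ d, x + d ∉ S := by
      obtain ⟨i, h1, h2, h3⟩ := hno x hx
      exact ⟨i - x, by rwa [Nat.add_sub_cancel' h1]⟩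
    set d := Nat.find hex with hd
    have hspec : x + d ∉ S := Nat.find_spec hex
    have hd1 : 1 ≤ d := by
      rcases Nat.eq_zero_or_pos d with h | h
      · exfalso; apply hspec; rw [h]; simpa using hx
      · exact h
    have hdL : d < L := by
      obtain ⟨i, h1, h2, h3⟩ := hno x hx
      have : d ≤ i - x := Nat.find_le (by rwa [Nat.add_sub_cancel' h1])
      omega
    have hmem : x + d - 1 ∈ S := by
      have hlt : d - 1 < d := by omega
      have := Nat.find_min hex hlt
      push_neg at this
      rwa [show x + (d - 1) = x + d - 1 by omega] at this
    refine ⟨x + d - 1, ?_, by omega, by omega⟩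
    rw [hRB, Finset.mem_filter]
    exact ⟨hmem, by rwa [show x + d - 1 + 1 = x + d by omega]⟩
  choose f hf1 hf2 hf3 using key
  let f' : ℕ → ℕ := fun x => if hx : x ∈ S then f x hx else 0
  have himg : S.image f' ⊆ RB := by
    intro a ha
    obtain ⟨x, hx, hfx⟩ := Finset.mem_image.mp ha
    rw [show f' x = f x hx from dif_pos hx] at hfx
    exact hfx ▸ hf1 x hx
  calc S.card = ∑ a ∈ S.image f', (S.filter (fun x => f' x = a)).card :=
        Finset.card_eq_sum_card_image f' S
    _ ≤ (S.image f').card * L := by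
        apply Finset.sum_le_card_nsmul
        intro a _
        have hsub : S.filter (fun x => f' x = a) ⊆ Finset.Icc (a + 1 - L) a := by
          intro x hx
          obtain ⟨hxS, hfx⟩ := Finset.mem_filter.mp hx
          rw [show f' x = f x hxS from dif_pos hxS] at hfx
          have h2 := hf2 x hxS
          have h3 := hf3 x hxS
          rw [Finset.mem_Icc]
          omega
        calc (S.filter (fun x => f' x = a)).card ≤ (Finset.Icc (a + 1 - L) a).card :=
              Finset.card_le_card hsub
          _ ≤ L := by rw [Nat.card_Icc]; omega
    _ ≤ RB.card * L := Nat.mul_le_mul_right _ (Finset.card_le_card himg)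
    _ = L * RB.card := Nat.mul_comm _ _
/-! ### Arithmetic helpers -/

lemma arith2 (c : ℕ) (hc : 1 ≤ c) :
    (2 ^ c + 2) * (2 * c) < (2 * c + 1) * (2 ^ (c + 1) - 1) + 1 := by
  have hpc : c + 1 ≤ 2 ^ c := Nat.lt_two_pow_self (n := c)
  have h1 : 1 ≤ 2 ^ c := Nat.one_le_two_pow
  have h2 : 2 ^ (c + 1) = 2 * 2 ^ c := by rw [pow_succ]; ring
  have hA : 2 * c * (c + 1) ≤ 2 * c * 2 ^ c := Nat.mul_le_mul_left _ hpc
  have hB : c ≤ c * c := Nat.le_mul_of_pos_left c hc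
  have key : (2 ^ c + 2) * (2 * c) + 2 * c + 1 ≤ (2 * c + 1) * (2 * 2 ^ c) := by
    nlinarith [hA, hpc, hB, hc, h1]
  have hsub : (2 * c + 1) * (2 * 2 ^ c - 1) = (2 * c + 1) * (2 * 2 ^ c) - (2 * c + 1) := by
    rw [Nat.mul_sub, Nat.mul_one]
  rw [h2]
  omega

lemma arith1 (c : ℕ) (hc : 1 ≤ c) :
    2 ^ c * (2 * c) < (2 * c + 1) * (2 ^ (c + 1) - 1) + 1 :=
  lt_of_le_of_lt (Nat.mul_le_mul_right _ (by omega)) (arith2 c hc)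

/-! ### The graph-theoretic core: many distinct neighbourhood traces in `D n` -/

instance Vtx.finite (n : ℕ) : Finite (Vtx n) :=
  Finite.of_injective (fun v : Vtx n => (⟨v.1, by omega⟩ : Fin (n + 1)))
    (fun a b h => Subtype.ext (by simpa using congrArg Fin.val h))

lemma not_Dadj {i j : ℕ} (h1 : i + 1 ≠ j) (h2 : j + 1 ≠ i) (h3 : q i ≠ q j) : ¬ Dadj i j := by
  rintro ⟨hne, h | h | h⟩
  · exact h1 h
  · exact h2 h
  · exact h3 h

lemma lemB {n c : ℕ} (hc : 1 ≤ c) (X : Set (Vtx n))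
    (hX : (2 * c + 1) * (2 ^ (c + 1) - 1) + 1 ≤ X.ncard)
    (hY : (2 * c + 1) * (2 ^ (c + 1) - 1) + 1 ≤ Xᶜ.ncard) :
    ∃ f : Fin c → Vtx n, (∀ i, f i ∈ X) ∧
      ∀ s t : Fin c, s ≠ t → ∃ w, w ∉ X ∧
        ¬(((D n).Adj (f s) w) ↔ ((D n).Adj (f t) w)) := by
  classical
  set m := (2 * c + 1) * (2 ^ (c + 1) - 1) with hmdef
  have hXfin : (Subtype.val '' X : Set ℕ).Finite := (Set.toFinite X).image _
  have hYfin : (Subtype.val '' (Xᶜ) : Set ℕ).Finite := (Set.toFinite _).image _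
  set SX := hXfin.toFinset with hSXdef
  set SY := hYfin.toFinset with hSYdef
  have memSX : ∀ {v : ℕ}, v ∈ SX ↔ ∃ hv : 1 ≤ v ∧ v ≤ n, (⟨v, hv⟩ : Vtx n) ∈ X := by
    intro v
    rw [hSXdef, Set.Finite.mem_toFinset]
    constructor
    · rintro ⟨⟨v', hv'⟩, hmem, rfl⟩; exact ⟨hv', hmem⟩
    · rintro ⟨hv, hmem⟩; exact ⟨⟨v, hv⟩, hmem, rfl⟩
  have memSY : ∀ {v : ℕ}, v ∈ SY ↔ ∃ hv : 1 ≤ v ∧ v ≤ n, (⟨v, hv⟩ : Vtx n) ∉ X := by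
    intro v
    rw [hSYdef, Set.Finite.mem_toFinset]
    constructor
    · rintro ⟨⟨v', hv'⟩, hmem, rfl⟩; exact ⟨hv', hmem⟩
    · rintro ⟨hv, hmem⟩; exact ⟨⟨v, hv⟩, hmem, rfl⟩
  have hSXb : ∀ {v : ℕ}, v ∈ SX → 1 ≤ v ∧ v ≤ n := fun h => (memSX.mp h).choose
  have hSYb : ∀ {v : ℕ}, v ∈ SY → 1 ≤ v ∧ v ≤ n := fun h => (memSY.mp h).choose
  have hSXv : ∀ {v : ℕ} (h : v ∈ SX) (hv : 1 ≤ v ∧ v ≤ n), (⟨v, hv⟩ : Vtx n) ∈ X := by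
    intro v h hv
    obtain ⟨hv', hmem⟩ := memSX.mp h
    exact (show (⟨v, hv⟩ : Vtx n) = ⟨v, hv'⟩ from Subtype.ext rfl) ▸ hmem
  have hSYv : ∀ {v : ℕ} (h : v ∈ SY) (hv : 1 ≤ v ∧ v ≤ n), (⟨v, hv⟩ : Vtx n) ∉ X := by
    intro v h hv
    obtain ⟨hv', hmem⟩ := memSY.mp h
    exact (show (⟨v, hv⟩ : Vtx n) = ⟨v, hv'⟩ from Subtype.ext rfl) ▸ hmem
  have hdisj : ∀ {v : ℕ}, v ∈ SX → v ∈ SY → False := by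
    intro v h1 h2
    exact hSYv h2 (hSXb h1) (hSXv h1 (hSXb h1))
  have hcoverY : ∀ {v : ℕ}, 1 ≤ v → v ≤ n → v ∉ SX → v ∈ SY := by
    intro v h1 h2 h3
    refine memSY.mpr ⟨⟨h1, h2⟩, fun hmem => h3 (memSX.mpr ⟨⟨h1, h2⟩, hmem⟩)⟩
  have hcoverX : ∀ {v : ℕ}, 1 ≤ v → v ≤ n → v ∉ SY → v ∈ SX := by
    intro v h1 h2 h3
    by_cases hmem : (⟨v, ⟨h1, h2⟩⟩ : Vtx n) ∈ X
    · exact memSX.mpr ⟨⟨h1, h2⟩, hmem⟩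
    · exact absurd (memSY.mpr ⟨⟨h1, h2⟩, hmem⟩) h3
  have cardSX : m + 1 ≤ SX.card := by
    have h := Set.ncard_eq_toFinset_card (Subtype.val '' X : Set ℕ) hXfin
    rw [Set.ncard_image_of_injective X Subtype.val_injective] at h
    rw [hSXdef, ← h]
    exact hX
  have cardSY : m + 1 ≤ SY.card := by
    have h := Set.ncard_eq_toFinset_card (Subtype.val '' (Xᶜ) : Set ℕ) hYfin
    rw [Set.ncard_image_of_injective _ Subtype.val_injective] at h
    rw [hSYdef, ← h]
    exact hY
  by_cases hIX : ∃ a ∈ SX, ∀ i, a ≤ i → i < a + 2 ^ c → i ∈ SX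
  · by_cases hIY : ∃ a ∈ SY, ∀ i, a ≤ i → i < a + (2 ^ c + 2) → i ∈ SY
    · -- Case A : long runs in both `X` and its complement
      obtain ⟨a, haS, haI⟩ := hIX
      obtain ⟨a', ha'S, ha'I⟩ := hIY
      have hx : ∀ b : Fin c, ∃ x, x ∈ SX ∧ q x = 2 ^ (b : ℕ) := by
        intro b
        obtain ⟨x, h1, h2, h3⟩ := exists_q_pow a b
        have hble : 2 ^ ((b : ℕ) + 1) ≤ 2 ^ c := Nat.pow_le_pow_right (by norm_num) b.isLt
        exact ⟨x, haI x h1 (by omega), h3⟩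
      have hy : ∀ b : Fin c, ∃ y, y ∈ SY ∧ (y + 1) ∈ SY ∧ 2 ≤ y ∧ (y - 1) ∈ SY ∧
          q y = 2 ^ (b : ℕ) := by
        intro b
        obtain ⟨y, h1, h2, h3⟩ := exists_q_pow (a' + 1) b
        have hble : 2 ^ ((b : ℕ) + 1) ≤ 2 ^ c := Nat.pow_le_pow_right (by norm_num) b.isLt
        have ha'1 : 1 ≤ a' := (hSYb ha'S).1
        exact ⟨y, ha'I y (by omega) (by omega), ha'I (y + 1) (by omega) (by omega), by omega,
          ha'I (y - 1) (by omega) (by omega), h3⟩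
      choose xf hxS hxq using hx
      choose yf hyS hyS1 hy2 hySm hyq using hy
      refine ⟨fun b => ⟨xf b, hSXb (hxS b)⟩, fun b => hSXv (hxS b) _, ?_⟩
      intro s t hst
      refine ⟨⟨yf s, hSYb (hyS s)⟩, hSYv (hyS s) _, ?_⟩
      have hAdj : Dadj (xf s) (yf s) := by
        refine ⟨fun h => hdisj (hxS s) (h ▸ hyS s), Or.inr (Or.inr ?_)⟩
        rw [hxq s, hyq s]
      have hNot : ¬ Dadj (xf t) (yf s) := by
        apply not_Dadj
        · intro h
          have h2 := hySm s
          rw [show yf s - 1 = xf t by omega] at h2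
          exact hdisj (hxS t) h2
        · intro h
          have h2 := hyS1 s
          rw [h] at h2
          exact hdisj (hxS t) h2
        · rw [hxq t, hyq s]
          intro h
          exact hst (Fin.ext (Nat.pow_right_injective (le_refl 2) h).symm)
      intro hiff
      exact hNot (hiff.mp hAdj)
    · -- Case B2 : complement has no long run, many boundary pairs (x = y+1)
      push_neg at hIY
      have hno : ∀ a ∈ SY, ∃ i, a ≤ i ∧ i < a + (2 ^ c + 2) ∧ i ∉ SY := by
        intro a ha
        obtain ⟨i, h1, h2, h3⟩ := hIY a ha
        exact ⟨i, h1, h2, h3⟩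
      have hcount := rb_count SY (2 ^ c + 2) (by have := Nat.one_le_two_pow (n := c); omega) hno
      set RB := SY.filter (fun x => x + 1 ∉ SY) with hRBdef
      have hRBcard : 2 * c + 1 ≤ RB.card := by
        by_contra hcon
        push_neg at hcon
        have h1 : SY.card ≤ (2 ^ c + 2) * (2 * c) :=
          le_trans hcount (Nat.mul_le_mul_left _ (by omega))
        have := arith2 c hc
        omega
      have hRB'card : 2 * c ≤ (RB.erase n).card := by
        by_cases hn : n ∈ RB
        · rw [Finset.card_erase_of_mem hn]; omega
        · rw [Finset.erase_eq_of_notMem hn]; omega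
      obtain ⟨T, hTsub, hTcard, hTpar⟩ :
          ∃ T : Finset ℕ, T ⊆ RB.erase n ∧ c ≤ T.card ∧
            ∀ x ∈ T, ∀ y ∈ T, x % 2 = y % 2 := by
        have hsplit := Finset.card_filter_add_card_filter_not
          (s := RB.erase n) (p := fun x => x % 2 = 0)
        rcases le_or_gt c (((RB.erase n).filter (fun x => x % 2 = 0)).card) with h | h
        · refine ⟨_, Finset.filter_subset _ _, h, ?_⟩
          intro x hx y hy
          have hx' := (Finset.mem_filter.mp hx).2
          have hy' := (Finset.mem_filter.mp hy).2
          omega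
        · refine ⟨(RB.erase n).filter (fun x => ¬ x % 2 = 0), Finset.filter_subset _ _,
            by omega, ?_⟩
          intro x hx y hy
          have hx' := (Finset.mem_filter.mp hx).2
          have hy' := (Finset.mem_filter.mp hy).2
          omega
      obtain ⟨T', hT'sub, hT'card⟩ := Finset.exists_subset_card_eq hTcard
      have hTel : ∀ x ∈ T', x ∈ SY ∧ x + 1 ∈ SX ∧ 1 ≤ x ∧ x + 1 ≤ n := by
        intro x hx
        have hx1 := hTsub (hT'sub hx)
        have hxn : x ≠ n := (Finset.mem_erase.mp hx1).1
        have hx2 := Finset.mem_filter.mp (Finset.mem_erase.mp hx1).2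
        have hb := hSYb hx2.1
        exact ⟨hx2.1, hcoverX (by omega) (by omega) hx2.2, by omega, by omega⟩
      let ef := T'.orderIsoOfFin hT'card
      refine ⟨fun i => ⟨(ef i : ℕ) + 1, by
          obtain ⟨-, -, h3, h4⟩ := hTel _ (ef i).2; omega⟩,
        fun i => hSXv (hTel _ (ef i).2).2.1 _, ?_⟩
      intro s t hst
      obtain ⟨hs1, hs2, hs3, hs4⟩ := hTel _ (ef s).2
      obtain ⟨ht1, ht2, ht3, ht4⟩ := hTel _ (ef t).2
      set ys := (ef s : ℕ) with hysdef
      set yt := (ef t : ℕ) with hytdef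
      have hne : ys ≠ yt := by
        intro h
        exact hst (ef.toEquiv.injective (Subtype.ext h))
      have hpar : ys % 2 = yt % 2 :=
        hTpar _ (hT'sub (ef s).2) _ (hT'sub (ef t).2)
      by_cases hcase : ys = yt + 2
      · refine ⟨⟨yt, by omega⟩, hSYv ht1 _, ?_⟩
        have hAdj : Dadj (yt + 1) yt := ⟨by omega, Or.inr (Or.inl rfl)⟩
        have hNot : ¬ Dadj (ys + 1) yt :=
          not_Dadj (by omega) (by omega) (q_ne_parity (by omega) (by omega) (by omega))
        intro hiff
        exact hNot (hiff.mpr hAdj)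
      · refine ⟨⟨ys, by omega⟩, hSYv hs1 _, ?_⟩
        have hAdj : Dadj (ys + 1) ys := ⟨by omega, Or.inr (Or.inl rfl)⟩
        have hNot : ¬ Dadj (yt + 1) ys :=
          not_Dadj (by omega) (by omega) (q_ne_parity (by omega) (by omega) (by omega))
        intro hiff
        exact hNot (hiff.mp hAdj)
  · -- Case B1 : `X` has no long run, many boundary pairs (y = x+1)
    push_neg at hIX
    have hno : ∀ a ∈ SX, ∃ i, a ≤ i ∧ i < a + 2 ^ c ∧ i ∉ SX := by
      intro a ha
      obtain ⟨i, h1, h2, h3⟩ := hIX a ha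
      exact ⟨i, h1, h2, h3⟩
    have hcount := rb_count SX (2 ^ c) (Nat.one_le_two_pow) hno
    set RB := SX.filter (fun x => x + 1 ∉ SX) with hRBdef
    have hRBcard : 2 * c + 1 ≤ RB.card := by
      by_contra hcon
      push_neg at hcon
      have h1 : SX.card ≤ 2 ^ c * (2 * c) :=
        le_trans hcount (Nat.mul_le_mul_left _ (by omega))
      have := arith1 c hc
      omega
    have hRB'card : 2 * c ≤ (RB.erase n).card := by
      by_cases hn : n ∈ RB
      · rw [Finset.card_erase_of_mem hn]; omega
      · rw [Finset.erase_eq_of_notMem hn]; omega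
    obtain ⟨T, hTsub, hTcard, hTpar⟩ :
        ∃ T : Finset ℕ, T ⊆ RB.erase n ∧ c ≤ T.card ∧
          ∀ x ∈ T, ∀ y ∈ T, x % 2 = y % 2 := by
      have hsplit := Finset.card_filter_add_card_filter_not
        (s := RB.erase n) (p := fun x => x % 2 = 0)
      rcases le_or_gt c (((RB.erase n).filter (fun x => x % 2 = 0)).card) with h | h
      · refine ⟨_, Finset.filter_subset _ _, h, ?_⟩
        intro x hx y hy
        have hx' := (Finset.mem_filter.mp hx).2
        have hy' := (Finset.mem_filter.mp hy).2
        omega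
      · refine ⟨(RB.erase n).filter (fun x => ¬ x % 2 = 0), Finset.filter_subset _ _,
          by omega, ?_⟩
        intro x hx y hy
        have hx' := (Finset.mem_filter.mp hx).2
        have hy' := (Finset.mem_filter.mp hy).2
        omega
    obtain ⟨T', hT'sub, hT'card⟩ := Finset.exists_subset_card_eq hTcard
    have hTel : ∀ x ∈ T', x ∈ SX ∧ x + 1 ∈ SY ∧ 1 ≤ x ∧ x + 1 ≤ n := by
      intro x hx
      have hx1 := hTsub (hT'sub hx)
      have hxn : x ≠ n := (Finset.mem_erase.mp hx1).1
      have hx2 := Finset.mem_filter.mp (Finset.mem_erase.mp hx1).2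
      have hb := hSXb hx2.1
      exact ⟨hx2.1, hcoverY (by omega) (by omega) hx2.2, by omega, by omega⟩
    let ef := T'.orderIsoOfFin hT'card
    refine ⟨fun i => ⟨(ef i : ℕ), by
        obtain ⟨h1, -, h3, h4⟩ := hTel _ (ef i).2; omega⟩,
      fun i => hSXv (hTel _ (ef i).2).1 _, ?_⟩
    intro s t hst
    obtain ⟨hs1, hs2, hs3, hs4⟩ := hTel _ (ef s).2
    obtain ⟨ht1, ht2, ht3, ht4⟩ := hTel _ (ef t).2
    set xs := (ef s : ℕ) with hxsdef
    set xt := (ef t : ℕ) with hxtdef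
    have hne : xs ≠ xt := by
      intro h
      exact hst (ef.toEquiv.injective (Subtype.ext h))
    have hpar : xs % 2 = xt % 2 :=
      hTpar _ (hT'sub (ef s).2) _ (hT'sub (ef t).2)
    by_cases hcase : xt = xs + 2
    · refine ⟨⟨xt + 1, by omega⟩, hSYv ht2 _, ?_⟩
      have hAdj : Dadj xt (xt + 1) := ⟨by omega, Or.inl rfl⟩
      have hNot : ¬ Dadj xs (xt + 1) :=
        not_Dadj (by omega) (by omega) (q_ne_parity (by omega) (by omega) (by omega))
      intro hiff
      exact hNot (hiff.mpr hAdj)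
    · refine ⟨⟨xs + 1, by omega⟩, hSYv hs2 _, ?_⟩
      have hAdj : Dadj xs (xs + 1) := ⟨by omega, Or.inl rfl⟩
      have hNot : ¬ Dadj xt (xs + 1) :=
        not_Dadj (by omega) (by omega) (q_ne_parity (by omega) (by omega) (by omega))
      intro hiff
      exact hNot (hiff.mp hAdj)
/-! ### Upper bound: every `D n` is buildable -/

lemma bounded_mono {k k' : ℕ} (h : k ≤ k') : ∀ {e : CWExpr}, e.bounded k → e.bounded k'
  | .single _, hb => lt_of_lt_of_le hb h
  | .union _ _, hb => ⟨bounded_mono h hb.1, bounded_mono h hb.2⟩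
  | .join _ _ _, hb => ⟨lt_of_lt_of_le hb.1 h, lt_of_lt_of_le hb.2.1 h, bounded_mono h hb.2.2⟩
  | .relabel _ _ _, hb => ⟨lt_of_lt_of_le hb.1 h, lt_of_lt_of_le hb.2.1 h, bounded_mono h hb.2.2⟩

lemma joins_spec (t : ℕ) (l : List ℕ) (e₀ : CWExpr) :
    ∃ e : CWExpr, ∃ φ : e.evalV ≃ e₀.evalV,
      (∀ k, e₀.bounded k → (∀ s ∈ l, s < k) → t < k → e.bounded k) ∧
      (∀ x, e.evalLab x = e₀.evalLab (φ x)) ∧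
      (∀ x y, e.evalG.Adj x y ↔ (e₀.evalG.Adj (φ x) (φ y) ∨ (φ x ≠ φ y ∧
        ((e₀.evalLab (φ x) ∈ l ∧ e₀.evalLab (φ y) = t) ∨
         (e₀.evalLab (φ y) ∈ l ∧ e₀.evalLab (φ x) = t))))) := by
  induction l with
  | nil =>
    refine ⟨e₀, Equiv.refl _, fun k hb _ _ => hb, fun x => rfl, ?_⟩
    intro x y
    simp
  | cons s l ih =>
    obtain ⟨e₁, φ₁, hb₁, hlab₁, hadj₁⟩ := ih
    refine ⟨.join s t e₁, φ₁, ?_, hlab₁, ?_⟩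
    · intro k hb hl ht
      exact ⟨hl s (List.mem_cons_self), ht,
        hb₁ k hb (fun x hx => hl x (List.mem_cons_of_mem _ hx)) ht⟩
    · intro (x : e₁.evalV) (y : e₁.evalV)
      have hxy : (x = y) ↔ (φ₁ x = φ₁ y) := (Equiv.apply_eq_iff_eq φ₁).symm
      refine adj_join.trans ?_
      simp only [hadj₁, hlab₁, List.mem_cons, ne_eq, hxy]
      tauto

lemma buildFin : ∀ (N : ℕ) (G : SimpleGraph (Fin (N + 1))),
    ∃ e : CWExpr, e.bounded (N + 1) ∧ ∃ φ : G ≃g e.evalG, ∀ v, e.evalLab (φ v) = (v : ℕ) := by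
  intro N
  induction N with
  | zero =>
    intro G
    refine ⟨.single 0, Nat.zero_lt_one, ⟨⟨Equiv.equivPUnit (Fin 1), ?_⟩, ?_⟩⟩
    · intro a b
      constructor
      · rintro ⟨hne, -⟩
        exact absurd (Subsingleton.elim (α := PUnit.{1}) _ _) hne
      · intro h
        have hab : a = b := Fin.ext (by have := a.isLt; have := b.isLt; omega)
        rw [hab] at h
        exact absurd h G.irrefl
    · intro v
      have := v.isLt
      show (0 : ℕ) = _
      omega
  | succ N ih =>
    intro G
    classical
    obtain ⟨e', hb', φ', hlab'⟩ := ih (SimpleGraph.comap (Fin.castSucc) G)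
    set base : CWExpr := .union e' (.single (N + 1)) with hbasedef
    let nb : Finset (Fin (N + 1)) :=
      Finset.univ.filter (fun s => G.Adj s.castSucc (Fin.last (N + 1)))
    let l : List ℕ := nb.toList.map Fin.val
    have hmeml : ∀ u : Fin (N + 1), ((u : ℕ) ∈ l ↔ G.Adj u.castSucc (Fin.last (N + 1))) := by
      intro u
      simp only [l, nb, List.mem_map, Finset.mem_toList, Finset.mem_filter, Finset.mem_univ,
        true_and]
      constructor
      · rintro ⟨s, hs, heq⟩
        rwa [show s = u from Fin.ext heq] at hs
      · intro h
        exact ⟨u, h, rfl⟩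
    have hl_lt : ∀ s ∈ l, s < N + 2 := by
      intro s hs
      simp only [l, List.mem_map] at hs
      obtain ⟨u, -, rfl⟩ := hs
      have := u.isLt
      omega
    obtain ⟨e, ψ, hbe, hlabe, hadje⟩ := joins_spec (N + 1) l base
    let σ : Fin (N + 2) ≃ base.evalV :=
      (finSumFinEquiv (m := N + 1) (n := 1)).symm.trans
        (Equiv.sumCongr φ'.toEquiv (Equiv.equivPUnit (Fin 1)))
    let Φ : Fin (N + 2) ≃ e.evalV := σ.trans ψ.symm
    have hψΦ : ∀ v, ψ (Φ v) = σ v := fun v => ψ.apply_symm_apply (σ v)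
    have hσc : ∀ u : Fin (N + 1), σ u.castSucc = Sum.inl (φ' u) := by
      intro u
      show (Equiv.sumCongr φ'.toEquiv (Equiv.equivPUnit (Fin 1)))
        (finSumFinEquiv.symm u.castSucc) = _
      have h1 : finSumFinEquiv.symm u.castSucc = Sum.inl u := by
        rw [Equiv.symm_apply_eq]
        exact finSumFinEquiv_apply_left u
      rw [h1]
      rfl
    have hσl : σ (Fin.last (N + 1)) = Sum.inr PUnit.unit := by
      show (Equiv.sumCongr φ'.toEquiv (Equiv.equivPUnit (Fin 1)))
        (finSumFinEquiv.symm (Fin.last (N + 1))) = _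
      have h1 : finSumFinEquiv.symm (Fin.last (N + 1)) = Sum.inr (0 : Fin 1) := by
        rw [Equiv.symm_apply_eq, finSumFinEquiv_apply_right]
        ext
        simp [Fin.natAdd, Fin.last]
      rw [h1]
      rfl
    have hlabbase : ∀ u : Fin (N + 1), base.evalLab (Sum.inl (φ' u)) = (u : ℕ) :=
      fun u => hlab' u
    have hlabinr : base.evalLab (Sum.inr PUnit.unit) = N + 1 := rfl
    refine ⟨e, hbe (N + 2) ⟨bounded_mono (show N + 1 ≤ N + 2 by omega) hb', show N + 1 < N + 2 by omega⟩ hl_lt (by omega),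
      ⟨⟨Φ, ?_⟩, ?_⟩⟩
    · intro a b
      rw [hadje, hψΦ, hψΦ]
      rcases Fin.eq_castSucc_or_eq_last a with ⟨u, rfl⟩ | rfl
      · rcases Fin.eq_castSucc_or_eq_last b with ⟨u', rfl⟩ | rfl
        · -- both old vertices
          rw [hσc, hσc]
          constructor
          · rintro (h | ⟨-, (⟨-, h2⟩ | ⟨-, h2⟩)⟩)
            · exact φ'.map_rel_iff.mp (adj_union_inl.mp h)
            · rw [hlabbase] at h2
              have := u'.isLt
              omega
            · rw [hlabbase] at h2
              have := u.isLt
              omega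
          · intro h
            exact Or.inl (adj_union_inl.mpr (φ'.map_rel_iff.mpr h))
        · -- old vertex vs new vertex
          rw [hσc, hσl]
          constructor
          · rintro (h | ⟨-, (⟨hm, -⟩ | ⟨-, h2⟩)⟩)
            · exact absurd h adj_union_cross
            · rw [hlabbase] at hm
              exact (hmeml u).mp hm
            · rw [hlabbase] at h2
              have := u.isLt
              omega
          · intro h
            refine Or.inr ⟨Sum.inl_ne_inr, Or.inl ⟨by rw [hlabbase]; exact (hmeml u).mpr h, hlabinr⟩⟩
      · rcases Fin.eq_castSucc_or_eq_last b with ⟨u', rfl⟩ | rfl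
        · -- new vertex vs old vertex
          rw [hσl, hσc]
          constructor
          · rintro (h | ⟨-, (⟨-, h2⟩ | ⟨hm, -⟩)⟩)
            · exfalso
              have : base.evalG.Adj (Sum.inl (φ' u')) (Sum.inr PUnit.unit) :=
                base.evalG.adj_symm h
              exact absurd this adj_union_cross
            · rw [hlabbase] at h2
              have := u'.isLt
              omega
            · rw [hlabbase] at hm
              exact G.adj_symm ((hmeml u').mp hm)
          · intro h
            refine Or.inr ⟨Sum.inr_ne_inl, Or.inr ⟨by rw [hlabbase]; exact (hmeml u').mpr (G.adj_symm h), hlabinr⟩⟩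
        · -- both the new vertex
          rw [hσl]
          constructor
          · rintro (h | ⟨hne, -⟩)
            · exact absurd h base.evalG.irrefl
            · exact absurd rfl hne
          · intro h
            exact absurd h G.irrefl
    · intro v
      show e.evalLab (Φ v) = (v : ℕ)
      rw [hlabe, hψΦ]
      rcases Fin.eq_castSucc_or_eq_last v with ⟨u, rfl⟩ | rfl
      · rw [hσc, hlabbase]
        rfl
      · rw [hσl]
        rfl

lemma buildD (n : ℕ) (hn : 1 ≤ n) :
    ∃ k, ∃ e : CWExpr, e.bounded k ∧ Nonempty (D n ≃g e.evalG) := by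
  obtain ⟨N, rfl⟩ : ∃ N, n = N + 1 := ⟨n - 1, by omega⟩
  let eqv : Vtx (N + 1) ≃ Fin (N + 1) :=
    { toFun := fun v => ⟨v.1 - 1, by obtain ⟨h1, h2⟩ := v.2; omega⟩
      invFun := fun i => ⟨i.1 + 1, by have := i.isLt; omega⟩
      left_inv := fun v => by
        obtain ⟨h1, h2⟩ := v.2
        exact Subtype.ext (by simp; omega)
      right_inv := fun i => by
        exact Fin.ext (by simp) }
  let Gf : SimpleGraph (Fin (N + 1)) := SimpleGraph.comap (eqv.symm) (D (N + 1))
  have iso1 : D (N + 1) ≃g Gf :=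
    ⟨eqv, by
      intro a b
      show (D (N + 1)).Adj (eqv.symm (eqv a)) (eqv.symm (eqv b)) ↔ _
      rw [Equiv.symm_apply_apply, Equiv.symm_apply_apply]⟩
  obtain ⟨e, hb, φ, -⟩ := buildFin N Gf
  exact ⟨N + 1, e, hb, ⟨iso1.trans φ⟩⟩
/-! ### Main theorem -/

lemma card_Vtx (n : ℕ) : Nat.card (Vtx n) = n := by
  have eqv : Vtx n ≃ Fin n :=
    { toFun := fun v => ⟨v.1 - 1, by obtain ⟨h1, h2⟩ := v.2; omega⟩
      invFun := fun i => ⟨i.1 + 1, by have := i.isLt; omega⟩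
      left_inv := fun v => by
        obtain ⟨h1, h2⟩ := v.2
        exact Subtype.ext (by simp; omega)
      right_inv := fun i => Fin.ext (by simp) }
  rw [Nat.card_congr eqv, Nat.card_eq_fintype_card, Fintype.card_fin]

theorem stmt12 :
    (∀ n c : ℕ, 3 * ((2 * c + 1) * (2 ^ (c + 1) - 1) + 1) ≤ n → c ≤ cwd (D n)) ∧
    (∀ c : ℕ, ∃ n : ℕ, c ≤ cwd (D n)) := by
  have main : ∀ n c : ℕ, 3 * ((2 * c + 1) * (2 ^ (c + 1) - 1) + 1) ≤ n → c ≤ cwd (D n) := by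
    intro n c h
    rcases Nat.eq_zero_or_pos c with rfl | hc
    · exact Nat.zero_le _
    have h2p : 2 ≤ 2 ^ (c + 1) := by
      have : (2 : ℕ) ^ 1 ≤ 2 ^ (c + 1) := Nat.pow_le_pow_right (by norm_num) (by omega)
      simpa using this
    have hm1 : 1 ≤ (2 * c + 1) * (2 ^ (c + 1) - 1) :=
      Nat.mul_pos (by omega) (by omega)
    set m := (2 * c + 1) * (2 ^ (c + 1) - 1) with hmdef
    have key : ∀ kk ∈ {k | ∃ e : CWExpr, e.bounded k ∧ Nonempty (D n ≃g e.evalG)}, c ≤ kk := by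
      rintro k ⟨e, hbk, ⟨ψ⟩⟩
      have hcard : Nat.card e.evalV = n := by
        rw [← card_Vtx n]
        exact Nat.card_congr ψ.toEquiv.symm
      obtain ⟨X, g, p1, p2, p3, p4, p5⟩ := lemA hm1 e hbk (by omega)
      set X' : Set (Vtx n) := (⇑ψ.toEquiv) ⁻¹' X with hX'def
      have hX'eq : X' = ⇑ψ.toEquiv.symm '' X := by
        ext v
        constructor
        · intro hv
          exact ⟨ψ.toEquiv v, hv, ψ.toEquiv.symm_apply_apply v⟩
        · rintro ⟨x, hx, rfl⟩
          show ψ.toEquiv (ψ.toEquiv.symm x) ∈ X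
          rw [Equiv.apply_symm_apply]
          exact hx
      have hX'card : X'.ncard = X.ncard := by
        rw [hX'eq, Set.ncard_image_of_injective _ (Equiv.injective _)]
      have hcompl0 := Set.ncard_add_ncard_compl X'
      rw [card_Vtx] at hcompl0
      obtain ⟨f, hfX, hfpair⟩ := lemB hc X' (by omega) (by omega)
      have hinj : Function.Injective (fun i : Fin c => g (ψ.toEquiv (f i))) := by
        intro s t heq
        by_contra hne
        obtain ⟨w, hw, hiff⟩ := hfpair s t hne
        apply hiff
        rw [← ψ.map_rel_iff, ← ψ.map_rel_iff]
        exact p5 _ (hfX s) _ (hfX t) _ hw heq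
      have hsub : (Finset.univ.image (fun i : Fin c => g (ψ.toEquiv (f i)))) ⊆
          Finset.range k := by
        intro a ha
        obtain ⟨i, -, rfl⟩ := Finset.mem_image.mp ha
        exact Finset.mem_range.mpr (p3 _ (hfX i))
      have hcardim : (Finset.univ.image (fun i : Fin c => g (ψ.toEquiv (f i)))).card = c := by
        rw [Finset.card_image_of_injective _ hinj, Finset.card_univ, Fintype.card_fin]
      have hle := Finset.card_le_card hsub
      rw [hcardim, Finset.card_range] at hle
      exact hle
    have hne : {k | ∃ e : CWExpr, e.bounded k ∧ Nonempty (D n ≃g e.evalG)}.Nonempty := by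
      obtain ⟨k, e, hb, hiso⟩ := buildD n (by omega)
      exact ⟨k, e, hb, hiso⟩
    exact key _ (Nat.sInf_mem hne)
  exact ⟨main, fun c => ⟨3 * ((2 * c + 1) * (2 ^ (c + 1) - 1) + 1), main _ c le_rfl⟩⟩
end

section
/- For every vertex subset U of D_n with n/3 ≤ |U| ≤ 2n/3, if n ≥ 3((2c+1)(2^{c+1} − 1) + 1), then μ_{D_n}(U) ≥ c. -/
namespace Stmt13


/-- largest odd number ≤ t (for t ≥ 1) -/
def od (t : ℕ) : ℕ := if t % 2 = 1 then t else t - 1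

/-- largest number of 2-adic valuation exactly a that is ≤ w (for w ≥ 2^a) -/
def ma (a w : ℕ) : ℕ := 2 ^ a * od (w / 2 ^ a)

lemma val_odd {t : ℕ} (h : t % 2 = 1) : padicValNat 2 t = 0 := by
  rw [padicValNat.eq_zero_iff]
  right; right; omega

lemma val_mul_pow {a t : ℕ} (h : t % 2 = 1) : padicValNat 2 (2 ^ a * t) = a := by
  have h2 : Fact (Nat.Prime 2) := ⟨Nat.prime_two⟩
  rw [padicValNat.mul (by positivity) (by omega), padicValNat.prime_pow, val_odd h, add_zero]

lemma val_consec' {v : ℕ} (h : 1 ≤ v) : padicValNat 2 v ≠ padicValNat 2 (v + 1) := by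
  have h2 : Fact (Nat.Prime 2) := ⟨Nat.prime_two⟩
  rcases Nat.even_or_odd v with he | ho
  · have hv : padicValNat 2 (v+1) = 0 := by
      rw [padicValNat.eq_zero_iff]; right; right
      rcases he with ⟨k, hk⟩; omega
    have : 1 ≤ padicValNat 2 v := by
      rcases he with ⟨k, hk⟩
      have : (2:ℕ) ∣ v := ⟨k, by omega⟩
      have := (padicValNat.eq_zero_iff (p := 2) (n := v)).not
      by_contra hcon
      have h0 : padicValNat 2 v = 0 := by omega
      rw [padicValNat.eq_zero_iff] at h0
      rcases h0 with h | h | h <;> simp_all <;> omega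
    omega
  · have hv : padicValNat 2 v = 0 := val_odd (Nat.odd_iff.mp ho)
    have : (2:ℕ) ∣ v + 1 := by rcases ho with ⟨k, hk⟩; exact ⟨k+1, by omega⟩
    by_contra hcon
    have h0 : padicValNat 2 (v+1) = 0 := by omega
    rw [padicValNat.eq_zero_iff] at h0
    rcases h0 with h | h | h <;> simp_all

lemma ma_props {a w : ℕ} (h : 2 ^ a ≤ w) :
    ma a w ≤ w ∧ w < ma a w + 2 ^ (a + 1) ∧ padicValNat 2 (ma a w) = a ∧ 1 ≤ ma a w := by
  have hp : 0 < 2 ^ a := Nat.pow_pos (by norm_num)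
  set t := w / 2 ^ a with htdef
  have ht1 : 1 ≤ t := (Nat.one_le_div_iff hp).mpr h
  have hdm := Nat.div_add_mod w (2 ^ a)
  have hmod' : w % 2 ^ a < 2 ^ a := Nat.mod_lt w hp
  have hw : 2 ^ a * t ≤ w := by rw [htdef]; omega
  have hw2 : w < 2 ^ a * (t + 1) := by rw [Nat.mul_add, htdef]; omega
  rcases Nat.even_or_odd t with he | ho
  · have hmod : t % 2 = 0 := Nat.even_iff.mp he
    have ht2 : 2 ≤ t := by omega
    have hod : od t = t - 1 := by unfold od; simp [hmod]
    have hodd : (t - 1) % 2 = 1 := by omega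
    refine ⟨?_, ?_, ?_, ?_⟩
    · unfold ma; rw [← htdef, hod]
      calc 2 ^ a * (t - 1) ≤ 2 ^ a * t := by
            exact Nat.mul_le_mul_left _ (by omega)
        _ ≤ w := hw
    · unfold ma; rw [← htdef, hod, pow_succ]
      have : 2 ^ a * (t - 1) + 2 ^ a * 2 = 2 ^ a * (t + 1) := by
        have : t - 1 + 2 = t + 1 := by omega
        rw [← Nat.mul_add, this]
      omega
    · unfold ma; rw [← htdef, hod]; exact val_mul_pow hodd
    · unfold ma; rw [← htdef, hod]
      have : 1 ≤ t - 1 := by omega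
      calc 1 ≤ 2 ^ a * 1 := by omega
        _ ≤ 2 ^ a * (t - 1) := Nat.mul_le_mul_left _ this
  · have hmod : t % 2 = 1 := Nat.odd_iff.mp ho
    have hod : od t = t := by unfold od; simp [hmod]
    refine ⟨?_, ?_, ?_, ?_⟩
    · unfold ma; rw [← htdef, hod]; exact hw
    · unfold ma; rw [← htdef, hod, pow_succ]
      have : 2 ^ a * t + 2 ^ a * 2 ≥ 2 ^ a * (t + 1) := by
        rw [← Nat.mul_add]; exact Nat.mul_le_mul_left _ (by omega)
      omega
    · unfold ma; rw [← htdef, hod]; exact val_mul_pow hmod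
    · unfold ma; rw [← htdef, hod]
      calc 1 ≤ 2 ^ a * 1 := by omega
        _ ≤ 2 ^ a * t := Nat.mul_le_mul_left _ ht1

lemma ma_eq {a m x : ℕ} (hm : padicValNat 2 m = a) (hm0 : m ≠ 0)
    (h1 : m ≤ x) (h2 : x < m + 2 ^ (a + 1)) : ma a x = m := by
  have h2f : Fact (Nat.Prime 2) := ⟨Nat.prime_two⟩
  have hp : 0 < 2 ^ a := Nat.pow_pos (by norm_num)
  have hdvd : 2 ^ a ∣ m := hm ▸ pow_padicValNat_dvd
  obtain ⟨k, hk⟩ := hdvd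
  have hkodd : k % 2 = 1 := by
    rcases Nat.even_or_odd k with he | ho
    · exfalso
      rcases he with ⟨j, hj⟩
      have : padicValNat 2 m = a + 1 + padicValNat 2 j := by
        have hj0 : j ≠ 0 := by
          rintro rfl
          exact hm0 (by rw [hk, hj]; ring)
        rw [hk, hj, show 2 ^ a * (j + j) = 2 ^ (a+1) * j by ring,
          padicValNat.mul (by positivity) hj0, padicValNat.prime_pow]
      omega
    · exact Nat.odd_iff.mp ho
  have hk1 : 1 ≤ k := by omega
  have hx : 2 ^ a ≤ x := by
    have h' : 2 ^ a * 1 ≤ 2 ^ a * k := Nat.mul_le_mul_left _ hk1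
    rw [mul_one] at h'
    omega
  set t := x / 2 ^ a with htdef
  have hdm := Nat.div_add_mod x (2 ^ a)
  rw [← htdef] at hdm
  have hmod' : x % 2 ^ a < 2 ^ a := Nat.mod_lt x hp
  have hw : 2 ^ a * t ≤ x := by omega
  have hw2 : x < 2 ^ a * (t + 1) := by rw [Nat.mul_add, mul_one]; omega
  -- k ≤ t
  have hkt : k ≤ t := by
    by_contra hcon
    have h3 : t + 1 ≤ k := by omega
    have h4 : 2 ^ a * (t + 1) ≤ 2 ^ a * k := Nat.mul_le_mul_left _ h3
    rw [Nat.mul_add, mul_one] at h4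
    omega
  -- t ≤ k + 1
  have htk : t ≤ k + 1 := by
    by_contra hcon
    have h3 : k + 2 ≤ t := by omega
    have h4 : 2 ^ a * (k + 2) ≤ 2 ^ a * t := Nat.mul_le_mul_left _ h3
    rw [Nat.mul_add] at h4
    rw [hk, pow_succ] at h2
    omega
  unfold ma
  rw [← htdef]
  rcases Nat.eq_or_lt_of_le hkt with heq | hlt
  · rw [← heq]
    have hodk : od k = k := by unfold od; rw [if_pos hkodd]
    rw [hodk, ← hk]
  · have ht : t = k + 1 := by omega
    have hodk : od (k+1) = k := by
      unfold od
      rw [if_neg (by omega)]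
      omega
    rw [ht, hodk, ← hk]

instance vfin (n : ℕ) : Finite (Vtx n) := by
  apply Finite.of_injective (fun v : Vtx n => (⟨v.1, by omega⟩ : Fin (n+1)))
  intro a b hab
  apply Subtype.ext
  simpa [Fin.ext_iff] using hab

lemma q_eq_iff {i j : ℕ} : q i = q j ↔ padicValNat 2 i = padicValNat 2 j := by
  constructor
  · intro h; exact Nat.pow_right_injective (le_refl 2) h
  · intro h; unfold q; rw [h]

section Main

variable {n : ℕ} {U : Set (Vtx n)}

/-- external neighbourhood -/
def nb (U : Set (Vtx n)) (x : Vtx n) : Set (Vtx n) := {y | y ∉ U ∧ (D n).Adj x y}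

lemma adj_of_val_eq {x z : Vtx n} (hne : x.1 ≠ z.1)
    (h : padicValNat 2 x.1 = padicValNat 2 z.1) : (D n).Adj x z :=
  ⟨hne, Or.inr (Or.inr (q_eq_iff.mpr h))⟩

/-- Separation lemma A: helper with a single witness z. -/
lemma sep_helper {x y z : Vtx n} (hx : x ∈ U) (hy : y ∈ U) (hz : z ∉ U)
    (hvz : padicValNat 2 z.1 = padicValNat 2 x.1)
    (hvxy : padicValNat 2 x.1 ≠ padicValNat 2 y.1)
    (h1 : z.1 ≠ y.1 + 1) (h2 : z.1 + 1 ≠ y.1) : nb U x ≠ nb U y := by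
  intro heq
  have hzx : z ∈ nb U x := by
    refine ⟨hz, adj_of_val_eq ?_ hvz.symm⟩
    intro hh
    exact hz (by rwa [Subtype.ext hh] at hx)
  rw [heq] at hzx
  obtain ⟨-, hne, hadj⟩ := hzx
  rcases hadj with h | h | h
  · exact h1 (by omega)
  · exact h2 (by omega)
  · exact hvxy (hvz ▸ (q_eq_iff.mp h).symm ▸ rfl)

/-- Separation lemma A. -/
lemma sep {x y : Vtx n} (hx : x ∈ U) (hy : y ∈ U)
    (hvxy : padicValNat 2 x.1 ≠ padicValNat 2 y.1)
    (z1 z2 z3 : Vtx n) (hz1 : z1 ∉ U) (hz2 : z2 ∉ U) (hz3 : z3 ∉ U)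
    (hv1 : padicValNat 2 z1.1 = padicValNat 2 x.1)
    (hv2 : padicValNat 2 z2.1 = padicValNat 2 x.1)
    (hv3 : padicValNat 2 z3.1 = padicValNat 2 x.1)
    (h12 : z1 ≠ z2) (h13 : z1 ≠ z3) (h23 : z2 ≠ z3) : nb U x ≠ nb U y := by
  have d12 : z1.1 ≠ z2.1 := fun h => h12 (Subtype.ext h)
  have d13 : z1.1 ≠ z3.1 := fun h => h13 (Subtype.ext h)
  have d23 : z2.1 ≠ z3.1 := fun h => h23 (Subtype.ext h)
  have : (z1.1 ≠ y.1 + 1 ∧ z1.1 + 1 ≠ y.1) ∨ (z2.1 ≠ y.1 + 1 ∧ z2.1 + 1 ≠ y.1) ∨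
      (z3.1 ≠ y.1 + 1 ∧ z3.1 + 1 ≠ y.1) := by omega
  rcases this with ⟨a, b⟩ | ⟨a, b⟩ | ⟨a, b⟩
  · exact sep_helper hx hy hz1 hv1 hvxy a b
  · exact sep_helper hx hy hz2 hv2 hvxy a b
  · exact sep_helper hx hy hz3 hv3 hvxy a b

/-- Right-endpoint relation: if x < y are both right endpoints in the same class then
val x = val (y+1). -/
lemma endR {x y : Vtx n} (hx : x ∈ U) (hy : y ∈ U)
    (hyn : y.1 + 1 ≤ n) (hys : (⟨y.1 + 1, by omega⟩ : Vtx n) ∉ U)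
    (hlt : x.1 < y.1) (heq : nb U x = nb U y) :
    padicValNat 2 x.1 = padicValNat 2 (y.1 + 1) := by
  set z : Vtx n := ⟨y.1 + 1, by omega⟩ with hzdef
  have hzy : z ∈ nb U y := ⟨hys, by exact ⟨by simp [hzdef], Or.inl rfl⟩⟩
  rw [← heq] at hzy
  obtain ⟨-, hne, hadj⟩ := hzy
  rcases hadj with h | h | h
  · exfalso; simp [hzdef] at h; omega
  · exfalso; simp [hzdef] at h; omega
  · exact q_eq_iff.mp h

/-- Left-endpoint relation: if x < y are both left endpoints in the same class then
val y = val (x-1). -/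
lemma endL {x y : Vtx n} (hx : x ∈ U) (hy : y ∈ U)
    (hx2 : 2 ≤ x.1) (hxs : (⟨x.1 - 1, by omega⟩ : Vtx n) ∉ U)
    (hlt : x.1 < y.1) (heq : nb U x = nb U y) :
    padicValNat 2 y.1 = padicValNat 2 (x.1 - 1) := by
  set z : Vtx n := ⟨x.1 - 1, by omega⟩ with hzdef
  have hzx : z ∈ nb U x := ⟨hxs, by exact ⟨by simp [hzdef]; omega, Or.inr (Or.inl (by simp [hzdef]; omega))⟩⟩
  rw [heq] at hzx
  obtain ⟨-, hne, hadj⟩ := hzx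
  rcases hadj with h | h | h
  · exfalso; simp [hzdef] at h; omega
  · exfalso; simp [hzdef] at h; omega
  · exact (q_eq_iff.mp h)

open Classical in
noncomputable def UF (n : ℕ) (U : Set (Vtx n)) : Finset ℕ :=
  (Finset.Icc 1 n).filter (fun m => ∃ h : 1 ≤ m ∧ m ≤ n, (⟨m, h⟩ : Vtx n) ∈ U)

open Classical in
noncomputable def WF (n : ℕ) (U : Set (Vtx n)) : Finset ℕ :=
  (Finset.Icc 1 n).filter (fun m => ¬ ∃ h : 1 ≤ m ∧ m ≤ n, (⟨m, h⟩ : Vtx n) ∈ U)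

open Classical in
noncomputable def X (n : ℕ) (T : Finset ℕ) : Finset ℕ :=
  (Finset.Icc 1 n).filter (fun y => y ∉ T ∧ y + 1 ∈ T)

lemma mem_UF {m : ℕ} : m ∈ UF n U ↔ ∃ h : 1 ≤ m ∧ m ≤ n, (⟨m, h⟩ : Vtx n) ∈ U := by
  classical
  unfold UF
  simp only [Finset.mem_filter, Finset.mem_Icc]
  constructor
  · rintro ⟨-, h⟩; exact h
  · rintro ⟨h, hm⟩; exact ⟨h, h, hm⟩

lemma mem_WF {m : ℕ} : m ∈ WF n U ↔ (1 ≤ m ∧ m ≤ n) ∧ ∀ h : 1 ≤ m ∧ m ≤ n, (⟨m, h⟩ : Vtx n) ∉ U := by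
  classical
  unfold WF
  simp only [Finset.mem_filter, Finset.mem_Icc]
  constructor
  · rintro ⟨h1, h2⟩; exact ⟨h1, fun h hm => h2 ⟨h, hm⟩⟩
  · rintro ⟨h1, h2⟩; exact ⟨h1, fun ⟨h, hm⟩ => h2 h hm⟩

lemma UF_sub : UF n U ⊆ Finset.Icc 1 n := by
  intro m hm
  obtain ⟨h, -⟩ := mem_UF.mp hm
  exact Finset.mem_Icc.mpr h
lemma WF_sub : WF n U ⊆ Finset.Icc 1 n := by
  intro m hm
  obtain ⟨h, -⟩ := mem_WF.mp hm
  exact Finset.mem_Icc.mpr h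

lemma not_mem_WF {m : ℕ} (h1 : 1 ≤ m) (h2 : m ≤ n) (h : m ∉ WF n U) :
    (⟨m, ⟨h1, h2⟩⟩ : Vtx n) ∈ U := by
  by_contra hc
  exact h (mem_WF.mpr ⟨⟨h1, h2⟩, fun _ => hc⟩)

lemma not_mem_UF {m : ℕ} (h1 : 1 ≤ m) (h2 : m ≤ n) (h : m ∉ UF n U) :
    (⟨m, ⟨h1, h2⟩⟩ : Vtx n) ∉ U := by
  intro hc
  exact h (mem_UF.mpr ⟨⟨h1, h2⟩, hc⟩)

lemma crossing (T : Finset ℕ) (hTn : T ⊆ Finset.Icc 1 n) {m x : ℕ}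
    (hm1 : 1 ≤ m) (hmT : m ∉ T) (hx : x ∈ T) (hlt : m < x) :
    ∃ y, m ≤ y ∧ y < x ∧ y ∈ X n T := by
  classical
  set s := (Finset.Ico m x).filter (· ∉ T) with hsdef
  have hms : m ∈ s := by
    rw [hsdef]; simp only [Finset.mem_filter, Finset.mem_Ico]
    exact ⟨⟨le_refl m, hlt⟩, hmT⟩
  have hs : s.Nonempty := ⟨m, hms⟩
  set y := s.max' hs with hydef
  have hy : y ∈ s := by rw [hydef]; exact s.max'_mem hs
  rw [hsdef, Finset.mem_filter, Finset.mem_Ico] at hy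
  obtain ⟨⟨hy1, hy2⟩, hyT⟩ := hy
  have hxn : x ≤ n := (Finset.mem_Icc.mp (hTn hx)).2
  have hsucc : y + 1 ∈ T := by
    by_cases hc : y + 1 = x
    · rwa [hc]
    · by_contra hcc
      have : y + 1 ∈ s := by
        rw [hsdef]; simp only [Finset.mem_filter, Finset.mem_Ico]
        exact ⟨⟨by omega, by omega⟩, hcc⟩
      have := s.le_max' _ this
      rw [← hydef] at this
      omega
  refine ⟨y, hy1, hy2, ?_⟩
  unfold X
  simp only [Finset.mem_filter, Finset.mem_Icc]
  exact ⟨⟨by omega, by omega⟩, hyT, hsucc⟩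

lemma count_lemma (a : ℕ) (T : Finset ℕ) (hTn : T ⊆ Finset.Icc 1 n) :
    T.card ≤ 2 ^ (a + 1) * ((T.filter (fun v => padicValNat 2 v = a)).card + (X n T).card)
      + 2 ^ a := by
  classical
  set T1 := T.filter (fun v => v < 2 ^ a) with hT1
  set T2 := T.filter (fun v => ¬ v < 2 ^ a) with hT2
  have hc1 : T1.card ≤ 2 ^ a := by
    have : T1 ⊆ Finset.Ico 1 (2 ^ a) := by
      intro v hv
      rw [hT1, Finset.mem_filter] at hv
      have := Finset.mem_Icc.mp (hTn hv.1)
      rw [Finset.mem_Ico]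
      exact ⟨this.1, hv.2⟩
    calc T1.card ≤ (Finset.Ico 1 (2 ^ a)).card := Finset.card_le_card this
      _ = 2 ^ a - 1 := by rw [Nat.card_Ico]
      _ ≤ 2 ^ a := Nat.sub_le _ _
  have hc2 : T2.card ≤ 2 ^ (a + 1) * (T2.image (ma a)).card := by
    apply Finset.card_le_mul_card_image
    intro b hb
    rw [Finset.mem_image] at hb
    obtain ⟨w0, hw0, hw0b⟩ := hb
    rw [hT2, Finset.mem_filter] at hw0
    have hprops0 := ma_props (a := a) (w := w0) (by omega)
    have hsub : (T2.filter (fun w => ma a w = b)) ⊆ Finset.Ico b (b + 2 ^ (a + 1)) := by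
      intro w hw
      rw [Finset.mem_filter, hT2, Finset.mem_filter] at hw
      obtain ⟨⟨hwT, hwa⟩, hmab⟩ := hw
      have hprops := ma_props (a := a) (w := w) (by omega)
      rw [Finset.mem_Ico]
      rw [hmab] at hprops
      exact ⟨hprops.1, hprops.2.1⟩
    calc (T2.filter (fun w => ma a w = b)).card ≤ (Finset.Ico b (b + 2 ^ (a + 1))).card :=
        Finset.card_le_card hsub
      _ = 2 ^ (a + 1) := by rw [Nat.card_Ico]; omega
  have himg : (T2.image (ma a)) ⊆
      (T.filter (fun v => padicValNat 2 v = a)) ∪ ((X n T).image (ma a)) := by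
    intro b hb
    rw [Finset.mem_image] at hb
    obtain ⟨w, hw, hwb⟩ := hb
    rw [hT2, Finset.mem_filter] at hw
    obtain ⟨hwT, hwa⟩ := hw
    have hprops := ma_props (a := a) (w := w) (by omega)
    rw [hwb] at hprops
    obtain ⟨hbw, hwb2, hval, hb1⟩ := hprops
    rw [Finset.mem_union]
    by_cases hbT : b ∈ T
    · left
      rw [Finset.mem_filter]
      exact ⟨hbT, hval⟩
    · right
      have hblt : b < w := by
        rcases Nat.eq_or_lt_of_le hbw with h | h
        · exact absurd (h ▸ hwT) hbT
        · exact h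
      obtain ⟨y, hy1, hy2, hy3⟩ := crossing T hTn hb1 hbT hwT hblt
      rw [Finset.mem_image]
      refine ⟨y, hy3, ?_⟩
      exact ma_eq hval (by omega) hy1 (by omega)
  have himgc : (T2.image (ma a)).card ≤
      (T.filter (fun v => padicValNat 2 v = a)).card + (X n T).card := by
    calc (T2.image (ma a)).card
        ≤ ((T.filter (fun v => padicValNat 2 v = a)) ∪ ((X n T).image (ma a))).card :=
          Finset.card_le_card himg
      _ ≤ (T.filter (fun v => padicValNat 2 v = a)).card + ((X n T).image (ma a)).card :=
          Finset.card_union_le _ _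
      _ ≤ (T.filter (fun v => padicValNat 2 v = a)).card + (X n T).card := by
          have := Finset.card_image_le (s := X n T) (f := ma a)
          omega
  have h2 : T2.card ≤ 2 ^ (a + 1) *
      ((T.filter (fun v => padicValNat 2 v = a)).card + (X n T).card) := by
    calc T2.card ≤ 2 ^ (a + 1) * (T2.image (ma a)).card := hc2
      _ ≤ _ := Nat.mul_le_mul_left _ himgc
  have hunion : T1 ∪ T2 = T := by
    rw [hT1, hT2]
    exact Finset.filter_union_filter_not_eq _ T
  have hcard : T.card ≤ T1.card + T2.card := by
    rw [← hunion]
    exact Finset.card_union_le _ _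
  omega

lemma memX_WF {x : ℕ} (hx : x ∈ X n (WF n U)) :
    (1 ≤ x ∧ x + 1 ≤ n) ∧ ∀ h : 1 ≤ x ∧ x ≤ n, (⟨x, h⟩ : Vtx n) ∈ U ∧
      ∀ h' : 1 ≤ x + 1 ∧ x + 1 ≤ n, (⟨x + 1, h'⟩ : Vtx n) ∉ U := by
  classical
  unfold X at hx
  rw [Finset.mem_filter, Finset.mem_Icc] at hx
  obtain ⟨⟨hx1, hx2⟩, hxW, hxsW⟩ := hx
  have hs := mem_WF.mp hxsW
  exact ⟨⟨hx1, hs.1.2⟩, fun h => ⟨not_mem_WF hx1 hx2 hxW, fun h' => hs.2 h'⟩⟩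

lemma memX_UF {x : ℕ} (hx : x ∈ X n (UF n U)) :
    (1 ≤ x ∧ x + 1 ≤ n) ∧ ∀ h : 1 ≤ x ∧ x ≤ n, (⟨x, h⟩ : Vtx n) ∉ U ∧
      ∀ h' : 1 ≤ x + 1 ∧ x + 1 ≤ n, (⟨x + 1, h'⟩ : Vtx n) ∈ U := by
  classical
  unfold X at hx
  rw [Finset.mem_filter, Finset.mem_Icc] at hx
  obtain ⟨⟨hx1, hx2⟩, hxU, hxsU⟩ := hx
  obtain ⟨hb, hmemU⟩ := mem_UF.mp hxsU
  exact ⟨⟨hx1, hb.2⟩, fun h => ⟨not_mem_UF hx1 hx2 hxU, fun h' => hmemU⟩⟩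

open Classical in
lemma bound_R : (X n (WF n U)).card ≤ 2 * simClasses (D n) U := by
  classical
  set g : ℕ → Set (Vtx n) := fun x =>
    if h : 1 ≤ x ∧ x ≤ n then nb U ⟨x, h⟩ else ∅ with hg
  have key : ∀ u v : ℕ, u ∈ X n (WF n U) → v ∈ X n (WF n U) → u < v → g u = g v →
      padicValNat 2 u = padicValNat 2 (v + 1) := by
    intro u v hu hv huv hguv
    obtain ⟨⟨hu1, hu2⟩, hu3⟩ := memX_WF hu
    obtain ⟨⟨hv1, hv2⟩, hv3⟩ := memX_WF hv
    have hub : 1 ≤ u ∧ u ≤ n := ⟨hu1, by omega⟩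
    have hvb : 1 ≤ v ∧ v ≤ n := ⟨hv1, by omega⟩
    have hgu : g u = nb U ⟨u, hub⟩ := by rw [hg]; exact dif_pos hub
    have hgv : g v = nb U ⟨v, hvb⟩ := by rw [hg]; exact dif_pos hvb
    exact endR (x := ⟨u, hub⟩) (y := ⟨v, hvb⟩) (hu3 hub).1 (hv3 hvb).1 hv2
      ((hv3 hvb).2 ⟨by omega, hv2⟩) huv (by rw [← hgu, ← hgv]; exact hguv)
  have trip : ∀ u v w : ℕ, u ∈ X n (WF n U) → v ∈ X n (WF n U) → w ∈ X n (WF n U) →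
      u < v → v < w → g u = g v → g u = g w → g v = g w → False := by
    intro u v w hu hv hw huv hvw h1 h2 h3
    have k1 := key u v hu hv huv h1
    have k2 := key u w hu hw (by omega) h2
    have k3 := key v w hv hw hvw h3
    have hv1 : 1 ≤ v := (memX_WF hv).1.1
    have := val_consec' hv1
    omega
  have hfib : ∀ b ∈ (X n (WF n U)).image g,
      ((X n (WF n U)).filter (fun x => g x = b)).card ≤ 2 := by
    intro b hb
    by_contra hcon
    rw [not_le] at hcon
    obtain ⟨x, y, z, hxm, hym, hzm, hxy, hxz, hyz⟩ := Finset.two_lt_card_iff.mp hcon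
    rw [Finset.mem_filter] at hxm hym hzm
    obtain ⟨hx, hgx⟩ := hxm
    obtain ⟨hy, hgy⟩ := hym
    obtain ⟨hz, hgz⟩ := hzm
    have e1 : g x = g y := by rw [hgx, hgy]
    have e2 : g x = g z := by rw [hgx, hgz]
    have e3 : g y = g z := by rw [hgy, hgz]
    rcases lt_trichotomy x y with h | h | h
    · rcases lt_trichotomy y z with h' | h' | h'
      · exact trip x y z hx hy hz h h' e1 e2 e3
      · exact hyz h'
      · rcases lt_trichotomy x z with h'' | h'' | h''
        · exact trip x z y hx hz hy h'' h' e2 e1 e3.symm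
        · exact hxz h''
        · exact trip z x y hz hx hy h'' h e2.symm e3.symm e1
    · exact hxy h
    · rcases lt_trichotomy x z with h' | h' | h'
      · exact trip y x z hy hx hz h h' e1.symm e3 e2
      · exact hxz h'
      · rcases lt_trichotomy y z with h'' | h'' | h''
        · exact trip y z x hy hz hx h'' h' e3 e1.symm e2.symm
        · exact hyz h''
        · exact trip z y x hz hy hx h'' h e3.symm e2.symm e1.symm
  have himg : ((X n (WF n U)).image g).card ≤ simClasses (D n) U := by
    have hsub : ↑((X n (WF n U)).image g) ⊆
        (fun x => {y | y ∉ U ∧ (D n).Adj x y}) '' U := by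
      intro b hb
      simp only [Finset.coe_image, Set.mem_image, Finset.mem_coe] at hb
      obtain ⟨x, hx, rfl⟩ := hb
      obtain ⟨⟨h1, h2⟩, h3⟩ := memX_WF hx
      have hxb : 1 ≤ x ∧ x ≤ n := ⟨h1, by omega⟩
      refine ⟨⟨x, hxb⟩, (h3 hxb).1, ?_⟩
      have hgx : g x = nb U ⟨x, hxb⟩ := by rw [hg]; exact dif_pos hxb
      rw [hgx]
      rfl
    calc ((X n (WF n U)).image g).card
        = (↑((X n (WF n U)).image g) : Set _).ncard := (Set.ncard_coe_finset _).symm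
      _ ≤ _ := Set.ncard_le_ncard hsub (Set.toFinite _)
  calc (X n (WF n U)).card ≤ 2 * ((X n (WF n U)).image g).card :=
      Finset.card_le_mul_card_image _ 2 hfib
    _ ≤ 2 * simClasses (D n) U := Nat.mul_le_mul_left _ himg

open Classical in
lemma bound_L : (X n (UF n U)).card ≤ 2 * simClasses (D n) U := by
  classical
  set g : ℕ → Set (Vtx n) := fun x =>
    if h : 1 ≤ x + 1 ∧ x + 1 ≤ n then nb U ⟨x + 1, h⟩ else ∅ with hg
  have key : ∀ u v : ℕ, u ∈ X n (UF n U) → v ∈ X n (UF n U) → u < v → g u = g v →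
      padicValNat 2 u = padicValNat 2 (v + 1) := by
    intro u v hu hv huv hguv
    obtain ⟨⟨hu1, hu2⟩, hu3⟩ := memX_UF hu
    obtain ⟨⟨hv1, hv2⟩, hv3⟩ := memX_UF hv
    have hub : 1 ≤ u + 1 ∧ u + 1 ≤ n := ⟨by omega, hu2⟩
    have hvb : 1 ≤ v + 1 ∧ v + 1 ≤ n := ⟨by omega, hv2⟩
    have hgu : g u = nb U ⟨u + 1, hub⟩ := by rw [hg]; exact dif_pos hub
    have hgv : g v = nb U ⟨v + 1, hvb⟩ := by rw [hg]; exact dif_pos hvb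
    have := endL (x := ⟨u + 1, hub⟩) (y := ⟨v + 1, hvb⟩)
      ((hu3 ⟨hu1, by omega⟩).2 hub) ((hv3 ⟨hv1, by omega⟩).2 hvb)
      (by show 2 ≤ u + 1; omega) ((hu3 ⟨hu1, by omega⟩).1) (by show u + 1 < v + 1; omega)
      (by rw [← hgu, ← hgv]; exact hguv)
    exact this.symm
  have trip : ∀ u v w : ℕ, u ∈ X n (UF n U) → v ∈ X n (UF n U) → w ∈ X n (UF n U) →
      u < v → v < w → g u = g v → g u = g w → g v = g w → False := by
    intro u v w hu hv hw huv hvw h1 h2 h3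
    have k1 := key u v hu hv huv h1
    have k2 := key u w hu hw (by omega) h2
    have k3 := key v w hv hw hvw h3
    have hv1 : 1 ≤ v := (memX_UF hv).1.1
    have := val_consec' hv1
    omega
  have hfib : ∀ b ∈ (X n (UF n U)).image g,
      ((X n (UF n U)).filter (fun x => g x = b)).card ≤ 2 := by
    intro b hb
    by_contra hcon
    rw [not_le] at hcon
    obtain ⟨x, y, z, hxm, hym, hzm, hxy, hxz, hyz⟩ := Finset.two_lt_card_iff.mp hcon
    rw [Finset.mem_filter] at hxm hym hzm
    obtain ⟨hx, hgx⟩ := hxm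
    obtain ⟨hy, hgy⟩ := hym
    obtain ⟨hz, hgz⟩ := hzm
    have e1 : g x = g y := by rw [hgx, hgy]
    have e2 : g x = g z := by rw [hgx, hgz]
    have e3 : g y = g z := by rw [hgy, hgz]
    rcases lt_trichotomy x y with h | h | h
    · rcases lt_trichotomy y z with h' | h' | h'
      · exact trip x y z hx hy hz h h' e1 e2 e3
      · exact hyz h'
      · rcases lt_trichotomy x z with h'' | h'' | h''
        · exact trip x z y hx hz hy h'' h' e2 e1 e3.symm
        · exact hxz h''
        · exact trip z x y hz hx hy h'' h e2.symm e3.symm e1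
    · exact hxy h
    · rcases lt_trichotomy x z with h' | h' | h'
      · exact trip y x z hy hx hz h h' e1.symm e3 e2
      · exact hxz h'
      · rcases lt_trichotomy y z with h'' | h'' | h''
        · exact trip y z x hy hz hx h'' h' e3 e1.symm e2.symm
        · exact hyz h''
        · exact trip z y x hz hy hx h'' h e3.symm e2.symm e1.symm
  have himg : ((X n (UF n U)).image g).card ≤ simClasses (D n) U := by
    have hsub : ↑((X n (UF n U)).image g) ⊆
        (fun x => {y | y ∉ U ∧ (D n).Adj x y}) '' U := by
      intro b hb
      simp only [Finset.coe_image, Set.mem_image, Finset.mem_coe] at hb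
      obtain ⟨x, hx, rfl⟩ := hb
      obtain ⟨⟨h1, h2⟩, h3⟩ := memX_UF hx
      have hxb : 1 ≤ x + 1 ∧ x + 1 ≤ n := ⟨by omega, h2⟩
      refine ⟨⟨x + 1, hxb⟩, (h3 ⟨h1, by omega⟩).2 hxb, ?_⟩
      have hgx : g x = nb U ⟨x + 1, hxb⟩ := by rw [hg]; exact dif_pos hxb
      rw [hgx]
      rfl
    calc ((X n (UF n U)).image g).card
        = (↑((X n (UF n U)).image g) : Set _).ncard := (Set.ncard_coe_finset _).symm
      _ ≤ _ := Set.ncard_le_ncard hsub (Set.toFinite _)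
  calc (X n (UF n U)).card ≤ 2 * ((X n (UF n U)).image g).card :=
      Finset.card_le_mul_card_image _ 2 hfib
    _ ≤ 2 * simClasses (D n) U := Nat.mul_le_mul_left _ himg

lemma UF_card : (UF n U).card = U.ncard := by
  classical
  have himg : (Subtype.val '' U : Set ℕ) = ↑(UF n U) := by
    ext m
    simp only [Set.mem_image, Finset.mem_coe]
    constructor
    · rintro ⟨x, hx, rfl⟩
      exact mem_UF.mpr ⟨x.2, hx⟩
    · intro hm
      obtain ⟨h, hmem⟩ := mem_UF.mp hm
      exact ⟨⟨m, h⟩, hmem, rfl⟩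
  have h2 := Set.ncard_image_of_injective U
    (Subtype.val_injective (p := fun v => 1 ≤ v ∧ v ≤ n))
  rw [himg, Set.ncard_coe_finset] at h2
  exact h2

lemma WF_card : (WF n U).card + U.ncard = n := by
  classical
  have hsd : WF n U = Finset.Icc 1 n \ UF n U := by
    ext m
    rw [Finset.mem_sdiff, mem_WF, Finset.mem_Icc]
    constructor
    · rintro ⟨hb, h⟩
      refine ⟨hb, fun hm => ?_⟩
      obtain ⟨h', hmem⟩ := mem_UF.mp hm
      exact h h' hmem
    · rintro ⟨hb, h⟩
      exact ⟨hb, fun h' hmem => h (mem_UF.mpr ⟨h', hmem⟩)⟩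
  have hcard : (WF n U).card = (Finset.Icc 1 n).card - (UF n U).card := by
    rw [hsd]
    exact Finset.card_sdiff_of_subset UF_sub
  have hIcc : (Finset.Icc 1 n).card = n := by rw [Nat.card_Icc]; omega
  have hle := Finset.card_le_card (UF_sub (n := n) (U := U))
  rw [UF_card] at hcard hle
  omega

lemma too_small {c a : ℕ} (hc : 1 ≤ c) (ha : a < c) (T : Finset ℕ)
    (hTn : T ⊆ Finset.Icc 1 n)
    (hX : (X n T).card + 2 ≤ 2 * c)
    (hT : (2 * c + 1) * (2 * 2 ^ c - 1) + 1 ≤ T.card)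
    (hsmall : (T.filter (fun v => padicValNat 2 v = a)).card ≤ 2) : False := by
  classical
  have hcount := count_lemma a T hTn
  set P := 2 ^ c with hP
  have hP1 : 1 ≤ P := Nat.one_le_two_pow
  have hpa : 2 ^ (a + 1) ≤ P := Nat.pow_le_pow_right (by norm_num) (by omega)
  have hpa2 : 2 ^ a ≤ P := Nat.pow_le_pow_right (by norm_num) (by omega)
  set Wa := (T.filter (fun v => padicValNat 2 v = a)).card with hWa
  set Xc := (X n T).card with hXc
  have t1 : 2 ^ (a + 1) * (Wa + Xc) ≤ P * (Wa + Xc) := Nat.mul_le_mul_right _ hpa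
  have t2 : P * (Wa + Xc) ≤ P * (2 * c) := Nat.mul_le_mul_left _ (by omega)
  have hTub : T.card ≤ P * (2 * c) + P := by omega
  have s3 : P * (2 * c) + P = (2 * c + 1) * P := by ring
  have s1 : (2 * c + 1) * P ≤ (2 * c + 1) * (2 * P - 1) :=
    Nat.mul_le_mul_left _ (by omega)
  omega

theorem stmt13main (hn : 3 * ((2 * c + 1) * (2 ^ (c + 1) - 1) + 1) ≤ n)
    (h1 : n ≤ 3 * U.ncard) (h2 : 3 * U.ncard ≤ 2 * n) :
    c ≤ simClasses (D n) U := by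
  classical
  rcases Nat.eq_zero_or_pos c with rfl | hc
  · exact Nat.zero_le _
  have hRb := bound_R (n := n) (U := U)
  have hLb := bound_L (n := n) (U := U)
  by_cases hcase : 2 * c ≤ (X n (WF n U)).card + 1 ∨ 2 * c ≤ (X n (UF n U)).card + 1
  · rcases hcase with h | h
    · omega
    · omega
  · push_neg at hcase
    obtain ⟨hXW, hXU⟩ := hcase
    have hUc := UF_card (n := n) (U := U)
    have hWc := WF_card (n := n) (U := U)
    have hpow : (2:ℕ) ^ (c + 1) = 2 * 2 ^ c := by rw [pow_succ]; ring
    rw [hpow] at hn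
    have hKU : (2 * c + 1) * (2 * 2 ^ c - 1) + 1 ≤ (UF n U).card := by omega
    have hKW : (2 * c + 1) * (2 * 2 ^ c - 1) + 1 ≤ (WF n U).card := by omega
    have hWa : ∀ a, a < c → 3 ≤ ((WF n U).filter (fun v => padicValNat 2 v = a)).card := by
      intro a ha
      by_contra hcon
      exact too_small hc ha (WF n U) WF_sub (by omega) hKW (by omega)
    have hUa : ∀ a, a < c → 1 ≤ ((UF n U).filter (fun v => padicValNat 2 v = a)).card := by
      intro a ha
      by_contra hcon
      exact too_small hc ha (UF n U) UF_sub (by omega) hKU (by omega)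
    have hpick : ∀ a : Fin c, ∃ x : Vtx n, x ∈ U ∧ padicValNat 2 x.1 = a.1 := by
      intro a
      have h' := hUa a.1 a.2
      have h'' : ((UF n U).filter (fun v => padicValNat 2 v = (a : ℕ))).Nonempty :=
        Finset.card_pos.mp (by omega)
      obtain ⟨m, hm⟩ := h''
      rw [Finset.mem_filter] at hm
      obtain ⟨hmU, hmval⟩ := hm
      obtain ⟨hb, hmem⟩ := mem_UF.mp hmU
      exact ⟨⟨m, hb⟩, hmem, hmval⟩
    choose pick hpickU hpickval using hpick
    set f : Fin c → Set (Vtx n) := fun i => nb U (pick i) with hf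
    have hinj : Function.Injective f := by
      intro i j hij
      by_contra hne
      have hvi : padicValNat 2 (pick i).1 ≠ padicValNat 2 (pick j).1 := by
        rw [hpickval, hpickval]
        exact fun h => hne (Fin.ext h)
      have h3 : 2 < ((WF n U).filter (fun v => padicValNat 2 v = (i : ℕ))).card := by
        have := hWa i.1 i.2; omega
      obtain ⟨m1, m2, m3, hm1, hm2, hm3, d12, d13, d23⟩ := Finset.two_lt_card_iff.mp h3
      rw [Finset.mem_filter] at hm1 hm2 hm3
      obtain ⟨hw1, hv1⟩ := hm1
      obtain ⟨hw2, hv2⟩ := hm2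
      obtain ⟨hw3, hv3⟩ := hm3
      obtain ⟨hb1, hnu1⟩ := mem_WF.mp hw1
      obtain ⟨hb2, hnu2⟩ := mem_WF.mp hw2
      obtain ⟨hb3, hnu3⟩ := mem_WF.mp hw3
      refine sep (hpickU i) (hpickU j) hvi ⟨m1, hb1⟩ ⟨m2, hb2⟩ ⟨m3, hb3⟩
        (hnu1 hb1) (hnu2 hb2) (hnu3 hb3)
        (by show padicValNat 2 m1 = _; rw [hv1, hpickval i])
        (by show padicValNat 2 m2 = _; rw [hv2, hpickval i])
        (by show padicValNat 2 m3 = _; rw [hv3, hpickval i])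
        (fun h => d12 (congrArg Subtype.val h))
        (fun h => d13 (congrArg Subtype.val h))
        (fun h => d23 (congrArg Subtype.val h)) hij
    have hrange : ↑((Finset.univ : Finset (Fin c)).image f) ⊆
        (fun x => {y | y ∉ U ∧ (D n).Adj x y}) '' U := by
      intro b hb
      simp only [Finset.coe_image, Finset.coe_univ, Set.image_univ, Set.mem_range] at hb
      obtain ⟨i, rfl⟩ := hb
      exact ⟨pick i, hpickU i, rfl⟩
    have hcard : ((Finset.univ : Finset (Fin c)).image f).card = c := by
      rw [Finset.card_image_of_injective _ hinj, Finset.card_univ, Fintype.card_fin]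
    have hfinal : c ≤ ((fun x => {y | y ∉ U ∧ (D n).Adj x y}) '' U).ncard := by
      calc c = ((Finset.univ : Finset (Fin c)).image f).card := hcard.symm
        _ = (↑((Finset.univ : Finset (Fin c)).image f) : Set _).ncard :=
            (Set.ncard_coe_finset _).symm
        _ ≤ _ := Set.ncard_le_ncard hrange (Set.toFinite _)
    exact hfinal

end Main
end Stmt13

theorem stmt13 (n c : ℕ) (hn : 3 * ((2 * c + 1) * (2 ^ (c + 1) - 1) + 1) ≤ n)
    (U : Set (Vtx n)) (h1 : n ≤ 3 * U.ncard) (h2 : 3 * U.ncard ≤ 2 * n) :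
    c ≤ simClasses (D n) U := Stmt13.stmt13main hn h1 h2
end

section
/- Let n ≥ 1 and let F be an interval of at least 5n consecutive positive integers. Then D_n is isomorphic to an induced subgraph of the graph induced in D_N (for N containing F) on a subinterval of F; specifically, there is y in the first 4n elements of F with q(y) = 2^k where 2^k is the least power of 2 exceeding n, and the map z ↦ y + z for 1 ≤ z ≤ n satisfies q(y + z) = q(z), giving an induced-subgraph embedding of D_n. -/
lemma padic_eq_of_dvd {m j : ℕ} (h1 : 2 ^ j ∣ m) (h2 : ¬ 2 ^ (j + 1) ∣ m) :
    padicValNat 2 m = j := by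
  have hm : m ≠ 0 := by rintro rfl; exact h2 (dvd_zero _)
  haveI : Fact (Nat.Prime 2) := ⟨Nat.prime_two⟩
  have a1 := (padicValNat_dvd_iff_le (p := 2) hm).mp h1
  have a2 := (padicValNat_dvd_iff_le (p := 2) (n := j + 1) hm).not.mp h2
  omega

theorem stmt14 (n a ℓ N k : ℕ) (hn : 1 ≤ n) (ha : 1 ≤ a)
    (hℓ : 5 * n ≤ ℓ) (hN : a + ℓ - 1 ≤ N)
    (hk : n < 2 ^ k) (hkmin : ∀ j, n < 2 ^ j → k ≤ j) :
    ∃ y ∈ Finset.Ico a (a + 4 * n), q y = 2 ^ k ∧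
      (∀ z, 1 ≤ z → z ≤ n → q (y + z) = q z) ∧
      ∃ f : D n ↪g D N, ∀ v : Vtx n, (f v).1 = y + v.1 := by
  -- k ≥ 1 and 2^(k+1) ≤ 4n
  have hk1 : 1 ≤ k := by
    by_contra h
    interval_cases k <;> omega
  have hkle : 2 ^ (k - 1) ≤ n := by
    by_contra h
    have := hkmin (k - 1) (by omega)
    omega
  have hM : 2 ^ (k + 1) ≤ 4 * n := by
    have : 2 ^ (k + 1) = 4 * 2 ^ (k - 1) := by
      rw [show k + 1 = (k - 1) + 2 by omega, pow_add]; ring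
    omega
  set M := 2 ^ (k + 1) with hMdef
  have hMpos : 0 < M := Nat.pow_pos (by norm_num)
  -- choose y in [a, a+M) with y % M = 2^k
  obtain ⟨y, hya, hyM, hymod⟩ : ∃ y, a ≤ y ∧ y < a + M ∧ y % M = 2 ^ k := by
    have hd := Nat.div_add_mod a M
    have hmod : a % M < M := Nat.mod_lt _ hMpos
    have h1 : (2 ^ k + M * (a / M)) % M = 2 ^ k := by
      rw [Nat.add_mul_mod_self_left, Nat.mod_eq_of_lt]
      rw [hMdef, pow_succ]; omega
    have h2 : (2 ^ k + M * (a / M + 1)) % M = 2 ^ k := by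
      rw [Nat.add_mul_mod_self_left, Nat.mod_eq_of_lt]
      rw [hMdef, pow_succ]; omega
    by_cases hc : a ≤ 2 ^ k + M * (a / M)
    · exact ⟨_, hc, by omega, h1⟩
    · refine ⟨_, ?_, ?_, h2⟩ <;> [skip; skip] <;>
        · have : M * (a / M + 1) = M * (a / M) + M := by ring
          omega
  -- key divisibility facts
  have hd := Nat.div_add_mod y M
  rw [hymod] at hd
  have hdvd : 2 ^ k ∣ y := by
    refine ⟨2 * (y / M) + 1, ?_⟩
    have h2 : 2 ^ k * (2 * (y / M) + 1) = 2 ^ (k + 1) * (y / M) + 2 ^ k := by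
      rw [pow_succ]; ring
    rw [h2, ← hMdef]
    exact hd.symm
  have hndvd : ¬ 2 ^ (k + 1) ∣ y := by
    intro h
    rw [← hMdef] at h
    have h0 : y % M = 0 := Nat.mod_eq_zero_of_dvd h
    have : (0:ℕ) < 2 ^ k := Nat.pow_pos (by norm_num)
    omega
  have hqy : q y = 2 ^ k := by
    unfold q; rw [padic_eq_of_dvd hdvd hndvd]
  -- preservation of q on shifts
  have hshift : ∀ z, 1 ≤ z → z ≤ n → q (y + z) = q z := by
    intro z hz1 hz2
    set m := padicValNat 2 z with hm
    have hzdvd : 2 ^ m ∣ z := pow_padicValNat_dvd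
    have hzndvd : ¬ 2 ^ (m + 1) ∣ z := by
      haveI : Fact (Nat.Prime 2) := ⟨Nat.prime_two⟩
      exact pow_succ_padicValNat_not_dvd (by omega)
    have hmk : m < k := by
      have h1 : 2 ^ m ≤ z := Nat.le_of_dvd (by omega) hzdvd
      by_contra h
      have : 2 ^ k ≤ 2 ^ m := Nat.pow_le_pow_right (by norm_num) (by omega)
      omega
    have hy1 : 2 ^ (m + 1) ∣ y :=
      dvd_trans (pow_dvd_pow 2 (by omega)) hdvd
    have hsum : 2 ^ m ∣ y + z :=
      Dvd.dvd.add (dvd_trans (pow_dvd_pow 2 (by omega)) hdvd) hzdvd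
    have hsumn : ¬ 2 ^ (m + 1) ∣ y + z := by
      intro h
      exact hzndvd ((Nat.dvd_add_right hy1).mp h)
    unfold q
    rw [padic_eq_of_dvd hsum hsumn]
  -- the embedding
  refine ⟨y, Finset.mem_Ico.mpr ⟨hya, by omega⟩, hqy, hshift, ?_⟩
  have hbound : ∀ v : Vtx n, 1 ≤ y + v.1 ∧ y + v.1 ≤ N := by
    rintro ⟨v, hv1, hv2⟩
    constructor <;> simp only [] <;> omega
  refine ⟨⟨⟨fun v => ⟨y + v.1, hbound v⟩, ?_⟩, ?_⟩, fun v => rfl⟩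
  · rintro ⟨i, hi⟩ ⟨j, hj⟩ h
    simp only [Subtype.mk.injEq] at h ⊢
    omega
  · rintro ⟨i, hi⟩ ⟨j, hj⟩
    show Dadj (y + i) (y + j) ↔ Dadj i j
    unfold Dadj
    rw [hshift i hi.1 hi.2, hshift j hj.1 hj.2]
    constructor <;> rintro ⟨h1, h2 | h2 | h2⟩ <;>
      first
      | exact ⟨by omega, Or.inr (Or.inr h2)⟩
      | exact ⟨by omega, by omega⟩
end

section
/- Let F₁ and F₂ be two intervals of consecutive positive integers of the same length ℓ, with unique q-maximal elements m₁ ∈ F₁ and m₂ ∈ F₂ satisfying m₁ − min F₁ = m₂ − min F₂. Then the order-preserving bijection f from F₁ to F₂ (sending the i-th smallest element to the i-th smallest element) satisfies f(m₁) = m₂ and q(f(v)) = q(v) for every v ∈ F₁ with v ≠ m₁; moreover f is an isomorphism between the subgraphs of D_N induced by F₁ and F₂. -/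
instance : Fact (Nat.Prime 2) := ⟨Nat.prime_two⟩

lemma val_eq_of (k n : ℕ) (hn : n ≠ 0) (h1 : 2 ^ k ∣ n) (h2 : ¬ 2 ^ (k + 1) ∣ n) :
    padicValNat 2 n = k := by
  rw [padicValNat_dvd_iff_le hn] at h1
  have h2' := h2
  rw [padicValNat_dvd_iff_le hn] at h2'
  omega

lemma strict_lt (a ℓ m v : ℕ) (ha : 1 ≤ a) (hm : m ∈ Finset.Ico a (a + ℓ))
    (hmax : ∀ w ∈ Finset.Ico a (a + ℓ), q w ≤ q m)
    (hv : v ∈ Finset.Ico a (a + ℓ)) (hne : v ≠ m) :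
    padicValNat 2 v < padicValNat 2 m := by
  simp only [Finset.mem_Ico] at hm hv
  have hvle : padicValNat 2 v ≤ padicValNat 2 m := by
    have := hmax v (by simp [Finset.mem_Ico]; omega)
    exact (Nat.pow_le_pow_iff_right one_lt_two).mp this
  rcases lt_or_eq_of_le hvle with h | h
  · exact h
  exfalso
  set k := padicValNat 2 v with hk
  obtain ⟨u, w, hu, hw, huw, huI, hwI⟩ :
      ∃ u w : ℕ, padicValNat 2 u = k ∧ padicValNat 2 w = k ∧ u < w ∧
        (a ≤ u ∧ u < a + ℓ) ∧ (a ≤ w ∧ w < a + ℓ) := by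
    rcases Nat.lt_or_ge v m with hlt | hge
    · exact ⟨v, m, rfl, h.symm, hlt, by omega, by omega⟩
    · exact ⟨m, v, h.symm, rfl, by omega, by omega, by omega⟩
  have hu0 : u ≠ 0 := by omega
  have hdu : 2 ^ k ∣ u := hu ▸ pow_padicValNat_dvd
  have hdw : 2 ^ k ∣ w := hw ▸ pow_padicValNat_dvd
  obtain ⟨c, hc⟩ := hdu
  obtain ⟨d, hd⟩ := hdw
  have h2k : 0 < 2 ^ k := Nat.two_pow_pos k
  have hcd : c < d := by
    by_contra hcon
    have : w ≤ u := by rw [hc, hd]; exact Nat.mul_le_mul_left _ (by omega)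
    omega
  have hcodd : ¬ 2 ∣ c := by
    rintro ⟨c', hc'⟩
    have hdd : 2 ^ (k + 1) ∣ u := ⟨c', by rw [hc, hc', pow_succ]; ring⟩
    exact (hu ▸ pow_succ_padicValNat_not_dvd (p := 2) hu0) hdd
  set x := 2 ^ k * (c + 1) with hx
  have hxdvd : 2 ^ (k + 1) ∣ x := by
    obtain ⟨e, he⟩ : 2 ∣ c + 1 := by omega
    exact ⟨e, by rw [hx, he, pow_succ]; ring⟩
  have hxI : x ∈ Finset.Ico a (a + ℓ) := by
    have h1 : u < x := by rw [hc, hx]; exact (Nat.mul_lt_mul_left h2k).mpr (by omega)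
    have h2 : x ≤ w := by rw [hd, hx]; exact Nat.mul_le_mul_left _ (by omega)
    simp only [Finset.mem_Ico]; omega
  have hx0 : x ≠ 0 := by positivity
  have hxv : k + 1 ≤ padicValNat 2 x := (padicValNat_dvd_iff_le hx0).mp hxdvd
  have hqx : 2 ^ (k + 1) ≤ q x := Nat.pow_le_pow_right (by norm_num) hxv
  have hle := hmax x hxI
  unfold q at hle
  rw [← h] at hle
  have : 2 ^ (k + 1) ≤ 2 ^ k := le_trans hqx hle
  have := (Nat.pow_le_pow_iff_right one_lt_two).mp this
  omega

lemma val_sub (x y : ℕ) (hx : 0 < x) (hxy : x < y)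
    (h : padicValNat 2 x ≠ padicValNat 2 y) :
    padicValNat 2 (y - x) = min (padicValNat 2 x) (padicValNat 2 y) := by
  have hx0 : x ≠ 0 := by omega
  have hy0 : y ≠ 0 := by omega
  set k := min (padicValNat 2 x) (padicValNat 2 y) with hk
  have hdx : 2 ^ k ∣ x := (padicValNat_dvd_iff_le hx0).mpr (by omega)
  have hdy : 2 ^ k ∣ y := (padicValNat_dvd_iff_le hy0).mpr (by omega)
  apply val_eq_of
  · omega
  · exact Nat.dvd_sub hdy hdx
  · intro hcon
    rcases Nat.lt_or_ge (padicValNat 2 x) (padicValNat 2 y) with hlt | hge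
    · have hdy' : 2 ^ (k + 1) ∣ y := (padicValNat_dvd_iff_le hy0).mpr (by omega)
      have : 2 ^ (k + 1) ∣ x := by
        have := Nat.dvd_sub hdy' hcon
        rwa [Nat.sub_sub_self (le_of_lt hxy)] at this
      have := (padicValNat_dvd_iff_le hx0).mp this
      omega
    · have hdx' : 2 ^ (k + 1) ∣ x := (padicValNat_dvd_iff_le hx0).mpr (by omega)
      have : 2 ^ (k + 1) ∣ y := by
        have := Nat.dvd_add hcon hdx'
        rwa [Nat.sub_add_cancel (le_of_lt hxy)] at this
      have := (padicValNat_dvd_iff_le hy0).mp this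
      omega

theorem stmt16 (a₁ a₂ ℓ N m₁ m₂ : ℕ) (ha₁ : 1 ≤ a₁) (ha₂ : 1 ≤ a₂) (hℓ : 0 < ℓ)
    (hN₁ : a₁ + ℓ - 1 ≤ N) (hN₂ : a₂ + ℓ - 1 ≤ N)
    (hm₁ : m₁ ∈ Finset.Ico a₁ (a₁ + ℓ))
    (hmax₁ : ∀ v ∈ Finset.Ico a₁ (a₁ + ℓ), q v ≤ q m₁)
    (hm₂ : m₂ ∈ Finset.Ico a₂ (a₂ + ℓ))
    (hmax₂ : ∀ v ∈ Finset.Ico a₂ (a₂ + ℓ), q v ≤ q m₂)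
    (hoff : m₁ - a₁ = m₂ - a₂) :
    a₂ + (m₁ - a₁) = m₂ ∧
    (∀ v ∈ Finset.Ico a₁ (a₁ + ℓ), v ≠ m₁ → q (a₂ + (v - a₁)) = q v) ∧
    (∀ u ∈ Finset.Ico a₁ (a₁ + ℓ), ∀ v ∈ Finset.Ico a₁ (a₁ + ℓ),
      (Dadj u v ↔ Dadj (a₂ + (u - a₁)) (a₂ + (v - a₁)))) := by
  have hm₁' := Finset.mem_Ico.mp hm₁
  have hm₂' := Finset.mem_Ico.mp hm₂
  have hfm : a₂ + (m₁ - a₁) = m₂ := by omega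
  have key : ∀ v ∈ Finset.Ico a₁ (a₁ + ℓ), v ≠ m₁ → q (a₂ + (v - a₁)) = q v := by
    intro v hv hne
    have hv' := Finset.mem_Ico.mp hv
    set v₂ := a₂ + (v - a₁) with hv₂
    have hv₂I : v₂ ∈ Finset.Ico a₂ (a₂ + ℓ) := by simp only [Finset.mem_Ico]; omega
    have hne₂ : v₂ ≠ m₂ := by omega
    have hs1 := strict_lt a₁ ℓ m₁ v ha₁ hm₁ hmax₁ hv hne
    have hs2 := strict_lt a₂ ℓ m₂ v₂ ha₂ hm₂ hmax₂ hv₂I hne₂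
    unfold q
    congr 1
    rcases Nat.lt_or_ge v m₁ with hlt | hge
    · have e1 := val_sub v m₁ (by omega) hlt (by omega)
      have e2 := val_sub v₂ m₂ (by omega) (by omega) (by omega)
      have heq : m₁ - v = m₂ - v₂ := by omega
      rw [heq] at e1
      omega
    · have hgt : m₁ < v := by omega
      have e1 := val_sub m₁ v (by omega) hgt (by omega)
      have e2 := val_sub m₂ v₂ (by omega) (by omega) (by omega)
      have heq : v - m₁ = v₂ - m₂ := by omega
      rw [heq] at e1
      omega
  refine ⟨hfm, key, ?_⟩
  intro u hu v hv
  have hu' := Finset.mem_Ico.mp hu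
  have hv' := Finset.mem_Ico.mp hv
  unfold Dadj
  constructor
  · rintro ⟨hne, hor⟩
    refine ⟨by omega, ?_⟩
    rcases hor with h | h | h
    · exact Or.inl (by omega)
    · exact Or.inr (Or.inl (by omega))
    · refine Or.inr (Or.inr ?_)
      by_cases hum : u = m₁
      · have hvm : v ≠ m₁ := by omega
        exfalso
        have := strict_lt a₁ ℓ m₁ v ha₁ hm₁ hmax₁ hv hvm
        have : q v < q m₁ := Nat.pow_lt_pow_right one_lt_two this
        rw [hum] at h; omega
      · by_cases hvm : v = m₁
        · exfalso
          have := strict_lt a₁ ℓ m₁ u ha₁ hm₁ hmax₁ hu hum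
          have : q u < q m₁ := Nat.pow_lt_pow_right one_lt_two this
          rw [hvm] at h; omega
        · rw [key u hu hum, key v hv hvm, h]
  · rintro ⟨hne, hor⟩
    refine ⟨by omega, ?_⟩
    rcases hor with h | h | h
    · exact Or.inl (by omega)
    · exact Or.inr (Or.inl (by omega))
    · refine Or.inr (Or.inr ?_)
      by_cases hum : u = m₁
      · have hvm : v ≠ m₁ := by omega
        exfalso
        have hvI : a₂ + (v - a₁) ∈ Finset.Ico a₂ (a₂ + ℓ) := by
          simp only [Finset.mem_Ico]; omega
        have hvne : a₂ + (v - a₁) ≠ m₂ := by omega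
        have := strict_lt a₂ ℓ m₂ _ ha₂ hm₂ hmax₂ hvI hvne
        have hlt : q (a₂ + (v - a₁)) < q m₂ := Nat.pow_lt_pow_right one_lt_two this
        have hu2 : a₂ + (u - a₁) = m₂ := by omega
        rw [hu2] at h; omega
      · by_cases hvm : v = m₁
        · exfalso
          have huI : a₂ + (u - a₁) ∈ Finset.Ico a₂ (a₂ + ℓ) := by
            simp only [Finset.mem_Ico]; omega
          have hune : a₂ + (u - a₁) ≠ m₂ := by omega
          have := strict_lt a₂ ℓ m₂ _ ha₂ hm₂ hmax₂ huI hune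
          have hlt : q (a₂ + (u - a₁)) < q m₂ := Nat.pow_lt_pow_right one_lt_two this
          have hv2 : a₂ + (v - a₁) = m₂ := by omega
          rw [hv2] at h; omega
        · rw [← key u hu hum, ← key v hv hvm, h]
end

section
/- Higman's lemma: if (M, ≤) is a well-quasi-order, then the set M* of finite sequences over M, ordered by the subsequence embedding order (a₁,…,a_m) ⪯ (b₁,…,b_n) iff there is a strictly increasing injection g: {1,…,m} → {1,…,n} with a_i ≤ b_{g(i)} for all i, is a well-quasi-order. -/
theorem stmt17 {M : Type*} (r : M → M → Prop) (hrefl : Reflexive r) (htrans : Transitive r)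
    (hwqo : ∀ f : ℕ → M, ∃ i j, i < j ∧ r (f i) (f j)) :
    ∀ g : ℕ → List M, ∃ i j, i < j ∧ List.SublistForall₂ r (g i) (g j) := by
  haveI : IsRefl M r := ⟨hrefl⟩
  haveI : IsTrans M r := ⟨htrans⟩
  haveI : IsPreorder M r := { refl := hrefl, trans := htrans }
  have h : (Set.univ : Set M).PartiallyWellOrderedOn r := by
    intro f
    exact hwqo (fun n => (f n).1)
  have h2 := Set.PartiallyWellOrderedOn.partiallyWellOrderedOn_sublistForall₂ r h
  intro g
  obtain ⟨i, j, hij, hr⟩ := h2 (fun n => ⟨g n, by simp⟩)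
  exact ⟨i, j, hij, hr⟩
end

section
/- The hereditary class D, consisting of all graphs D_n and all their induced subgraphs, is well-quasi-ordered by the induced subgraph relation: every infinite sequence G₁, G₂, … of graphs in D contains indices i < j such that G_i is isomorphic to an induced subgraph of G_j. -/
namespace Stmt19Aux

/-- The graph `Dadj` on all of ℕ. -/
def DG : SimpleGraph ℕ where
  Adj := Dadj
  symm := by
    constructor
    rintro a b ⟨h1, h2⟩
    refine ⟨h1.symm, ?_⟩
    rcases h2 with h | h | h
    · exact Or.inr (Or.inl h)
    · exact Or.inl h
    · exact Or.inr (Or.inr h.symm)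
  loopless := by constructor; rintro a ⟨h1, -⟩; exact h1 rfl

@[simp] lemma DG_adj (x y : ℕ) : DG.Adj x y ↔ Dadj x y := Iff.rfl

abbrev val (x : ℕ) : ℕ := padicValNat 2 x

lemma q_eq_iff {x y : ℕ} : q x = q y ↔ val x = val y := by
  constructor
  · intro h; exact Nat.pow_right_injective (le_refl 2) h
  · intro h; simp [q, h]

lemma val_eq_iff {x v : ℕ} (hx : x ≠ 0) : val x = v ↔ (2^v ∣ x ∧ ¬ 2^(v+1) ∣ x) := by
  have hfac : x.factorization 2 = val x := Nat.factorization_def x Nat.prime_two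
  constructor
  · rintro rfl
    refine ⟨pow_padicValNat_dvd, ?_⟩
    rw [Nat.Prime.pow_dvd_iff_le_factorization Nat.prime_two hx, hfac]
    omega
  · rintro ⟨h1, h2⟩
    rw [Nat.Prime.pow_dvd_iff_le_factorization Nat.prime_two hx, hfac] at h1 h2
    omega

lemma le_val_of_dvd {x k : ℕ} (hx : x ≠ 0) (h : 2^k ∣ x) : k ≤ val x := by
  have hfac : x.factorization 2 = val x := Nat.factorization_def x Nat.prime_two
  rw [Nat.Prime.pow_dvd_iff_le_factorization Nat.prime_two hx, hfac] at h
  exact h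

lemma val_lt_of_lt_pow {r k : ℕ} (hr : 0 < r) (hrk : r < 2^k) : val r < k := by
  have h1 : 2^(val r) ∣ r := pow_padicValNat_dvd
  have h2 : 2^(val r) ≤ r := Nat.le_of_dvd hr h1
  have := lt_of_le_of_lt h2 hrk
  exact (Nat.pow_lt_pow_iff_right (by norm_num)).1 this

/-- valuation of `m * 2^k + r` equals that of `r`, for `0 < r < 2^k`. -/
lemma val_mul_pow_add {r k m : ℕ} (hr : 0 < r) (hrk : r < 2^k) :
    val (m * 2^k + r) = val r := by
  have hv : val r < k := val_lt_of_lt_pow hr hrk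
  have hx : m * 2^k + r ≠ 0 := by positivity
  rw [val_eq_iff hx]
  have h1 : 2^(val r) ∣ r := pow_padicValNat_dvd
  have h2 : ¬ 2^(val r + 1) ∣ r := by
    intro h
    have := (val_eq_iff hr.ne').1 rfl
    exact this.2 h
  constructor
  · exact Dvd.dvd.add (Dvd.dvd.mul_left (pow_dvd_pow 2 hv.le) m) h1
  · intro h
    have hdvd : (2:ℕ)^(val r + 1) ∣ m * 2^k := Dvd.dvd.mul_left (pow_dvd_pow 2 hv) m
    exact h2 ((Nat.dvd_add_right hdvd).1 h)

lemma val_mod_pow {x k : ℕ} (hx : x % 2^k ≠ 0) : val x = val (x % 2^k) := by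
  conv_lhs => rw [← Nat.div_add_mod x (2^k)]
  rw [Nat.mul_comm]
  exact val_mul_pow_add (Nat.pos_of_ne_zero hx) (Nat.mod_lt _ (by positivity))

lemma val_mod_lt {x k : ℕ} (hx : x % 2^k ≠ 0) : val x < k := by
  rw [val_mod_pow hx]
  exact val_lt_of_lt_pow (Nat.pos_of_ne_zero hx) (Nat.mod_lt _ (by positivity))

lemma le_val_of_mod {x k : ℕ} (hx : x ≠ 0) (h : x % 2^k = 0) : k ≤ val x :=
  le_val_of_dvd hx (Nat.dvd_of_mod_eq_zero h)

/-- valuation of `2^q * t` for odd `t` is `q`. -/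
lemma val_pow_mul_odd {qq t : ℕ} (ht : t % 2 = 1) : val (2^qq * t) = qq := by
  have ht0 : t ≠ 0 := by omega
  rw [val_eq_iff (by positivity)]
  constructor
  · exact Dvd.dvd.mul_right dvd_rfl t
  · rintro h
    rw [pow_succ, mul_dvd_mul_iff_left (a := (2:ℕ)^qq) (by positivity)] at h
    omega

lemma val_add_eq_left {a b : ℕ} (ha : a ≠ 0) (hb : b ≠ 0) (h : val a < val b) :
    val (b + a) = val a := by
  rw [val_eq_iff (by omega)]
  have h1 : 2^(val a) ∣ a := pow_padicValNat_dvd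
  have h1b : 2^(val b) ∣ b := pow_padicValNat_dvd
  have h2 : ¬ 2^(val a + 1) ∣ a := ((val_eq_iff ha).1 rfl).2
  have hb1 : 2^(val a + 1) ∣ b := dvd_trans (pow_dvd_pow 2 h) h1b
  constructor
  · exact Dvd.dvd.add (dvd_trans (pow_dvd_pow 2 h.le) h1b) h1
  · intro hdvd
    exact h2 ((Nat.dvd_add_right hb1).1 hdvd)



set_option linter.unusedSectionVars false

section Runs
variable (U : Finset ℕ)

lemma exists_eo (s : ℕ) : ∃ d, s + d + 1 ∉ U := by
  refine ⟨U.sup id, fun h => ?_⟩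
  have := Finset.le_sup (f := id) h
  simp only [id] at this
  omega

/-- `eo U s` : the largest `d` such that `[s, s+d] ⊆ U` (when `s ∈ U`). -/
def eo (s : ℕ) : ℕ := Nat.find (exists_eo U s)

lemma eo_spec (s : ℕ) : s + eo U s + 1 ∉ U := Nat.find_spec (exists_eo U s)

lemma eo_min {s i : ℕ} (h : i < eo U s) : s + i + 1 ∈ U := by
  have := Nat.find_min (exists_eo U s) h
  simpa using this

lemma mem_of_le_eo {s i : ℕ} (hs : s ∈ U) (hi : i ≤ eo U s) : s + i ∈ U := by
  cases i with
  | zero => simpa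
  | succ n =>
      have := eo_min U (show n < eo U s by omega)
      rwa [show s + n + 1 = s + (n+1) by omega] at this

lemma exists_stE (x : ℕ) : ∃ e, x - (e+1) ∉ U ∨ x - (e+1) = 0 := ⟨x, Or.inr (by omega)⟩

def stE (x : ℕ) : ℕ := Nat.find (exists_stE U x)

/-- start of the run of `x` in `U`. -/
def st (x : ℕ) : ℕ := x - stE U x

variable {U}

lemma st_le {x : ℕ} : st U x ≤ x := Nat.sub_le _ _

variable (h0 : 0 ∉ U)
include h0

lemma stE_spec (x : ℕ) : x - (stE U x + 1) ∉ U := by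
  rcases Nat.find_spec (exists_stE U x) with h | h
  · exact h
  · unfold stE; rw [h]; exact h0

omit h0 in
lemma stE_min {x e : ℕ} (h : e < stE U x) : x - (e+1) ∈ U := by
  have := Nat.find_min (exists_stE U x) h
  push_neg at this
  exact this.1

lemma run_below {x : ℕ} (hx : x ∈ U) {y : ℕ} (h1 : st U x ≤ y) (h2 : y ≤ x) : y ∈ U := by
  have hi : x - y ≤ stE U x := by unfold st at h1; omega
  rcases Nat.eq_or_lt_of_le hi with heq | hlt
  · -- y could equal x - stE
    rcases Nat.eq_zero_or_pos (x - y) with h' | h'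
    · have : y = x := by omega
      rwa [this]
    · have := stE_min (show x - y - 1 < stE U x by omega)
      rwa [show x - (x - y - 1 + 1) = y by omega] at this
  · rcases Nat.eq_zero_or_pos (x - y) with h' | h'
    · have : y = x := by omega
      rwa [this]
    · have := stE_min (show x - y - 1 < stE U x by omega)
      rwa [show x - (x - y - 1 + 1) = y by omega] at this

lemma st_mem {x : ℕ} (hx : x ∈ U) : st U x ∈ U := run_below h0 hx le_rfl st_le

lemma st_pos {x : ℕ} (hx : x ∈ U) : 0 < st U x := by
  rcases Nat.eq_zero_or_pos (st U x) with h | h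
  · exact absurd (h ▸ st_mem h0 hx) h0
  · exact h

lemma st_pred_not {x : ℕ} (hx : x ∈ U) : st U x - 1 ∉ U := by
  have h1 := st_pos h0 hx
  have h2 : st U x - 1 = x - (stE U x + 1) := by unfold st at *; omega
  rw [h2]; exact stE_spec h0 x

lemma st_char {s x : ℕ} (hs : s ∈ U) (hsp : s - 1 ∉ U) (hsx : s ≤ x)
    (hint : ∀ y, s ≤ y → y ≤ x → y ∈ U) : st U x = s := by
  have hx : x ∈ U := hint x hsx le_rfl
  have hs1 : 1 ≤ s := by
    rcases Nat.eq_zero_or_pos s with h | h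
    · exact absurd (h ▸ hs) h0
    · exact h
  have h1 : st U x ≤ s := by
    by_contra hc
    push_neg at hc
    have hge : s ≤ x - (stE U x + 1) := by unfold st at hc; omega
    exact stE_spec h0 x (hint _ hge (by omega))
  have h2 : s ≤ st U x := by
    by_contra hc
    push_neg at hc
    have hlt : x - s < stE U x := by unfold st at hc; omega
    have := stE_min hlt
    rw [show x - (x - s + 1) = s - 1 by omega] at this
    exact hsp this
  omega

lemma offset_le_eo {x : ℕ} (hx : x ∈ U) : x - st U x ≤ eo U (st U x) := by
  by_contra hc
  push_neg at hc
  have hmem : st U x + eo U (st U x) + 1 ∈ U :=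
    run_below h0 hx (by omega) (by have := st_le (U := U) (x := x); omega)
  exact eo_spec U (st U x) hmem

lemma st_run {s i : ℕ} (hs : s ∈ U) (hsp : s - 1 ∉ U) (hi : i ≤ eo U s) :
    st U (s + i) = s := by
  refine st_char h0 hs hsp (by omega) (fun y h1 h2 => ?_)
  have := mem_of_le_eo U hs (show y - s ≤ eo U s by omega)
  rwa [show s + (y - s) = y by omega] at this

lemma st_succ {x : ℕ} (hx : x ∈ U) (hy : x + 1 ∈ U) : st U (x+1) = st U x := by
  refine st_char h0 (st_mem h0 hx) (st_pred_not h0 hx)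
    (le_trans st_le (by omega)) (fun y h1 h2 => ?_)
  rcases Nat.lt_or_ge y (x+1) with h | h
  · exact run_below h0 hx h1 (by omega)
  · have : y = x + 1 := by omega
    rwa [this]

end Runs


lemma sublist_match {α β : Type*} {R : α → β → Prop} (d₁ : α) (d₂ : β)
    {l₁ : List α} {l₂ : List β} (h : List.SublistForall₂ R l₁ l₂) :
    ∃ φ : ℕ → ℕ, (∀ i j, i < j → j < l₁.length → φ i < φ j) ∧
      (∀ i, i < l₁.length → φ i < l₂.length ∧ R (l₁.getD i d₁) (l₂.getD (φ i) d₂)) := by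
  induction h with
  | nil => exact ⟨id, by simp, by simp⟩
  | @cons a b l₁ l₂ hr hs ih =>
      obtain ⟨φ, hmono, hrel⟩ := ih
      refine ⟨fun n => if n = 0 then 0 else φ (n-1) + 1, ?_, ?_⟩
      · intro i j hij hj
        dsimp only
        rw [List.length_cons] at hj
        rcases Nat.eq_zero_or_pos i with hi | hi
        · subst hi
          rw [if_pos rfl, if_neg (by omega : ¬ j = 0)]
          omega
        · rw [if_neg (by omega : ¬ i = 0), if_neg (by omega : ¬ j = 0)]
          have := hmono (i-1) (j-1) (by omega) (by omega)
          omega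
      · intro i hi
        dsimp only
        rw [List.length_cons] at hi
        rcases Nat.eq_zero_or_pos i with h0 | h0
        · subst h0
          rw [if_pos rfl]
          simp only [List.getD_cons_zero, List.length_cons]
          exact ⟨by omega, hr⟩
        · obtain ⟨m, rfl⟩ : ∃ m, i = m + 1 := ⟨i - 1, by omega⟩
          rw [if_neg (by omega : ¬ m + 1 = 0)]
          simp only [Nat.add_sub_cancel, List.getD_cons_succ, List.length_cons]
          have := hrel m (by omega)
          exact ⟨by omega, this.2⟩
  | @cons_right a l₁ l₂ hs ih =>
      obtain ⟨φ, hmono, hrel⟩ := ih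
      refine ⟨fun n => φ n + 1, fun i j hij hj => ?_, fun i hi => ?_⟩
      · dsimp only
        have := hmono i j hij hj
        omega
      · dsimp only
        have := hrel i hi
        simp only [List.getD_cons_succ, List.length_cons]
        exact ⟨by omega, this.2⟩

lemma exists_inj_letter {γ : Type*} [Inhabited γ] {R : γ → γ → Prop} {P Q : Finset ℕ}
    {fP fQ : ℕ → γ}
    (h : List.SublistForall₂ R ((P.sort (· ≤ ·)).map fP) ((Q.sort (· ≤ ·)).map fQ)) :
    ∃ σ : ℕ → ℕ, Set.InjOn σ ↑P ∧ ∀ s ∈ P, σ s ∈ Q ∧ R (fP s) (fQ (σ s)) := by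
  obtain ⟨φ, hmono, hrel⟩ := sublist_match default default h
  set lP := P.sort (· ≤ ·) with hlP
  set lQ := Q.sort (· ≤ ·) with hlQ
  rw [List.length_map] at hmono
  refine ⟨fun s => lQ.getD (φ (lP.idxOf s)) 0, ?_, ?_⟩
  · intro s hs t ht heq
    dsimp only at heq
    by_contra hne
    have hsP : s ∈ lP := (Finset.mem_sort _).2 hs
    have htP : t ∈ lP := (Finset.mem_sort _).2 ht
    have his : lP.idxOf s < lP.length := List.idxOf_lt_length_iff.2 hsP
    have hit : lP.idxOf t < lP.length := List.idxOf_lt_length_iff.2 htP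
    have hbs := (hrel _ (by rw [List.length_map]; exact his)).1
    have hbt := (hrel _ (by rw [List.length_map]; exact hit)).1
    rw [List.length_map] at hbs hbt
    have hidx : lP.idxOf s ≠ lP.idxOf t := by
      intro hc
      exact hne ((List.idxOf_inj hsP).1 hc)
    have hphi : φ (lP.idxOf s) ≠ φ (lP.idxOf t) := by
      rcases Nat.lt_or_ge (lP.idxOf s) (lP.idxOf t) with hlt | hge
      · have := hmono _ _ hlt hit; omega
      · have hlt : lP.idxOf t < lP.idxOf s := by omega
        have := hmono _ _ hlt his; omega
    apply hphi
    rw [List.getD_eq_getElem _ _ hbs, List.getD_eq_getElem _ _ hbt] at heq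
    exact ((Finset.sort_nodup _ _).getElem_inj_iff).1 heq
  · intro s hs
    dsimp only
    have hsP : s ∈ lP := (Finset.mem_sort _).2 hs
    have his : lP.idxOf s < lP.length := List.idxOf_lt_length_iff.2 hsP
    obtain ⟨hb, hR⟩ := hrel (lP.idxOf s) (by rw [List.length_map]; exact his)
    rw [List.length_map] at hb
    have e2 : lQ.getD (φ (lP.idxOf s)) 0 = lQ[φ (lP.idxOf s)] := List.getD_eq_getElem _ _ hb
    have hmem : lQ[φ (lP.idxOf s)] ∈ lQ := List.getElem_mem _
    constructor
    · rw [e2]; exact (Finset.mem_sort _).1 hmem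
    · have hL : (lP.map fP).getD (lP.idxOf s) default = fP s := by
        rw [List.getD_eq_getElem _ _ (by rw [List.length_map]; exact his), List.getElem_map,
          List.getElem_idxOf his]
      have hRq : (lQ.map fQ).getD (φ (lP.idxOf s)) default = fQ (lQ[φ (lP.idxOf s)]) := by
        rw [List.getD_eq_getElem _ _ (by rw [List.length_map]; exact hb), List.getElem_map]
      rw [hL, hRq] at hR
      rw [e2]
      exact hR


section Enc
variable (k : ℕ) (U : Finset ℕ)

/-- next multiple of `2^k` at or above `s`. -/
def nxt (s : ℕ) : ℕ := 2^k * ((s + 2^k - 1) / 2^k)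

/-- offset from `s` to the next multiple of `2^k`. -/
def bo (s : ℕ) : ℕ := nxt k s - s

lemma nxt_mod (s : ℕ) : nxt k s % 2^k = 0 := Nat.mul_mod_right _ _

lemma nxt_dvd (s : ℕ) : 2^k ∣ nxt k s := Dvd.intro _ rfl

lemma nxt_ge (s : ℕ) : s ≤ nxt k s := by
  have hM : 0 < 2^k := by positivity
  have h1 := Nat.div_add_mod (s + 2^k - 1) (2^k)
  have h2 : (s + 2^k - 1) % 2^k < 2^k := Nat.mod_lt _ hM
  unfold nxt
  omega

lemma nxt_lt (s : ℕ) : nxt k s < s + 2^k := by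
  have hM : 0 < 2^k := by positivity
  have h1 := Nat.div_add_mod (s + 2^k - 1) (2^k)
  have h2 : (s + 2^k - 1) % 2^k < 2^k := Nat.mod_lt _ hM
  unfold nxt
  omega

lemma bo_lt (s : ℕ) : bo k s < 2^k := by
  have h1 := nxt_lt k s
  have h2 := nxt_ge k s
  unfold bo
  omega

lemma nxt_eq (s : ℕ) : nxt k s = s + bo k s := by
  have := nxt_ge k s
  unfold bo
  omega

lemma nxt_le_of_mod {y s : ℕ} (hy : 2^k ∣ y) (hsy : s ≤ y) : nxt k s ≤ y := by
  have hM : 0 < 2^k := by positivity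
  by_contra hc
  push_neg at hc
  have hd : 2^k ∣ nxt k s - y := Nat.dvd_sub (nxt_dvd k s) hy
  have hpos : 0 < nxt k s - y := by omega
  have hle : 2^k ≤ nxt k s - y := Nat.le_of_dvd hpos hd
  have := nxt_lt k s
  omega

lemma bo_congr {s t : ℕ} (h : s % 2^k = t % 2^k) : bo k s = bo k t := by
  have hM : 0 < 2^k := by positivity
  have key : ∀ u : ℕ, bo k u = 2^k * ((u % 2^k + 2^k - 1) / 2^k) - u % 2^k := by
    intro u
    have hdm := Nat.div_add_mod u (2^k)
    have e1 : u + 2^k - 1 = 2^k * (u / 2^k) + (u % 2^k + 2^k - 1) := by omega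
    unfold bo nxt
    rw [e1, Nat.mul_add_div hM, Nat.mul_add]
    omega
  rw [key s, key t, h]

/-- does the run of `s` contain a multiple of `2^k`? -/
def isBig (s : ℕ) : Prop := bo k s ≤ eo U s

instance : DecidablePred (isBig k U) := fun s => by unfold isBig; infer_instance

/-- valuation of the multiple of `2^k` in the run of `s`. -/
def bigVal (s : ℕ) : ℕ := val (nxt k s)

def runStarts : Finset ℕ := U.filter (fun s => s - 1 ∉ U)
def smallStarts : Finset ℕ := (runStarts U).filter (fun s => ¬ isBig k U s)
def bigStarts : Finset ℕ := (runStarts U).filter (fun s => isBig k U s)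
def bigVals : Finset ℕ := (bigStarts k U).image (bigVal k)
def classRuns (Vv : ℕ) : Finset ℕ := (bigStarts k U).filter (fun s => bigVal k s = Vv)
def letter (s : ℕ) : ℕ × ℕ := (s % 2^k, eo U s)
def encS : List (ℕ × ℕ) := ((smallStarts k U).sort (· ≤ ·)).map (letter k U)
def encB : List (List (ℕ × ℕ)) :=
  ((bigVals k U).sort (· ≤ ·)).map (fun Vv => ((classRuns k U Vv).sort (· ≤ ·)).map (letter k U))

variable {U}

lemma mem_runStarts {s : ℕ} : s ∈ runStarts U ↔ s ∈ U ∧ s - 1 ∉ U := by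
  unfold runStarts
  simp [Finset.mem_filter]

lemma st_mem_runStarts (h0 : 0 ∉ U) {x : ℕ} (hx : x ∈ U) : st U x ∈ runStarts U :=
  mem_runStarts.2 ⟨st_mem h0 hx, st_pred_not h0 hx⟩

lemma eq_nxt_of_mod (h0 : 0 ∉ U) {x : ℕ} (hx : x ∈ U) (hmod : 2^k ∣ x)
    (heo : eo U (st U x) < 2^k) : x = nxt k (st U x) := by
  have h1 : nxt k (st U x) ≤ x := nxt_le_of_mod k hmod st_le
  have h2 : x - st U x ≤ eo U (st U x) := offset_le_eo h0 hx
  have h3 : st U x ≤ x := st_le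
  have h4 : x < nxt k (st U x) + 2^k := by
    have := nxt_ge k (st U x)
    omega
  by_contra hc
  have hd : 2^k ∣ x - nxt k (st U x) := Nat.dvd_sub hmod (nxt_dvd k _)
  have hpos : 0 < x - nxt k (st U x) := by omega
  have hle : 2^k ≤ x - nxt k (st U x) := Nat.le_of_dvd hpos hd
  omega

end Enc

section MainEmb

lemma letter_parts {k : ℕ} {U V : Finset ℕ} {s t : ℕ}
    (h : letter k U s = letter k V t) : s % 2^k = t % 2^k ∧ eo U s = eo V t := by
  unfold letter at h
  exact ⟨congrArg Prod.fst h, congrArg Prod.snd h⟩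

theorem suffices_embed {k : ℕ} {U V : Finset ℕ} (h0U : 0 ∉ U) (h0V : 0 ∉ V)
    (heoU : ∀ s ∈ U, eo U s < 2^k) (heoV : ∀ s ∈ V, eo V s < 2^k)
    (hS : List.SublistForall₂ Eq (encS k U) (encS k V))
    (hB : List.SublistForall₂ (List.SublistForall₂ Eq) (encB k U) (encB k V)) :
    Nonempty (DG.induce (↑U : Set ℕ) ↪g DG.induce (↑V : Set ℕ)) := by
  classical
  obtain ⟨σs, hσsInj, hσsP⟩ := exists_inj_letter (R := (Eq : ℕ × ℕ → ℕ × ℕ → Prop)) hS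
  obtain ⟨κ, hκInj, hκP⟩ :=
    exists_inj_letter (R := List.SublistForall₂ (Eq : ℕ × ℕ → ℕ × ℕ → Prop)) hB
  have hcls : ∀ Vv, Vv ∈ bigVals k U → ∃ σc : ℕ → ℕ, Set.InjOn σc ↑(classRuns k U Vv) ∧
      ∀ s ∈ classRuns k U Vv, σc s ∈ classRuns k V (κ Vv) ∧
        letter k U s = letter k V (σc s) := by
    intro Vv hVv
    exact exists_inj_letter (R := (Eq : ℕ × ℕ → ℕ × ℕ → Prop)) (hκP Vv hVv).2
  choose! σc hσcInj hσcP using hcls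
  set σ : ℕ → ℕ := fun s => if isBig k U s then σc (bigVal k s) s else σs s with hσdef
  -- basic membership facts
  have hbigStarts_mem : ∀ s, s ∈ bigStarts k U ↔ s ∈ runStarts U ∧ isBig k U s := by
    intro s; unfold bigStarts; simp [Finset.mem_filter]
  have hsmallStarts_mem : ∀ s, s ∈ smallStarts k U ↔ s ∈ runStarts U ∧ ¬ isBig k U s := by
    intro s; unfold smallStarts; simp [Finset.mem_filter]
  have hbigStarts_memV : ∀ s, s ∈ bigStarts k V ↔ s ∈ runStarts V ∧ isBig k V s := by
    intro s; unfold bigStarts; simp [Finset.mem_filter]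
  have hsmallStarts_memV : ∀ s, s ∈ smallStarts k V ↔ s ∈ runStarts V ∧ ¬ isBig k V s := by
    intro s; unfold smallStarts; simp [Finset.mem_filter]
  have hclassRuns_mem : ∀ Vv s, s ∈ classRuns k V Vv ↔ s ∈ bigStarts k V ∧ bigVal k s = Vv := by
    intro Vv s; unfold classRuns; simp [Finset.mem_filter]
  -- main property of σ on run starts
  have hσP : ∀ s ∈ runStarts U, σ s ∈ runStarts V ∧ letter k U s = letter k V (σ s) ∧
      (isBig k U s → bigVal k (σ s) = κ (bigVal k s)) := by
    intro s hs
    by_cases hb : isBig k U s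
    · have hsB : s ∈ bigStarts k U := (hbigStarts_mem s).2 ⟨hs, hb⟩
      have hvv : bigVal k s ∈ bigVals k U := Finset.mem_image_of_mem _ hsB
      have hsC : s ∈ classRuns k U (bigVal k s) := by
        unfold classRuns; exact Finset.mem_filter.2 ⟨hsB, rfl⟩
      obtain ⟨hmem, hlet⟩ := hσcP (bigVal k s) hvv s hsC
      have hσs : σ s = σc (bigVal k s) s := by rw [hσdef]; simp [hb]
      rw [hσs]
      obtain ⟨hmemB, hval⟩ := (hclassRuns_mem _ _).1 hmem
      exact ⟨((hbigStarts_memV _).1 hmemB).1, hlet, fun _ => hval⟩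
    · have hsS : s ∈ smallStarts k U := (hsmallStarts_mem s).2 ⟨hs, hb⟩
      obtain ⟨hmem, hlet⟩ := hσsP s hsS
      have hσs : σ s = σs s := by rw [hσdef]; simp [hb]
      rw [hσs]
      exact ⟨((hsmallStarts_memV _).1 hmem).1, hlet, fun h => absurd h hb⟩
  -- σ is small-to-small / big-to-big w.r.t. membership
  have hσBig : ∀ s, s ∈ runStarts U → isBig k U s → σ s ∈ bigStarts k V := by
    intro s hs hb
    have hsB : s ∈ bigStarts k U := (hbigStarts_mem s).2 ⟨hs, hb⟩
    have hvv : bigVal k s ∈ bigVals k U := Finset.mem_image_of_mem _ hsB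
    have hsC : s ∈ classRuns k U (bigVal k s) := by
      unfold classRuns; exact Finset.mem_filter.2 ⟨hsB, rfl⟩
    have hσs : σ s = σc (bigVal k s) s := by rw [hσdef]; simp [hb]
    rw [hσs]
    exact ((hclassRuns_mem _ _).1 (hσcP (bigVal k s) hvv s hsC).1).1
  have hσSmall : ∀ s, s ∈ runStarts U → ¬ isBig k U s → σ s ∈ smallStarts k V := by
    intro s hs hb
    have hsS : s ∈ smallStarts k U := (hsmallStarts_mem s).2 ⟨hs, hb⟩
    have hσs : σ s = σs s := by rw [hσdef]; simp [hb]
    rw [hσs]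
    exact (hσsP s hsS).1
  -- injectivity of σ
  have hσInj : Set.InjOn σ ↑(runStarts U) := by
    intro s hs t ht heq
    rw [Finset.mem_coe] at hs ht
    by_cases hbs : isBig k U s <;> by_cases hbt : isBig k U t
    · have hsB : s ∈ bigStarts k U := (hbigStarts_mem s).2 ⟨hs, hbs⟩
      have htB : t ∈ bigStarts k U := (hbigStarts_mem t).2 ⟨ht, hbt⟩
      have hσeqs : σ s = σc (bigVal k s) s := by rw [hσdef]; simp [hbs]
      have hσeqt : σ t = σc (bigVal k t) t := by rw [hσdef]; simp [hbt]
      have hvvs : bigVal k s ∈ bigVals k U := Finset.mem_image_of_mem _ hsB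
      have hvvt : bigVal k t ∈ bigVals k U := Finset.mem_image_of_mem _ htB
      have hsC : s ∈ classRuns k U (bigVal k s) := by
        unfold classRuns; exact Finset.mem_filter.2 ⟨hsB, rfl⟩
      have htC : t ∈ classRuns k U (bigVal k t) := by
        unfold classRuns; exact Finset.mem_filter.2 ⟨htB, rfl⟩
      have hvals : bigVal k (σ s) = κ (bigVal k s) := (hσP s hs).2.2 hbs
      have hvalt : bigVal k (σ t) = κ (bigVal k t) := (hσP t ht).2.2 hbt
      have hκeq : κ (bigVal k s) = κ (bigVal k t) := by rw [← hvals, ← hvalt, heq]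
      have hveq : bigVal k s = bigVal k t := hκInj hvvs hvvt hκeq
      apply hσcInj (bigVal k s) hvvs hsC (by rw [hveq]; exact htC)
      rw [← hσeqs, hveq, ← hσeqt]
      exact heq
    · exfalso
      have h1 : σ s ∈ bigStarts k V := hσBig s hs hbs
      have h2 : σ t ∈ smallStarts k V := hσSmall t ht hbt
      rw [heq] at h1
      exact ((hsmallStarts_memV _).1 h2).2 ((hbigStarts_memV _).1 h1).2
    · exfalso
      have h1 : σ t ∈ bigStarts k V := hσBig t ht hbt
      have h2 : σ s ∈ smallStarts k V := hσSmall s hs hbs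
      rw [heq] at h2
      exact ((hsmallStarts_memV _).1 h2).2 ((hbigStarts_memV _).1 h1).2
    · have hsS : s ∈ smallStarts k U := (hsmallStarts_mem s).2 ⟨hs, hbs⟩
      have htS : t ∈ smallStarts k U := (hsmallStarts_mem t).2 ⟨ht, hbt⟩
      have hσeqs : σ s = σs s := by rw [hσdef]; simp [hbs]
      have hσeqt : σ t = σs t := by rw [hσdef]; simp [hbt]
      exact hσsInj hsS htS (by rw [← hσeqs, ← hσeqt, heq])
  -- the vertex map
  set F : ℕ → ℕ := fun x => σ (st U x) + (x - st U x) with hFdef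
  have key : ∀ x, x ∈ U → F x ∈ V ∧ st V (F x) = σ (st U x) ∧ F x % 2^k = x % 2^k := by
    intro x hx
    have hsrs : st U x ∈ runStarts U := st_mem_runStarts h0U hx
    obtain ⟨hmem', hlet, -⟩ := hσP _ hsrs
    obtain ⟨hmod, heoeq⟩ := letter_parts hlet
    obtain ⟨h1, h2⟩ := mem_runStarts.1 hmem'
    have hoff : x - st U x ≤ eo U (st U x) := offset_le_eo h0U hx
    have hoffV : x - st U x ≤ eo V (σ (st U x)) := by omega
    have hFm : F x ∈ V := by
      have := mem_of_le_eo V h1 hoffV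
      exact this
    have hst : st V (F x) = σ (st U x) := st_run h0V h1 h2 hoffV
    have hsx : st U x ≤ x := st_le
    have hmodF : F x % 2^k = x % 2^k := by
      have e : x % 2^k = (st U x + (x - st U x)) % 2^k := by
        congr 1
        omega
      rw [e, Nat.add_mod, ← hmod, ← Nat.add_mod]
    exact ⟨hFm, hst, hmodF⟩
  -- injectivity of F
  have hFinj : ∀ x, x ∈ U → ∀ y, y ∈ U → F x = F y → x = y := by
    intro x hx y hy he
    have kx := key x hx
    have ky := key y hy
    have h1 : σ (st U x) = σ (st U y) := by rw [← kx.2.1, ← ky.2.1, he]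
    have h2 : st U x = st U y :=
      hσInj (st_mem_runStarts h0U hx) (st_mem_runStarts h0U hy) h1
    have hsx : st U x ≤ x := st_le
    have hsy : st U y ≤ y := st_le
    have he' : σ (st U x) + (x - st U x) = σ (st U y) + (y - st U y) := he
    rw [← h2] at he' hsy
    omega
  -- consecutiveness
  have hconsec : ∀ x, x ∈ U → ∀ y, y ∈ U → (x + 1 = y ↔ F x + 1 = F y) := by
    intro x hx y hy
    have hsx : st U x ≤ x := st_le
    have hsy : st U y ≤ y := st_le
    constructor
    · intro hxy
      have hsty : st U y = st U x := by
        rw [← hxy]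
        exact st_succ h0U hx (hxy ▸ hy)
      show σ (st U x) + (x - st U x) + 1 = σ (st U y) + (y - st U y)
      rw [hsty]
      omega
    · intro hFxy
      have kx := key x hx
      have ky := key y hy
      have hsty : st V (F y) = st V (F x) := by
        rw [← hFxy]
        exact st_succ h0V kx.1 (hFxy ▸ ky.1)
      have h2 : σ (st U y) = σ (st U x) := by rw [← kx.2.1, ← ky.2.1, hsty]
      have h3 : st U y = st U x :=
        hσInj (st_mem_runStarts h0U hy) (st_mem_runStarts h0U hx) h2
      have he' : σ (st U x) + (x - st U x) + 1 = σ (st U y) + (y - st U y) := hFxy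
      rw [h3] at he'
      rw [h3] at hsy
      omega
  -- valuations
  have hvaliff : ∀ x, x ∈ U → ∀ y, y ∈ U → (val x = val y ↔ val (F x) = val (F y)) := by
    have bigcase : ∀ z, z ∈ U → 2^k ∣ z →
        val z = bigVal k (st U z) ∧ val (F z) = κ (bigVal k (st U z)) ∧
          bigVal k (st U z) ∈ bigVals k U := by
      intro z hz hzd
      have hsrs : st U z ∈ runStarts U := st_mem_runStarts h0U hz
      have hez : z = nxt k (st U z) := eq_nxt_of_mod k h0U hz hzd (heoU _ (st_mem h0U hz))
      have hval1 : val z = bigVal k (st U z) := by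
        unfold bigVal
        rw [← hez]
      have hbig : isBig k U (st U z) := by
        unfold isBig
        have h1 := offset_le_eo h0U hz
        have h2 := nxt_eq k (st U z)
        have h3 : st U z ≤ z := st_le
        omega
      have kz := key z hz
      have hzmod : z % 2^k = 0 := Nat.mod_eq_zero_of_dvd hzd
      have hFzmod : F z % 2^k = 0 := kz.2.2.trans hzmod
      have hFzd : 2^k ∣ F z := Nat.dvd_of_mod_eq_zero hFzmod
      have heFz : F z = nxt k (st V (F z)) :=
        eq_nxt_of_mod k h0V kz.1 hFzd (heoV _ (st_mem h0V kz.1))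
      have hval2 : val (F z) = bigVal k (st V (F z)) := by
        unfold bigVal
        rw [← heFz]
      have hmemB : st U z ∈ bigStarts k U := by
        unfold bigStarts
        exact Finset.mem_filter.2 ⟨hsrs, hbig⟩
      refine ⟨hval1, ?_, Finset.mem_image_of_mem _ hmemB⟩
      rw [hval2, kz.2.1, (hσP _ hsrs).2.2 hbig]
    intro x hx y hy
    have hx0 : x ≠ 0 := fun h => h0U (h ▸ hx)
    have hy0 : y ≠ 0 := fun h => h0U (h ▸ hy)
    have kx := key x hx
    have ky := key y hy
    have hFx0 : F x ≠ 0 := fun h => h0V (h ▸ kx.1)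
    have hFy0 : F y ≠ 0 := fun h => h0V (h ▸ ky.1)
    by_cases hxd : 2^k ∣ x <;> by_cases hyd : 2^k ∣ y
    · obtain ⟨ax1, ax2, ax3⟩ := bigcase x hx hxd
      obtain ⟨ay1, ay2, ay3⟩ := bigcase y hy hyd
      rw [ax1, ax2, ay1, ay2]
      constructor
      · intro h
        rw [h]
      · intro h
        exact hκInj ax3 ay3 h
    · have hymod : y % 2^k ≠ 0 := fun h => hyd (Nat.dvd_of_mod_eq_zero h)
      have h1 : k ≤ val x := le_val_of_dvd hx0 hxd
      have h2 : val y < k := val_mod_lt hymod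
      have hFymod : F y % 2^k ≠ 0 := by rw [ky.2.2]; exact hymod
      have h3 : k ≤ val (F x) := le_val_of_dvd hFx0 (Nat.dvd_of_mod_eq_zero
        (kx.2.2.trans (Nat.mod_eq_zero_of_dvd hxd)))
      have h4 : val (F y) < k := val_mod_lt hFymod
      constructor <;> intro h <;> omega
    · have hxmod : x % 2^k ≠ 0 := fun h => hxd (Nat.dvd_of_mod_eq_zero h)
      have h1 : k ≤ val y := le_val_of_dvd hy0 hyd
      have h2 : val x < k := val_mod_lt hxmod
      have hFxmod : F x % 2^k ≠ 0 := by rw [kx.2.2]; exact hxmod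
      have h3 : k ≤ val (F y) := le_val_of_dvd hFy0 (Nat.dvd_of_mod_eq_zero
        (ky.2.2.trans (Nat.mod_eq_zero_of_dvd hyd)))
      have h4 : val (F x) < k := val_mod_lt hFxmod
      constructor <;> intro h <;> omega
    · have hxmod : x % 2^k ≠ 0 := fun h => hxd (Nat.dvd_of_mod_eq_zero h)
      have hymod : y % 2^k ≠ 0 := fun h => hyd (Nat.dvd_of_mod_eq_zero h)
      have hFxmod : F x % 2^k ≠ 0 := by rw [kx.2.2]; exact hxmod
      have hFymod : F y % 2^k ≠ 0 := by rw [ky.2.2]; exact hymod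
      rw [val_mod_pow hxmod, val_mod_pow hymod, val_mod_pow hFxmod, val_mod_pow hFymod,
        kx.2.2, ky.2.2]
  -- assemble the embedding
  refine ⟨{ toFun := fun a => ⟨F a.1, Finset.mem_coe.2 (key a.1 (Finset.mem_coe.1 a.2)).1⟩,
            inj' := ?_, map_rel_iff' := ?_ }⟩
  · intro a b hab
    have h1 : F a.1 = F b.1 := congrArg Subtype.val hab
    exact Subtype.ext (hFinj _ (Finset.mem_coe.1 a.2) _ (Finset.mem_coe.1 b.2) h1)
  · intro a b
    have haU : a.1 ∈ U := Finset.mem_coe.1 a.2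
    have hbU : b.1 ∈ U := Finset.mem_coe.1 b.2
    show Dadj (F a.1) (F b.1) ↔ Dadj a.1 b.1
    unfold Dadj
    constructor
    · rintro ⟨hne, hcase⟩
      refine ⟨fun hc => hne (by rw [hc]), ?_⟩
      rcases hcase with h | h | h
      · exact Or.inl ((hconsec _ haU _ hbU).2 h)
      · exact Or.inr (Or.inl ((hconsec _ hbU _ haU).2 h))
      · exact Or.inr (Or.inr (q_eq_iff.2 ((hvaliff _ haU _ hbU).2 (q_eq_iff.1 h))))
    · rintro ⟨hne, hcase⟩
      refine ⟨fun hc => hne (hFinj _ haU _ hbU hc), ?_⟩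
      rcases hcase with h | h | h
      · exact Or.inl ((hconsec _ haU _ hbU).1 h)
      · exact Or.inr (Or.inl ((hconsec _ hbU _ haU).1 h))
      · exact Or.inr (Or.inr (q_eq_iff.2 ((hvaliff _ haU _ hbU).1 (q_eq_iff.1 h))))

end MainEmb

section Absorb

lemma translate_embed {U V : Finset ℕ} (h0U : 0 ∉ U) {n A : ℕ}
    (hn : ∀ x ∈ U, x ≤ n) (hint : ∀ d, d ≤ 2^(n+3) → A + d ∈ V) :
    Nonempty (DG.induce (↑U : Set ℕ) ↪g DG.induce (↑V : Set ℕ)) := by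
  classical
  set z := 2^(n+2) * (A / 2^(n+2) + 1) + 2^(n+1) with hzdef
  have hdm := Nat.div_add_mod A (2^(n+2))
  have hmodlt : A % 2^(n+2) < 2^(n+2) := Nat.mod_lt _ (by positivity)
  have hmul : 2^(n+2) * (A / 2^(n+2) + 1) = 2^(n+2) * (A / 2^(n+2)) + 2^(n+2) := by ring
  have hp1 : (2:ℕ)^(n+1) = 2^n * 2 := pow_succ 2 n
  have hp2 : (2:ℕ)^(n+2) = 2^(n+1) * 2 := pow_succ 2 (n+1)
  have hp3 : (2:ℕ)^(n+3) = 2^(n+2) * 2 := pow_succ 2 (n+2)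
  have hn2 : n < 2^n := Nat.lt_two_pow_self
  have hAz : A ≤ z := by omega
  have hzb : z + n ≤ A + 2^(n+3) := by omega
  have hvz : val z = n + 1 := by
    have e : z = 2^(n+1) * (2 * (A / 2^(n+2) + 1) + 1) := by
      rw [hzdef, hp2]
      ring
    rw [e]
    exact val_pow_mul_odd (by omega)
  have hvx : ∀ x, x ∈ U → val (z + x) = val x := by
    intro x hx
    have hx0 : x ≠ 0 := fun h => h0U (h ▸ hx)
    have hxn : x ≤ n := hn x hx
    have hvlt : val x < n + 1 := val_lt_of_lt_pow (by omega) (by omega)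
    exact val_add_eq_left hx0 (by omega) (by omega)
  have hmem : ∀ x, x ∈ U → z + x ∈ V := by
    intro x hx
    have hxn : x ≤ n := hn x hx
    have := hint (z + x - A) (by omega)
    rwa [show A + (z + x - A) = z + x by omega] at this
  refine ⟨{ toFun := fun a => ⟨z + a.1, Finset.mem_coe.2 (hmem a.1 (Finset.mem_coe.1 a.2))⟩,
            inj' := ?_, map_rel_iff' := ?_ }⟩
  · intro a b hab
    have : z + a.1 = z + b.1 := congrArg Subtype.val hab
    exact Subtype.ext (by omega)
  · intro a b
    show Dadj (z + a.1) (z + b.1) ↔ Dadj a.1 b.1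
    have haU := Finset.mem_coe.1 a.2
    have hbU := Finset.mem_coe.1 b.2
    unfold Dadj
    rw [q_eq_iff, q_eq_iff, hvx _ haU, hvx _ hbU]
    constructor
    · rintro ⟨hne, hcase⟩
      exact ⟨by omega, by omega⟩
    · rintro ⟨hne, hcase⟩
      exact ⟨by omega, by omega⟩

end Absorb

section MainFinset

theorem main_finset (U : ℕ → Finset ℕ) (h0 : ∀ i, 0 ∉ U i) :
    ∃ i j, i < j ∧ Nonempty (DG.induce (↑(U i) : Set ℕ) ↪g DG.induce (↑(U j) : Set ℕ)) := by
  classical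
  set n := (U 0).sup id with hndef
  by_cases h : ∃ j, 0 < j ∧ ∃ A, ∀ d, d ≤ 2^(n+3) → A + d ∈ U j
  · obtain ⟨j, hj, A, hA⟩ := h
    exact ⟨0, j, hj,
      translate_embed (h0 0) (fun x hx => Finset.le_sup (f := id) hx) hA⟩
  · push_neg at h
    set k := n + 4 with hkdef
    have heo : ∀ j, 0 < j → ∀ s, s ∈ U j → eo (U j) s < 2^k := by
      intro j hj s hs
      by_contra hc
      push_neg at hc
      obtain ⟨d, hd, hdmem⟩ := h j hj s
      apply hdmem
      apply mem_of_le_eo (U j) hs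
      have : (2:ℕ)^(n+3) < 2^k := by
        apply Nat.pow_lt_pow_right (by norm_num)
        omega
      omega
    set L : Set (ℕ × ℕ) := (Set.Iio (2^k)) ×ˢ (Set.Iio (2^k)) with hLdef
    have hLfin : L.Finite := (Set.finite_Iio _).prod (Set.finite_Iio _)
    haveI : IsRefl (ℕ × ℕ) (Eq : ℕ×ℕ → ℕ×ℕ → Prop) := ⟨fun _ => rfl⟩
    haveI : IsTrans (ℕ × ℕ) (Eq : ℕ×ℕ → ℕ×ℕ → Prop) := ⟨fun _ _ _ h1 h2 => h1.trans h2⟩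
    have hpwoL : L.PartiallyWellOrderedOn (Eq : ℕ×ℕ → ℕ×ℕ → Prop) :=
      hLfin.partiallyWellOrderedOn
    have hpwo1 := hpwoL.partiallyWellOrderedOn_sublistForall₂
    haveI : IsPreorder (List (ℕ × ℕ)) (List.SublistForall₂ (Eq : ℕ×ℕ → ℕ×ℕ → Prop)) := {}
    have hpwo2 := hpwo1.partiallyWellOrderedOn_sublistForall₂
    have hletter : ∀ j, 0 < j → ∀ s, s ∈ U j → letter k (U j) s ∈ L := by
      intro j hj s hs
      constructor
      · exact Nat.mod_lt _ (by positivity)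
      · exact heo j hj s hs
    have hsub : ∀ j, ∀ s, s ∈ smallStarts k (U j) ∨ (∃ Vv, s ∈ classRuns k (U j) Vv) →
        s ∈ U j := by
      intro j s hs
      rcases hs with hs | ⟨Vv, hs⟩
      · have : s ∈ runStarts (U j) := (Finset.mem_filter.1 hs).1
        exact (Finset.mem_filter.1 this).1
      · have h1 : s ∈ bigStarts k (U j) := (Finset.mem_filter.1 hs).1
        have h2 : s ∈ runStarts (U j) := (Finset.mem_filter.1 h1).1
        exact (Finset.mem_filter.1 h2).1
    have hmem1 : ∀ m : ℕ, encS k (U (m+1)) ∈ {l : List (ℕ×ℕ) | ∀ x ∈ l, x ∈ L} := by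
      intro m
      intro x hx
      unfold encS at hx
      obtain ⟨s, hs, rfl⟩ := List.mem_map.1 hx
      have hsmem : s ∈ smallStarts k (U (m+1)) := (Finset.mem_sort _).1 hs
      exact hletter (m+1) (by omega) s (hsub (m+1) s (Or.inl hsmem))
    have hmem2 : ∀ m : ℕ,
        encB k (U (m+1)) ∈ {ll : List (List (ℕ×ℕ)) | ∀ l ∈ ll, ∀ x ∈ l, x ∈ L} := by
      intro m
      intro l hl x hx
      unfold encB at hl
      obtain ⟨Vv, hVv, rfl⟩ := List.mem_map.1 hl
      obtain ⟨s, hs, rfl⟩ := List.mem_map.1 hx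
      have hsmem : s ∈ classRuns k (U (m+1)) Vv := (Finset.mem_sort _).1 hs
      exact hletter (m+1) (by omega) s (hsub (m+1) s (Or.inr ⟨Vv, hsmem⟩))
    obtain ⟨g, hg⟩ := hpwo1.exists_monotone_subseq (f := fun m => encS k (U (m+1)))
      (fun m => hmem1 m)
    obtain ⟨a, b, hab, hrel2⟩ := hpwo2.exists_lt (f := fun m => encB k (U (g m + 1)))
      (fun m => hmem2 (g m))
    refine ⟨g a + 1, g b + 1, by have := g.strictMono hab; omega, ?_⟩
    exact suffices_embed (h0 _) (h0 _) (heo _ (by omega)) (heo _ (by omega))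
      (hg a b hab.le) hrel2

end MainFinset

end Stmt19Aux

theorem stmt19 (N : ℕ → ℕ) (S : ∀ i : ℕ, Set (Vtx (N i))) :
    ∃ i j, i < j ∧ Nonempty ((D (N i)).induce (S i) ↪g (D (N j)).induce (S j)) := by
  classical
  have hUfin : ∀ i, (Subtype.val '' (S i) : Set ℕ).Finite := by
    intro i
    apply (Set.finite_Icc 1 (N i)).subset
    rintro x ⟨⟨v, hv⟩, -, rfl⟩
    exact Set.mem_Icc.2 hv
  set U : ℕ → Finset ℕ := fun i => (hUfin i).toFinset with hUdef
  have hmemU : ∀ i x, x ∈ U i ↔ x ∈ (Subtype.val '' (S i) : Set ℕ) := by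
    intro i x
    simp [hUdef, Set.Finite.mem_toFinset]
  have h0 : ∀ i, 0 ∉ U i := by
    intro i h
    rw [hmemU] at h
    obtain ⟨⟨v, hv⟩, -, hv0⟩ := h
    have hv1 : 1 ≤ v := hv.1
    have hv2 : v = 0 := hv0
    omega
  obtain ⟨i, j, hij, ⟨emb⟩⟩ := Stmt19Aux.main_finset U h0
  refine ⟨i, j, hij, ⟨?_⟩⟩
  have emb1 : (D (N i)).induce (S i) ↪g Stmt19Aux.DG.induce (↑(U i) : Set ℕ) :=
    { toFun := fun a => ⟨a.1.1, Finset.mem_coe.2 ((hmemU i _).2 ⟨a.1, a.2, rfl⟩)⟩,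
      inj' := by
        intro a b hab
        simp only [Subtype.mk.injEq] at hab
        exact Subtype.ext (Subtype.ext hab),
      map_rel_iff' := by intro a b; exact Iff.rfl }
  have key : ∀ a : ℕ, a ∈ U j → ∃ h : 1 ≤ a ∧ a ≤ N j, (⟨a, h⟩ : Vtx (N j)) ∈ S j := by
    intro a ha
    obtain ⟨⟨v, hv⟩, hb, rfl⟩ := (hmemU j a).1 ha
    exact ⟨hv, hb⟩
  have emb2 : Stmt19Aux.DG.induce (↑(U j) : Set ℕ) ↪g (D (N j)).induce (S j) :=
    { toFun := fun a => ⟨⟨a.1, (key a.1 (Finset.mem_coe.1 a.2)).choose⟩,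
        (key a.1 (Finset.mem_coe.1 a.2)).choose_spec⟩,
      inj' := by
        intro a b hab
        simp only [Subtype.mk.injEq] at hab
        exact Subtype.ext hab,
      map_rel_iff' := by intro a b; exact Iff.rfl }
  exact emb2.comp (emb.comp emb1)
end
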